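/- arXiv:math/0701680 — 7 statements merged into one kernel-verified Lean document; each statement's English description precedes it below -/
import Mathlib

section
/- Let G be a finite group and H a subgroup of G whose normal core ⋂_{g∈G} gHg⁻¹ is trivial, and let I be a cyclic subgroup of G of order d. For g ∈ G set δ(g) = |H ∩ gIg⁻¹| (the order of the intersection of H with the conjugate gIg⁻¹) and d(g) = d/δ(g). Then gcd_{g∈G} δ(g) = 1, and consequently lcm_{g∈G} d(g) = d. -/
open Pointwise

/-- In a finite cyclic group, any element killed by a prime `p` lies in the cyclic subgroup
generated by any element of order `p`. -/
lemma mem_zpowers_of_orderOf_eq_prime {C : Type*} [Group C] [Fintype C] [IsCyclic C]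
    {p : ℕ} (hp : p.Prime) {x y : C} (hx : orderOf x = p) (hy : y ^ p = 1) :
    y ∈ Subgroup.zpowers x := by
  classical
  have hle := IsCyclic.card_pow_eq_one_le (α := C) (n := p) hp.pos
  have hsub : (Subgroup.zpowers x : Set C).toFinset ⊆
      Finset.univ.filter (fun b : C => b ^ p = 1) := by
    intro z hz
    simp only [Set.mem_toFinset, SetLike.mem_coe] at hz
    obtain ⟨k, rfl⟩ := hz
    simp only [Finset.mem_filter, Finset.mem_univ, true_and]
    rw [← zpow_natCast, ← zpow_mul, mul_comm, zpow_mul, zpow_natCast, ← hx,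
      pow_orderOf_eq_one, one_zpow]
  have hcard : (Subgroup.zpowers x : Set C).toFinset.card = p := by
    simp only [Set.toFinset_card, SetLike.coe_sort_coe, ← Nat.card_eq_fintype_card,
      Nat.card_zpowers, hx]
  have heq : (Subgroup.zpowers x : Set C).toFinset =
      Finset.univ.filter (fun b : C => b ^ p = 1) := by
    apply Finset.eq_of_subset_of_card_le hsub
    rw [hcard]
    simpa using hle
  have : y ∈ (Subgroup.zpowers x : Set C).toFinset := by
    rw [heq]
    simp [hy]
  simpa using this

/-- Let `G` be a finite group, `H` a subgroup with trivial normal core, and `I` a cyclic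
subgroup of order `d`.  With `δ g = |H ⊓ gIg⁻¹|` and `d g = d / δ g`, one has
`gcd_{g ∈ G} δ g = 1` and `lcm_{g ∈ G} d g = d`. -/
theorem stmt0 {G : Type*} [Group G] [Fintype G] (H I : Subgroup G)
    (hcore : H.normalCore = ⊥) (hI : IsCyclic I) (d : ℕ) (hd : Nat.card I = d) :
    Finset.univ.gcd (fun g : G => Nat.card ↥(H ⊓ MulAut.conj g • I)) = 1 ∧
    Finset.univ.lcm (fun g : G => d / Nat.card ↥(H ⊓ MulAut.conj g • I)) = d := by
  classical
  subst hd
  have hdvd : ∀ g : G, Nat.card ↥(H ⊓ MulAut.conj g • I) ∣ Nat.card I := by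
    intro g
    have h1 : Nat.card ↥(H ⊓ MulAut.conj g • I) ∣ Nat.card ↥(MulAut.conj g • I) :=
      Subgroup.card_dvd_of_le inf_le_right
    have h2 : Nat.card ↥(MulAut.conj g • I) = Nat.card I :=
      Nat.card_congr (Subgroup.equivSMul (MulAut.conj g) I).toEquiv.symm
    rwa [h2] at h1
  have hgcd : Finset.univ.gcd (fun g : G => Nat.card ↥(H ⊓ MulAut.conj g • I)) = 1 := by
    by_contra hne
    obtain ⟨p, hp, hpdvd⟩ := Nat.exists_prime_and_dvd hne
    haveI : Fact p.Prime := ⟨hp⟩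
    have hpg : ∀ g : G, p ∣ Nat.card ↥(H ⊓ MulAut.conj g • I) := fun g =>
      hpdvd.trans (Finset.gcd_dvd (Finset.mem_univ g))
    have hpI : p ∣ Nat.card I := (hpg 1).trans (hdvd 1)
    obtain ⟨y, hy⟩ := exists_prime_orderOf_dvd_card' (G := I) p hpI
    have hyH : ∀ g : G, g * (y : G) * g⁻¹ ∈ H := by
      intro g
      set J := MulAut.conj g • I with hJ
      haveI : IsCyclic ↥J :=
        isCyclic_of_surjective _ (Subgroup.equivSMul (MulAut.conj g) I).surjective
      haveI : Fintype ↥J := Fintype.ofFinite _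
      obtain ⟨x, hx⟩ := exists_prime_orderOf_dvd_card' (G := ↥(H ⊓ J)) p (hpg g)
      have hxJ : (x : G) ∈ J := (inf_le_right (a := H) (b := J)) x.2
      set x' : ↥J := ⟨(x : G), hxJ⟩ with hx'def
      have hyJ : g * (y : G) * g⁻¹ ∈ J := by
        have := Subgroup.smul_mem_pointwise_smul (y : G) (MulAut.conj g) I y.2
        simpa [MulAut.conj_apply] using this
      set y' : ↥J := ⟨g * (y : G) * g⁻¹, hyJ⟩ with hy'def
      have hx' : orderOf x' = p := by
        rw [← hx]
        rw [← Subgroup.orderOf_coe x, ← Subgroup.orderOf_coe x']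
      have hy' : y' ^ p = 1 := by
        have hyp : (y : G) ^ p = 1 := by
          have : (y : I) ^ p = 1 := by rw [← hy]; exact pow_orderOf_eq_one y
          simpa using congrArg (Subgroup.subtype I) this
        ext
        push_cast
        rw [conj_pow, hyp, mul_one, mul_inv_cancel]
      have hmem := mem_zpowers_of_orderOf_eq_prime hp hx' hy'
      obtain ⟨k, hk⟩ := hmem
      have hkG : (x : G) ^ k = g * (y : G) * g⁻¹ := by
        have := congrArg (Subgroup.subtype J) hk
        simpa using this
      rw [← hkG]
      exact Subgroup.zpow_mem H ((inf_le_left (a := H) (b := J)) x.2) k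
    have hynormal : (y : G) ∈ H.normalCore := fun b => hyH b
    rw [hcore, Subgroup.mem_bot] at hynormal
    have : y = 1 := Subtype.ext hynormal
    rw [this, orderOf_one] at hy
    exact hp.ne_one hy.symm
  refine ⟨hgcd, ?_⟩
  apply Nat.dvd_antisymm
  · exact Finset.lcm_dvd fun g _ => Nat.div_dvd_of_dvd (hdvd g)
  · set L := Finset.univ.lcm (fun g : G => Nat.card I / Nat.card ↥(H ⊓ MulAut.conj g • I))
      with hL
    have h1 : ∀ g : G, Nat.card I ∣ Nat.card ↥(H ⊓ MulAut.conj g • I) * L := by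
      intro g
      calc Nat.card I = Nat.card ↥(H ⊓ MulAut.conj g • I) *
            (Nat.card I / Nat.card ↥(H ⊓ MulAut.conj g • I)) :=
        (Nat.mul_div_cancel' (hdvd g)).symm
      _ ∣ Nat.card ↥(H ⊓ MulAut.conj g • I) * L :=
        mul_dvd_mul_left _ (Finset.dvd_lcm (Finset.mem_univ g))
    have h2 : Nat.card I ∣
        Finset.univ.gcd (fun g : G => Nat.card ↥(H ⊓ MulAut.conj g • I) * L) :=
      Finset.dvd_gcd fun g _ => h1 g
    rw [Finset.gcd_mul_right, hgcd, one_mul] at h2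
    simpa using h2
end

section
/- Let W be an integral domain, d_1, …, d_m positive integers, and d = lcm(d_1, …, d_m); assume W contains a primitive d-th root of unity. For each m-tuple ζ = (ζ_1, …, ζ_m) of elements of W with ζ_j^{d_j} = 1 for all j, let φ_ζ : W[[τ_1, …, τ_m]] → W[[t]] be the substitution W-algebra homomorphism determined by φ_ζ(τ_j) = ζ_j·t^{d/d_j}. Then the intersection ⋂_ζ ker φ_ζ, over all such tuples ζ, equals the ideal I generated by the elements τ_i^{d_i} − τ_j^{d_j} for 1 ≤ i, j ≤ m. In particular, the quotient ring W[[τ_1, …, τ_m]]/I is reduced. -/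
open scoped Classical in
/-- The substitution map `W[[τ₁, …, τ_m]] → W[[t]]`, `τ_j ↦ u_j · t^{r_j}` (for `r_j ≥ 1`),
given by its coefficients: the `k`-th coefficient of the image of `F` is
`∑_{α, ∑ α_j r_j = k} (coeff α F) · ∏_j u_j ^ α_j`. -/
noncomputable def substCoeff {W : Type*} [CommRing W] {m : ℕ} (r : Fin m → ℕ) (u : Fin m → W)
    (F : MvPowerSeries (Fin m) W) : PowerSeries W :=
  PowerSeries.mk fun k =>
    ∑ α ∈ (Finset.Iic ((Finsupp.equivFunOnFinite).symm fun _ => k)).filter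
        (fun α : Fin m →₀ ℕ => ∑ j, α j * r j = k),
      MvPowerSeries.coeff α F * ∏ j, u j ^ α j

namespace Stmt6Aux

open Finset MvPowerSeries

variable {W : Type*} [CommRing W] {m : ℕ}

def wt (r : Fin m → ℕ) (α : Fin m →₀ ℕ) : ℕ := ∑ j, α j * r j

open scoped Classical in
noncomputable def Ak (r : Fin m → ℕ) (k : ℕ) : Finset (Fin m →₀ ℕ) :=
  (Finset.Iic ((Finsupp.equivFunOnFinite).symm fun _ => k)).filter
    (fun α : Fin m →₀ ℕ => wt r α = k)

theorem mem_Ak {r : Fin m → ℕ} (hr : ∀ j, 1 ≤ r j) {k : ℕ} {α : Fin m →₀ ℕ} :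
    α ∈ Ak r k ↔ wt r α = k := by
  classical
  simp only [Ak, Finset.mem_filter, Finset.mem_Iic, and_iff_right_iff_imp]
  intro h j
  simp only [Finsupp.equivFunOnFinite_symm_apply_apply]
  calc α j ≤ α j * r j := Nat.le_mul_of_pos_right _ (hr j)
    _ ≤ k := h ▸ Finset.single_le_sum (f := fun j => α j * r j) (fun _ _ => Nat.zero_le _)
        (Finset.mem_univ j)

theorem coeff_substCoeff (r : Fin m → ℕ) (u : Fin m → W) (F : MvPowerSeries (Fin m) W) (k : ℕ) :
    PowerSeries.coeff k (substCoeff r u F) =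
      ∑ α ∈ Ak r k, MvPowerSeries.coeff α F * ∏ j, u j ^ α j := by
  classical
  rw [substCoeff, PowerSeries.coeff_mk]
  apply Finset.sum_congr _ (fun _ _ => rfl)
  simp [Ak, wt]
  congr

theorem wt_add (r : Fin m → ℕ) (α β : Fin m →₀ ℕ) : wt r (α + β) = wt r α + wt r β := by
  simp [wt, add_mul, Finset.sum_add_distrib]

theorem wt_single (r : Fin m → ℕ) (i : Fin m) (n : ℕ) :
    wt r (Finsupp.single i n) = n * r i := by
  simp [wt, Finsupp.single_apply, ite_mul]

theorem substCoeff_sub (r : Fin m → ℕ) (u : Fin m → W) (F G : MvPowerSeries (Fin m) W) :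
    substCoeff r u (F - G) = substCoeff r u F - substCoeff r u G := by
  ext k
  simp only [map_sub, coeff_substCoeff, ← Finset.sum_sub_distrib, sub_mul]

theorem substCoeff_monomial {r : Fin m → ℕ} (hr : ∀ j, 1 ≤ r j) (u : Fin m → W)
    (s : Fin m →₀ ℕ) (a : W) :
    substCoeff r u (MvPowerSeries.monomial s a) =
      PowerSeries.monomial (wt r s) (a * ∏ j, u j ^ s j) := by
  classical
  ext k
  rw [coeff_substCoeff, PowerSeries.coeff_monomial]
  by_cases h : wt r s = k
  · rw [Finset.sum_eq_single s (fun b _ hb => by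
      rw [MvPowerSeries.coeff_monomial_ne hb, zero_mul])
      (fun hs => absurd (mem_Ak hr |>.2 h) hs)]
    rw [MvPowerSeries.coeff_monomial_same, if_pos h.symm]
  · rw [if_neg (fun hk => h hk.symm), Finset.sum_eq_zero]
    intro α hα
    have : α ≠ s := fun he => h (he ▸ (mem_Ak hr).1 hα)
    rw [MvPowerSeries.coeff_monomial_ne this, zero_mul]

theorem substCoeff_mul {r : Fin m → ℕ} (hr : ∀ j, 1 ≤ r j) (u : Fin m → W)
    (F G : MvPowerSeries (Fin m) W) :
    substCoeff r u (F * G) = substCoeff r u F * substCoeff r u G := by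
  classical
  ext k
  rw [PowerSeries.coeff_mul, coeff_substCoeff]
  have lhs : ∑ γ ∈ Ak r k, MvPowerSeries.coeff γ (F * G) * ∏ j, u j ^ γ j
      = ∑ x ∈ (Ak r k).sigma (fun γ => Finset.HasAntidiagonal.antidiagonal γ),
          (MvPowerSeries.coeff x.2.1 F * MvPowerSeries.coeff x.2.2 G) * ∏ j, u j ^ x.1 j := by
    rw [Finset.sum_sigma]
    refine Finset.sum_congr rfl fun γ _ => ?_
    rw [MvPowerSeries.coeff_mul, Finset.sum_mul]
  have rhs : ∑ q ∈ Finset.HasAntidiagonal.antidiagonal k,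
        PowerSeries.coeff q.1 (substCoeff r u F) * PowerSeries.coeff q.2 (substCoeff r u G)
      = ∑ x ∈ (Finset.HasAntidiagonal.antidiagonal k).sigma (fun q => Ak r q.1 ×ˢ Ak r q.2),
          (MvPowerSeries.coeff x.2.1 F * ∏ j, u j ^ x.2.1 j) *
            (MvPowerSeries.coeff x.2.2 G * ∏ j, u j ^ x.2.2 j) := by
    rw [Finset.sum_sigma]
    refine Finset.sum_congr rfl fun q _ => ?_
    rw [coeff_substCoeff, coeff_substCoeff, Finset.sum_mul_sum, Finset.sum_product]
  rw [lhs, rhs]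
  refine Finset.sum_nbij' (fun x => ⟨(wt r x.2.1, wt r x.2.2), x.2⟩)
    (fun x => ⟨x.2.1 + x.2.2, x.2⟩) ?_ ?_ ?_ ?_ ?_
  · rintro ⟨γ, p⟩ hx
    simp only [Finset.mem_sigma, mem_Ak hr, Finset.HasAntidiagonal.mem_antidiagonal, Finset.mem_product]
      at hx ⊢
    exact ⟨by rw [← wt_add, hx.2, hx.1], trivial, trivial⟩
  · rintro ⟨q, p⟩ hx
    simp only [Finset.mem_sigma, Finset.HasAntidiagonal.mem_antidiagonal, Finset.mem_product, mem_Ak hr]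
      at hx ⊢
    exact ⟨by rw [wt_add, hx.2.1, hx.2.2, hx.1], trivial⟩
  · rintro ⟨γ, p⟩ hx
    simp only [Finset.mem_sigma, mem_Ak hr, Finset.HasAntidiagonal.mem_antidiagonal] at hx
    simp [hx.2]
  · rintro ⟨q, p⟩ hx
    simp only [Finset.mem_sigma, Finset.HasAntidiagonal.mem_antidiagonal, Finset.mem_product, mem_Ak hr] at hx
    have hq : (wt r p.1, wt r p.2) = q := Prod.ext hx.2.1 hx.2.2
    simp [hq]
  · rintro ⟨γ, p⟩ hx
    simp only [Finset.mem_sigma, mem_Ak hr, Finset.HasAntidiagonal.mem_antidiagonal] at hx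
    have : ∏ j, u j ^ γ j = (∏ j, u j ^ p.1 j) * ∏ j, u j ^ p.2 j := by
      rw [← Finset.prod_mul_distrib]
      refine Finset.prod_congr rfl fun j _ => ?_
      rw [← pow_add, ← Finsupp.add_apply, hx.2]
    rw [this]; ring

theorem substCoeff_pow {r : Fin m → ℕ} (hr : ∀ j, 1 ≤ r j) (u : Fin m → W)
    (F : MvPowerSeries (Fin m) W) (n : ℕ) (hn : 1 ≤ n) :
    substCoeff r u (F ^ n) = substCoeff r u F ^ n := by
  induction n with
  | zero => omega
  | succ n ih =>
    rcases Nat.eq_or_lt_of_le hn with h | h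
    · simp [← h]
    · rw [pow_succ, pow_succ, substCoeff_mul hr, ih (by omega)]

theorem substCoeff_add (r : Fin m → ℕ) (u : Fin m → W) (F G : MvPowerSeries (Fin m) W) :
    substCoeff r u (F + G) = substCoeff r u F + substCoeff r u G := by
  ext k
  simp only [map_add, coeff_substCoeff, ← Finset.sum_add_distrib, add_mul]

theorem substCoeff_zero (r : Fin m → ℕ) (u : Fin m → W) :
    substCoeff r u (0 : MvPowerSeries (Fin m) W) = 0 := by
  ext k
  simp [coeff_substCoeff]

theorem substCoeff_X_pow {r : Fin m → ℕ} (hr : ∀ j, 1 ≤ r j) (u : Fin m → W) (i : Fin m)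
    (n : ℕ) :
    substCoeff r u ((MvPowerSeries.X i : MvPowerSeries (Fin m) W) ^ n) =
      PowerSeries.monomial (n * r i) (u i ^ n) := by
  classical
  rw [MvPowerSeries.X_pow_eq, substCoeff_monomial hr]
  have h1 : wt r (Finsupp.single i n) = n * r i := by
    simp [wt, Finsupp.single_apply, ite_mul]
  have h2 : (∏ j, u j ^ (Finsupp.single i n) j) = u i ^ n := by
    simp [Finsupp.single_apply, pow_ite]
  rw [h1, h2, one_mul]

/-- Each generator is killed by every substitution map. -/
theorem substCoeff_gen {d : Fin m → ℕ} {D : ℕ} (hdvd : ∀ j, d j ∣ D)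
    (hD : 0 < D) (hd : ∀ j, 0 < d j) (ζ : Fin m → W) (hζ : ∀ j, ζ j ^ d j = 1)
    (i j : Fin m) :
    substCoeff (fun l => D / d l) ζ
      ((MvPowerSeries.X i : MvPowerSeries (Fin m) W) ^ d i - MvPowerSeries.X j ^ d j) = 0 := by
  have hr : ∀ l, 1 ≤ D / d l := fun l => (Nat.one_le_div_iff (hd l)).2 (Nat.le_of_dvd hD (hdvd l))
  rw [substCoeff_sub, substCoeff_X_pow hr, substCoeff_X_pow hr,
    Nat.mul_div_cancel' (hdvd i), Nat.mul_div_cancel' (hdvd j), hζ i, hζ j, sub_self]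

/-- Everything in the span of the generators is killed by every substitution map. -/
theorem span_subset_inter_ker {d : Fin m → ℕ} {D : ℕ} (hdvd : ∀ j, d j ∣ D)
    (hD : 0 < D) (hd : ∀ j, 0 < d j) (ζ : Fin m → W) (hζ : ∀ j, ζ j ^ d j = 1)
    (F : MvPowerSeries (Fin m) W)
    (hF : F ∈ Ideal.span {p : MvPowerSeries (Fin m) W |
      ∃ i j, p = MvPowerSeries.X i ^ d i - MvPowerSeries.X j ^ d j}) :
    substCoeff (fun l => D / d l) ζ F = 0 := by
  have hr : ∀ l, 1 ≤ D / d l := fun l => (Nat.one_le_div_iff (hd l)).2 (Nat.le_of_dvd hD (hdvd l))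
  refine Submodule.span_induction ?_ ?_ ?_ ?_ hF
  · rintro p ⟨i, j, rfl⟩
    exact substCoeff_gen hdvd hD hd ζ hζ i j
  · exact substCoeff_zero _ _
  · intro a b _ _ ha hb
    rw [substCoeff_add _ _ _ _, ha, hb, add_zero]
  · intro a x _ hx
    rw [smul_eq_mul, substCoeff_mul hr, hx, mul_zero]

section Domain
variable [IsDomain W]

theorem geom_sum_eq_zero' {η : W} {n : ℕ} (h1 : η ^ n = 1) (h2 : η ≠ 1) :
    ∑ t ∈ Finset.range n, η ^ t = 0 := by
  have hgs := geom_sum_mul η n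
  rw [h1, sub_self] at hgs
  rcases mul_eq_zero.1 hgs with h | h
  · exact h
  · exact absurd (sub_eq_zero.1 h) h2

theorem cast_d_ne_zero {D n : ℕ} (hn : 0 < n) (hdvd : n ∣ D) (hD : 0 < D)
    {ω : W} (hω : IsPrimitiveRoot ω D) : (n : W) ≠ 0 := by
  intro h0
  haveI := ringChar.charP W
  have hchar : (ringChar W) ∣ n := (CharP.cast_eq_zero_iff W (ringChar W) n).1 h0
  rcases CharP.char_is_prime_or_zero W (ringChar W) with hp | hp
  · set p := ringChar W with hpdef
    have hpD : p ∣ D := hchar.trans hdvd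
    have hνp : (ω ^ (D / p)) ^ p = 1 := by
      rw [← pow_mul, Nat.div_mul_cancel hpD, hω.pow_eq_one]
    have hlt : D / p < D := Nat.div_lt_self hD hp.one_lt
    have hpos : 0 < D / p := Nat.div_pos (Nat.le_of_dvd hD hpD) hp.pos
    have hne : ω ^ (D / p) ≠ 1 := hω.pow_ne_one_of_pos_of_lt hpos.ne' hlt
    haveI : Fact (p.Prime) := ⟨hp⟩
    have hz : (ω ^ (D / p) - 1) ^ p = 0 := by
      rw [sub_pow_char, hνp, one_pow, sub_self]
    exact hne (sub_eq_zero.1 ((pow_eq_zero_iff hp.pos.ne').1 hz))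
  · rw [hp] at hchar
    exact hn.ne' (zero_dvd_iff.1 hchar)

theorem dvd_b_add_iff {dj a b : ℕ} (hd : 0 < dj) :
    dj ∣ ((dj - b % dj) % dj + a) ↔ a % dj = b % dj := by
  rw [← ZMod.natCast_eq_zero_iff]
  have hle : b % dj ≤ dj := le_of_lt (Nat.mod_lt _ hd)
  push_cast [ZMod.natCast_mod, Nat.cast_sub hle]
  rw [CharP.cast_eq_zero (ZMod dj) dj, zero_sub, neg_add_eq_sub, sub_eq_zero, eq_comm,
    ZMod.natCast_eq_natCast_iff']
  exact eq_comm

/-- Orthogonality: from vanishing of all the character sums, each class sum vanishes. -/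
theorem classSum_eq_zero {d : Fin m → ℕ} (hd : ∀ j, 0 < d j) {D : ℕ}
    (hD : 0 < D) (hdvd : ∀ j, d j ∣ D) {ω : W} (hω : IsPrimitiveRoot ω D)
    (c : (Fin m →₀ ℕ) → W) (A : Finset (Fin m →₀ ℕ))
    (h : ∀ ζ : Fin m → W, (∀ j, ζ j ^ d j = 1) → ∑ α ∈ A, c α * ∏ j, ζ j ^ α j = 0)
    (β : Fin m →₀ ℕ) :
    ∑ α ∈ A.filter (fun α => ∀ j, α j % d j = β j % d j), c α = 0 := by
  classical
  set e : Fin m → ℕ := fun j => D / d j with he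
  set b : Fin m → ℕ := fun j => (d j - β j % d j) % d j with hb
  set X := Fintype.piFinset (fun j : Fin m => Finset.range (d j)) with hX
  have hζx : ∀ x : Fin m → ℕ, ∀ j, (ω ^ (e j * x j)) ^ d j = 1 := by
    intro x j
    rw [← pow_mul, mul_right_comm, Nat.div_mul_cancel (hdvd j), pow_mul, hω.pow_eq_one, one_pow]
  have key : ∀ α : Fin m →₀ ℕ,
      (∑ x ∈ X, ∏ j, (ω ^ (e j * (b j + α j))) ^ x j)
        = if (∀ j, α j % d j = β j % d j) then ∏ j, (d j : W) else 0 := by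
    intro α
    rw [← Finset.prod_univ_sum]
    by_cases hcond : ∀ j, α j % d j = β j % d j
    · rw [if_pos hcond]
      refine Finset.prod_congr rfl fun j _ => ?_
      have hdvdj : d j ∣ b j + α j := (dvd_b_add_iff (hd j)).2 (hcond j)
      have h1 : ω ^ (e j * (b j + α j)) = 1 := by
        apply (hω.pow_eq_one_iff_dvd _).2
        obtain ⟨t, ht⟩ := hdvdj
        exact ⟨t, by rw [ht, ← mul_assoc, Nat.div_mul_cancel (hdvd j)]⟩
      simp [h1]
    · rw [if_neg hcond]
      obtain ⟨j0, hj0⟩ := not_forall.1 hcond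
      apply Finset.prod_eq_zero (Finset.mem_univ j0)
      have hη1 : (ω ^ (e j0 * (b j0 + α j0))) ^ d j0 = 1 := by
        rw [← pow_mul, mul_right_comm, Nat.div_mul_cancel (hdvd j0), pow_mul, hω.pow_eq_one,
          one_pow]
      have hηne : ω ^ (e j0 * (b j0 + α j0)) ≠ 1 := by
        intro h1
        have hDd : D ∣ e j0 * (b j0 + α j0) := (hω.pow_eq_one_iff_dvd _).1 h1
        have hD' : e j0 * d j0 ∣ e j0 * (b j0 + α j0) := by
          rwa [he, Nat.div_mul_cancel (hdvd j0)]
        have hepos : 0 < e j0 :=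
          (Nat.one_le_div_iff (hd j0)).2 (Nat.le_of_dvd hD (hdvd j0))
        have := (Nat.mul_dvd_mul_iff_left hepos).1 hD'
        exact hj0 ((dvd_b_add_iff (hd j0)).1 this)
      exact geom_sum_eq_zero' hη1 hηne
  have T0 : ∑ α ∈ A, c α * ∑ x ∈ X, ∏ j, (ω ^ (e j * (b j + α j))) ^ x j = 0 := by
    have hslice : ∀ x ∈ X, ∑ α ∈ A, c α * ∏ j, (ω ^ (e j * (b j + α j))) ^ x j
        = (∏ j, (ω ^ (e j * x j)) ^ b j) * ∑ α ∈ A, c α * ∏ j, (ω ^ (e j * x j)) ^ α j := by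
      intro x _
      rw [Finset.mul_sum]
      refine Finset.sum_congr rfl fun α _ => ?_
      have hterm : ∀ j : Fin m, (ω ^ (e j * (b j + α j))) ^ x j
          = (ω ^ (e j * x j)) ^ b j * (ω ^ (e j * x j)) ^ α j := by
        intro j
        rw [← pow_mul, ← pow_mul, ← pow_mul, ← pow_add]
        congr 1
        ring
      rw [Finset.prod_congr rfl (fun j _ => hterm j), Finset.prod_mul_distrib]
      ring
    calc ∑ α ∈ A, c α * ∑ x ∈ X, ∏ j, (ω ^ (e j * (b j + α j))) ^ x j
        = ∑ α ∈ A, ∑ x ∈ X, c α * ∏ j, (ω ^ (e j * (b j + α j))) ^ x j := by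
          exact Finset.sum_congr rfl fun α _ => Finset.mul_sum _ _ _
      _ = ∑ x ∈ X, ∑ α ∈ A, c α * ∏ j, (ω ^ (e j * (b j + α j))) ^ x j := Finset.sum_comm
      _ = ∑ x ∈ X, (∏ j, (ω ^ (e j * x j)) ^ b j) *
            ∑ α ∈ A, c α * ∏ j, (ω ^ (e j * x j)) ^ α j := Finset.sum_congr rfl hslice
      _ = 0 := Finset.sum_eq_zero fun x _ => by
            rw [h (fun j => ω ^ (e j * x j)) (hζx x), mul_zero]
  rw [Finset.sum_congr rfl (fun α _ => by rw [key α])] at T0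
  simp only [mul_ite, mul_zero] at T0
  rw [← Finset.sum_filter, ← Finset.sum_mul] at T0
  rcases mul_eq_zero.1 T0 with h' | h'
  · exact h'
  · exact absurd h' (Finset.prod_ne_zero_iff.2 fun j _ =>
      cast_d_ne_zero (hd j) (hdvd j) hD hω)

end Domain

section Construction

theorem nat_step {n a b : ℕ} (h : a % n = b % n) (hle : b ≤ a) : a = b ∨ b + n ≤ a := by
  have hdvd : n ∣ a - b := (Nat.modEq_iff_dvd' hle).1 (Nat.ModEq.symm h)
  obtain ⟨t, ht⟩ := hdvd
  rcases Nat.eq_zero_or_pos t with rfl | hpos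
  · left; omega
  · right; have : n * 1 ≤ n * t := Nat.mul_le_mul_left n hpos
    omega

theorem le_of_mod_eq {n a b : ℕ} (h : a % n = b % n) (hb : b < n) : b ≤ a := by
  have h2 : b % n = b := Nat.mod_eq_of_lt hb
  have h3 : a % n ≤ a := Nat.mod_le a n
  omega

variable (W) in
open scoped Classical in
/-- the tail set used in the construction -/
noncomputable def Tset {m : ℕ} (d : Fin (m + 1) → ℕ) (D : ℕ) (j : Fin (m + 1))
    (α : Fin (m + 1) →₀ ℕ) : Finset (Fin (m + 1) →₀ ℕ) :=
  (Ak (fun l => D / d l) (wt (fun l => D / d l) α)).filter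
    (fun α' => (∀ l, α' l % d l = α l % d l) ∧ (∀ l, 0 < l → l < j → α' l = α l) ∧ α j ≤ α' j)

open scoped Classical in
noncomputable def Qset {m : ℕ} (d : Fin (m + 1) → ℕ) (D : ℕ) (j : Fin (m + 1))
    (μ : Fin (m + 1) →₀ ℕ) : Finset (Fin (m + 1) →₀ ℕ) :=
  (Ak (fun l => D / d l) (wt (fun l => D / d l) μ)).filter
    (fun α' => (∀ l, α' l % d l = μ l % d l) ∧ (∀ l, 0 < l → l < j → α' l = μ l) ∧ α' j = μ j)

open scoped Classical in
noncomputable def Uset {m : ℕ} (d : Fin (m + 1) → ℕ) (D : ℕ) (j : Fin (m + 1))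
    (μ : Fin (m + 1) →₀ ℕ) : Finset (Fin (m + 1) →₀ ℕ) :=
  (Ak (fun l => D / d l) (wt (fun l => D / d l) μ)).filter
    (fun α' => (∀ l, α' l % d l = μ l % d l) ∧ (∀ l, 0 < l → l < j → α' l = μ l) ∧ μ j < α' j)

open scoped Classical in
noncomputable def gfun {m : ℕ} (F : MvPowerSeries (Fin (m + 1)) W) (d : Fin (m + 1) → ℕ)
    (D : ℕ) (j : Fin (m + 1)) (α : Fin (m + 1) →₀ ℕ) : W :=
  if ∀ l, j < l → α l < d l then ∑ α' ∈ Tset d D j α, MvPowerSeries.coeff α' F else 0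

noncomputable def Gser {m : ℕ} (F : MvPowerSeries (Fin (m + 1)) W) (d : Fin (m + 1) → ℕ)
    (D : ℕ) (j : Fin (m + 1)) : MvPowerSeries (Fin (m + 1)) W :=
  fun ν => gfun F d D j (ν + Finsupp.single j (d j))

theorem coeff_Gser {m : ℕ} (F : MvPowerSeries (Fin (m + 1)) W) (d : Fin (m + 1) → ℕ)
    (D : ℕ) (j : Fin (m + 1)) (ν : Fin (m + 1) →₀ ℕ) :
    MvPowerSeries.coeff ν (Gser F d D j) = gfun F d D j (ν + Finsupp.single j (d j)) :=
  rfl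

section PerJ

variable {m : ℕ} {d : Fin (m + 1) → ℕ} {D : ℕ}

theorem mem_Tset (hd : ∀ l, 0 < d l) (hD : 0 < D) (hdvd : ∀ l, d l ∣ D)
    {j : Fin (m + 1)} {α α' : Fin (m + 1) →₀ ℕ} :
    α' ∈ Tset d D j α ↔ wt (fun l => D / d l) α' = wt (fun l => D / d l) α ∧
      (∀ l, α' l % d l = α l % d l) ∧ (∀ l, 0 < l → l < j → α' l = α l) ∧ α j ≤ α' j := by
  have hr : ∀ l, 1 ≤ D / d l := fun l => (Nat.one_le_div_iff (hd l)).2 (Nat.le_of_dvd hD (hdvd l))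
  simp [Tset, Finset.mem_filter, mem_Ak hr, and_assoc]

theorem mem_Qset (hd : ∀ l, 0 < d l) (hD : 0 < D) (hdvd : ∀ l, d l ∣ D)
    {j : Fin (m + 1)} {μ α' : Fin (m + 1) →₀ ℕ} :
    α' ∈ Qset d D j μ ↔ wt (fun l => D / d l) α' = wt (fun l => D / d l) μ ∧
      (∀ l, α' l % d l = μ l % d l) ∧ (∀ l, 0 < l → l < j → α' l = μ l) ∧ α' j = μ j := by
  have hr : ∀ l, 1 ≤ D / d l := fun l => (Nat.one_le_div_iff (hd l)).2 (Nat.le_of_dvd hD (hdvd l))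
  simp [Qset, Finset.mem_filter, mem_Ak hr, and_assoc]

theorem mem_Uset (hd : ∀ l, 0 < d l) (hD : 0 < D) (hdvd : ∀ l, d l ∣ D)
    {j : Fin (m + 1)} {μ α' : Fin (m + 1) →₀ ℕ} :
    α' ∈ Uset d D j μ ↔ wt (fun l => D / d l) α' = wt (fun l => D / d l) μ ∧
      (∀ l, α' l % d l = μ l % d l) ∧ (∀ l, 0 < l → l < j → α' l = μ l) ∧ μ j < α' j := by
  have hr : ∀ l, 1 ≤ D / d l := fun l => (Nat.one_le_div_iff (hd l)).2 (Nat.le_of_dvd hD (hdvd l))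
  simp [Uset, Finset.mem_filter, mem_Ak hr, and_assoc]

theorem Tempty (hd : ∀ l, 0 < d l) (hD : 0 < D) (hdvd : ∀ l, d l ∣ D)
    {j : Fin (m + 1)} {μ α' : Fin (m + 1) →₀ ℕ}
    (hP : ∀ l, j < l → μ l < d l) (h0 : μ 0 < d 0) (hj : 0 < j)
    (hwt : wt (fun l => D / d l) α' = wt (fun l => D / d l) μ)
    (hmod : ∀ l, α' l % d l = μ l % d l)
    (hagree : ∀ l, 0 < l → l < j → α' l = μ l) (hge : μ j + d j ≤ α' j) : False := by
  have hr : ∀ l, 1 ≤ D / d l := fun l => (Nat.one_le_div_iff (hd l)).2 (Nat.le_of_dvd hD (hdvd l))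
  have hle : ∀ l, μ l ≤ α' l := by
    intro l
    rcases lt_trichotomy l j with h | h | h
    · rcases eq_or_ne l 0 with rfl | hl0
      · exact le_of_mod_eq (hmod 0) h0
      · exact (hagree l (Fin.pos_of_ne_zero hl0) h).ge
    · subst h; omega
    · exact le_of_mod_eq (hmod l) (hP l h)
  have hstrict : μ j * (D / d j) < α' j * (D / d j) :=
    (Nat.mul_lt_mul_right (hr j)).2 (by have := hd j; omega)
  have : wt (fun l => D / d l) μ < wt (fun l => D / d l) α' :=
    Finset.sum_lt_sum (fun l _ => Nat.mul_le_mul_right _ (hle l))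
      ⟨j, Finset.mem_univ j, hstrict⟩
  omega

theorem tj_eq (hd : ∀ l, 0 < d l) (hD : 0 < D) (hdvd : ∀ l, d l ∣ D)
    (F : MvPowerSeries (Fin (m + 1)) W) (μ : Fin (m + 1) →₀ ℕ)
    (j : Fin (m + 1)) (hj : 0 < j) :
    (if Finsupp.single j (d j) ≤ μ then gfun F d D j μ else 0) -
      (if Finsupp.single (0 : Fin (m + 1)) (d 0) ≤ μ then
        gfun F d D j (μ - Finsupp.single 0 (d 0) + Finsupp.single j (d j)) else 0) =
    (if ∀ l, j < l → μ l < d l then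
      (if d j ≤ μ j then ∑ α' ∈ Qset d D j μ, MvPowerSeries.coeff α' F
       else - ∑ α' ∈ Uset d D j μ, MvPowerSeries.coeff α' F)
     else 0) := by
  classical
  have hr : ∀ l, 1 ≤ D / d l := fun l => (Nat.one_le_div_iff (hd l)).2 (Nat.le_of_dvd hD (hdvd l))
  have hj0 : j ≠ 0 := hj.ne'
  set μ' := μ - Finsupp.single 0 (d 0) + Finsupp.single j (d j) with hμ'def
  have hμ'ne : ∀ l, l ≠ 0 → l ≠ j → μ' l = μ l := by
    intro l h0 hjl
    rw [hμ'def, Finsupp.add_apply, Finsupp.tsub_apply, Finsupp.single_apply, Finsupp.single_apply,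
      if_neg (fun h => h0 h.symm), if_neg (fun h => hjl h.symm)]
    omega
  have hμ'j : μ' j = μ j + d j := by
    rw [hμ'def, Finsupp.add_apply, Finsupp.tsub_apply, Finsupp.single_apply, Finsupp.single_apply,
      if_neg (fun h => hj0 h.symm), if_pos rfl, Nat.sub_zero]
  have hμ'0 : d 0 ≤ μ 0 → μ' 0 = μ 0 - d 0 := by
    intro h
    rw [hμ'def, Finsupp.add_apply, Finsupp.tsub_apply, Finsupp.single_apply, Finsupp.single_apply,
      if_pos rfl, if_neg hj0, Nat.add_zero]
  have heqP : ∀ l, j < l → μ' l = μ l := by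
    intro l hl
    exact hμ'ne l (fun h => by rw [h] at hl; exact absurd (hj.trans hl) (lt_irrefl 0)) hl.ne'
  have hPiff : (∀ l, j < l → μ' l < d l) ↔ (∀ l, j < l → μ l < d l) :=
    ⟨fun h l hl => heqP l hl ▸ h l hl, fun h l hl => (heqP l hl).symm ▸ h l hl⟩
  by_cases hP : ∀ l, j < l → μ l < d l
  swap
  · rw [if_neg hP, gfun, if_neg hP, gfun, if_neg (fun h => hP (hPiff.1 h))]
    simp
  rw [if_pos hP]
  have hwt' : d 0 ≤ μ 0 → wt (fun l => D / d l) μ' = wt (fun l => D / d l) μ := by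
    intro h0
    have hle0 : Finsupp.single (0 : Fin (m + 1)) (d 0) ≤ μ := Finsupp.single_le_iff.2 h0
    have h1 : (μ - Finsupp.single 0 (d 0)) + Finsupp.single (0 : Fin (m + 1)) (d 0) = μ :=
      tsub_add_cancel_of_le hle0
    have h2 : wt (fun l => D / d l) (μ - Finsupp.single 0 (d 0)) + d 0 * (D / d 0)
        = wt (fun l => D / d l) μ := by
      rw [← wt_single (fun l => D / d l) 0 (d 0), ← wt_add, h1]
    have h3 : wt (fun l => D / d l) μ'
        = wt (fun l => D / d l) (μ - Finsupp.single 0 (d 0)) + d j * (D / d j) := by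
      rw [hμ'def, wt_add, wt_single]
    have hD0 : d 0 * (D / d 0) = D := Nat.mul_div_cancel' (hdvd 0)
    have hDj : d j * (D / d j) = D := Nat.mul_div_cancel' (hdvd j)
    omega
  have hmod' : d 0 ≤ μ 0 → ∀ l, μ' l % d l = μ l % d l := by
    intro h0 l
    rcases eq_or_ne l 0 with rfl | hl0
    · rw [hμ'0 h0]
      conv_rhs => rw [← Nat.sub_add_cancel h0]
      rw [Nat.add_mod_right]
    · rcases eq_or_ne l j with rfl | hlj
      · rw [hμ'j, Nat.add_mod_right]
      · rw [hμ'ne l hl0 hlj]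
  by_cases hdj : d j ≤ μ j
  · -- case j = j*
    rw [if_pos hdj, if_pos (Finsupp.single_le_iff.2 hdj), gfun, if_pos hP]
    have e1 : (Tset d D j μ).filter (fun α' => α' j = μ j) = Qset d D j μ := by
      ext α'
      simp only [Finset.mem_filter, mem_Tset hd hD hdvd, mem_Qset hd hD hdvd]
      constructor
      · rintro ⟨⟨h1, h2, h3, h4⟩, h5⟩; exact ⟨h1, h2, h3, h5⟩
      · rintro ⟨h1, h2, h3, h4⟩; exact ⟨⟨h1, h2, h3, h4.ge⟩, h4⟩
    have e2 : (Tset d D j μ).filter (fun α' => ¬ α' j = μ j)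
        = (Tset d D j μ).filter (fun α' => μ j + d j ≤ α' j) := by
      ext α'
      simp only [Finset.mem_filter, mem_Tset hd hD hdvd]
      constructor
      · rintro ⟨⟨h1, h2, h3, h4⟩, h5⟩
        rcases nat_step (h2 j) h4 with he | hge
        · exact absurd he h5
        · exact ⟨⟨h1, h2, h3, h4⟩, by omega⟩
      · rintro ⟨⟨h1, h2, h3, h4⟩, h5⟩
        have := hd j
        exact ⟨⟨h1, h2, h3, h4⟩, by omega⟩
    have hsplit : ∑ α' ∈ Tset d D j μ, MvPowerSeries.coeff α' F
        = (∑ α' ∈ Qset d D j μ, MvPowerSeries.coeff α' F) +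
          ∑ α' ∈ (Tset d D j μ).filter (fun α' => μ j + d j ≤ α' j),
            MvPowerSeries.coeff α' F := by
      rw [← Finset.sum_filter_add_sum_filter_not (Tset d D j μ) (fun α' => α' j = μ j), e1, e2]
    by_cases h0 : d 0 ≤ μ 0
    · rw [if_pos (Finsupp.single_le_iff.2 h0), gfun, if_pos (hPiff.2 hP)]
      have hTμ' : Tset d D j μ' = (Tset d D j μ).filter (fun α' => μ j + d j ≤ α' j) := by
        ext α'
        simp only [Finset.mem_filter, mem_Tset hd hD hdvd]
        constructor
        · rintro ⟨h1, h2, h3, h4⟩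
          rw [hμ'j] at h4
          have := hd j
          refine ⟨⟨by rw [← hwt' h0]; exact h1,
            fun l => (h2 l).trans (hmod' h0 l),
            fun l hl hlj => (h3 l hl hlj).trans (hμ'ne l hl.ne' hlj.ne), by omega⟩, h4⟩
        · rintro ⟨⟨h1, h2, h3, h4⟩, h5⟩
          refine ⟨by rw [hwt' h0]; exact h1,
            fun l => (h2 l).trans (hmod' h0 l).symm,
            fun l hl hlj => (h3 l hl hlj).trans (hμ'ne l hl.ne' hlj.ne).symm, ?_⟩
          rw [hμ'j]; exact h5
      rw [hTμ', hsplit]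
      ring
    · rw [if_neg (fun h => h0 (Finsupp.single_le_iff.1 h)), hsplit]
      have hempty : (Tset d D j μ).filter (fun α' => μ j + d j ≤ α' j) = ∅ := by
        rw [Finset.filter_eq_empty_iff]
        intro α' hα' hge
        rw [mem_Tset hd hD hdvd] at hα'
        exact Tempty hd hD hdvd hP (by omega) hj hα'.1 hα'.2.1 hα'.2.2.1 hge
      rw [hempty]
      simp
  · -- case j > j*
    rw [if_neg hdj, if_neg (fun h => hdj (Finsupp.single_le_iff.1 h)), zero_sub, neg_inj]
    by_cases h0 : d 0 ≤ μ 0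
    · rw [if_pos (Finsupp.single_le_iff.2 h0), gfun, if_pos (hPiff.2 hP)]
      have hTμ' : Tset d D j μ' = Uset d D j μ := by
        ext α'
        rw [mem_Tset hd hD hdvd, mem_Uset hd hD hdvd]
        constructor
        · rintro ⟨h1, h2, h3, h4⟩
          rw [hμ'j] at h4
          have := hd j
          exact ⟨by rw [← hwt' h0]; exact h1, fun l => (h2 l).trans (hmod' h0 l),
            fun l hl hlj => (h3 l hl hlj).trans (hμ'ne l hl.ne' hlj.ne), by omega⟩
        · rintro ⟨h1, h2, h3, h4⟩
          have hge : μ j + d j ≤ α' j := by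
            rcases nat_step (h2 j) h4.le with he | hge
            · omega
            · exact hge
          exact ⟨by rw [hwt' h0]; exact h1, fun l => (h2 l).trans (hmod' h0 l).symm,
            fun l hl hlj => (h3 l hl hlj).trans (hμ'ne l hl.ne' hlj.ne).symm,
            by rw [hμ'j]; exact hge⟩
      rw [hTμ']
    · rw [if_neg (fun h => h0 (Finsupp.single_le_iff.1 h))]
      have hUempty : Uset d D j μ = ∅ := by
        rw [Finset.eq_empty_iff_forall_notMem]
        intro α' hα'
        rw [mem_Uset hd hD hdvd] at hα'
        obtain ⟨h1, h2, h3, h4⟩ := hα'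
        have hge : μ j + d j ≤ α' j := by
          rcases nat_step (h2 j) h4.le with he | hge
          · omega
          · exact hge
        exact Tempty hd hD hdvd hP (by omega) hj h1 h2 h3 hge
      rw [hUempty]
      simp

open scoped Classical in
noncomputable def Agr (d : Fin (m + 1) → ℕ) (D : ℕ) (n : ℕ) (μ : Fin (m + 1) →₀ ℕ) :
    Finset (Fin (m + 1) →₀ ℕ) :=
  (Ak (fun l => D / d l) (wt (fun l => D / d l) μ)).filter
    (fun α' => (∀ l, α' l % d l = μ l % d l) ∧ ∀ l : Fin (m + 1), 0 < l → l.val ≤ n → α' l = μ l)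

theorem mem_Agr (hd : ∀ l, 0 < d l) (hD : 0 < D) (hdvd : ∀ l, d l ∣ D)
    {n : ℕ} {μ α' : Fin (m + 1) →₀ ℕ} :
    α' ∈ Agr d D n μ ↔ wt (fun l => D / d l) α' = wt (fun l => D / d l) μ ∧
      (∀ l, α' l % d l = μ l % d l) ∧
      ∀ l : Fin (m + 1), 0 < l → l.val ≤ n → α' l = μ l := by
  have hr : ∀ l, 1 ≤ D / d l := fun l => (Nat.one_le_div_iff (hd l)).2 (Nat.le_of_dvd hD (hdvd l))
  simp [Agr, Finset.mem_filter, mem_Ak hr, and_assoc]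

theorem agr_base (hd : ∀ l, 0 < d l) (hD : 0 < D) (hdvd : ∀ l, d l ∣ D)
    {n : ℕ} {μ : Fin (m + 1) →₀ ℕ} (hbig : m + 1 ≤ n) :
    Agr d D n μ = {μ} := by
  have hr : ∀ l, 1 ≤ D / d l := fun l => (Nat.one_le_div_iff (hd l)).2 (Nat.le_of_dvd hD (hdvd l))
  ext α'
  rw [mem_Agr hd hD hdvd, Finset.mem_singleton]
  constructor
  · rintro ⟨h1, h2, h3⟩
    have hagree : ∀ l : Fin (m + 1), l ≠ 0 → α' l = μ l := fun l hl =>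
      h3 l (Fin.pos_of_ne_zero hl) (by omega)
    have hwt0 : α' 0 * (D / d 0) = μ 0 * (D / d 0) := by
      have e1 : α' 0 * (D / d 0) + ∑ l ∈ Finset.univ.erase (0 : Fin (m + 1)), α' l * (D / d l)
          = ∑ l, α' l * (D / d l) :=
        Finset.add_sum_erase Finset.univ (fun l => α' l * (D / d l))
          (Finset.mem_univ (0 : Fin (m + 1)))
      have e2 : μ 0 * (D / d 0) + ∑ l ∈ Finset.univ.erase (0 : Fin (m + 1)), μ l * (D / d l)
          = ∑ l, μ l * (D / d l) :=
        Finset.add_sum_erase Finset.univ (fun l => μ l * (D / d l))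
          (Finset.mem_univ (0 : Fin (m + 1)))
      have e3 : ∑ l ∈ Finset.univ.erase (0 : Fin (m + 1)), α' l * (D / d l)
          = ∑ l ∈ Finset.univ.erase (0 : Fin (m + 1)), μ l * (D / d l) :=
        Finset.sum_congr rfl fun l hl =>
          by rw [hagree l (Finset.ne_of_mem_erase hl)]
      have h1' : wt (fun l => D / d l) α' = wt (fun l => D / d l) μ := h1
      rw [wt, wt] at h1'
      omega
    have h00 : α' 0 = μ 0 := Nat.eq_of_mul_eq_mul_right (hr 0) hwt0
    ext l
    rcases eq_or_ne l 0 with rfl | hl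
    · exact h00
    · exact hagree l hl
  · rintro rfl
    exact ⟨rfl, fun l => rfl, fun l _ _ => rfl⟩

theorem partition_lemma (hd : ∀ l, 0 < d l) (hD : 0 < D) (hdvd : ∀ l, d l ∣ D)
    (F : MvPowerSeries (Fin (m + 1)) W) (μ : Fin (m + 1) →₀ ℕ) :
    ∀ fuel n : ℕ, m + 1 ≤ n + fuel →
      (∀ l : Fin (m + 1), 0 < l → n < l.val → μ l < d l) →
      ∑ α' ∈ Agr d D n μ, MvPowerSeries.coeff α' F
        = MvPowerSeries.coeff μ F +
          ∑ j ∈ Finset.univ.filter (fun j : Fin (m + 1) => 0 < j ∧ n < j.val),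
            ∑ α' ∈ Uset d D j μ, MvPowerSeries.coeff α' F := by
  classical
  intro fuel
  induction fuel with
  | zero =>
    intro n hn _
    rw [agr_base hd hD hdvd (by omega), Finset.sum_singleton]
    have : Finset.univ.filter (fun j : Fin (m + 1) => 0 < j ∧ n < j.val) = ∅ := by
      rw [Finset.filter_eq_empty_iff]
      intro j _
      have := j.isLt
      omega
    rw [this, Finset.sum_empty, add_zero]
  | succ f ih =>
    intro n hn hless
    by_cases hbig : m + 1 ≤ n
    · rw [agr_base hd hD hdvd hbig, Finset.sum_singleton]
      have : Finset.univ.filter (fun j : Fin (m + 1) => 0 < j ∧ n < j.val) = ∅ := by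
        rw [Finset.filter_eq_empty_iff]
        intro j _
        have := j.isLt
        omega
      rw [this, Finset.sum_empty, add_zero]
    · by_cases hn1 : n + 1 < m + 1
      swap
      · -- n + 1 = m + 1, i.e. n = m
        have hAgr : Agr d D n μ = Agr d D (n + 1) μ := by
          ext α'
          rw [mem_Agr hd hD hdvd, mem_Agr hd hD hdvd]
          refine and_congr Iff.rfl (and_congr Iff.rfl (forall_congr' fun l => ?_))
          have := l.isLt
          constructor <;> intro h hl hv <;> exact h hl (by omega)
        have hIdx : Finset.univ.filter (fun j : Fin (m + 1) => 0 < j ∧ n < j.val)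
            = Finset.univ.filter (fun j : Fin (m + 1) => 0 < j ∧ n + 1 < j.val) := by
          apply Finset.filter_congr
          intro j _
          have := j.isLt
          constructor <;> intro h <;> exact ⟨h.1, by omega⟩
        rw [hAgr, hIdx]
        exact ih (n + 1) (by omega) (fun l hl hv => hless l hl (by omega))
      · set l₁ : Fin (m + 1) := ⟨n + 1, hn1⟩ with hl₁def
        have hl₁val : l₁.val = n + 1 := rfl
        have hl₁pos : 0 < l₁ := by
          simp [Fin.lt_def, hl₁val]
        have hμl₁ : μ l₁ < d l₁ := hless l₁ hl₁pos (by rw [hl₁val]; omega)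
        have hsplit : Agr d D n μ = Agr d D (n + 1) μ ∪ Uset d D l₁ μ := by
          ext α'
          rw [Finset.mem_union, mem_Agr hd hD hdvd, mem_Agr hd hD hdvd,
            mem_Uset hd hD hdvd]
          constructor
          · rintro ⟨h1, h2, h3⟩
            by_cases hc : α' l₁ = μ l₁
            · refine Or.inl ⟨h1, h2, fun l hl hv => ?_⟩
              rcases Nat.lt_or_ge l.val (n + 1) with hv' | hv'
              · exact h3 l hl (by omega)
              · have : l = l₁ := Fin.ext (by rw [hl₁val]; omega)
                rw [this]; exact hc
            · refine Or.inr ⟨h1, h2, fun l hl hll => h3 l hl ?_, ?_⟩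
              · rw [Fin.lt_def, hl₁val] at hll
                omega
              · have hle := le_of_mod_eq (h2 l₁) hμl₁
                have hc' := hc
                omega
          · rintro (⟨h1, h2, h3⟩ | ⟨h1, h2, h3, h4⟩)
            · exact ⟨h1, h2, fun l hl hv => h3 l hl (by omega)⟩
            · refine ⟨h1, h2, fun l hl hv => h3 l hl ?_⟩
              rw [Fin.lt_def, hl₁val]
              omega
        have hdisj : Disjoint (Agr d D (n + 1) μ) (Uset d D l₁ μ) := by
          rw [Finset.disjoint_left]
          intro α' ha hu
          rw [mem_Agr hd hD hdvd] at ha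
          rw [mem_Uset hd hD hdvd] at hu
          have := ha.2.2 l₁ hl₁pos (by rw [hl₁val])
          omega
        have hIdx : Finset.univ.filter (fun j : Fin (m + 1) => 0 < j ∧ n < j.val)
            = insert l₁ (Finset.univ.filter (fun j : Fin (m + 1) => 0 < j ∧ n + 1 < j.val)) := by
          ext j
          simp only [Finset.mem_filter, Finset.mem_insert, Finset.mem_univ, true_and]
          constructor
          · rintro ⟨hj1, hj2⟩
            rcases Nat.lt_or_ge (n + 1) j.val with h | h
            · exact Or.inr ⟨hj1, h⟩
            · exact Or.inl (Fin.ext (by rw [hl₁val]; omega))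
          · rintro (rfl | ⟨hj1, hj2⟩)
            · exact ⟨hl₁pos, by rw [hl₁val]; omega⟩
            · exact ⟨hj1, by omega⟩
        have hnotmem : l₁ ∉ Finset.univ.filter
            (fun j : Fin (m + 1) => 0 < j ∧ n + 1 < j.val) := by
          simp only [Finset.mem_filter, Finset.mem_univ, true_and, not_and, hl₁val]
          intro _
          omega
        rw [hsplit, Finset.sum_union hdisj, hIdx, Finset.sum_insert hnotmem,
          ih (n + 1) (by omega) (fun l hl hv => hless l hl (by omega))]
        ring

theorem mem_span_of_classSum_zero (hd : ∀ l, 0 < d l) (hD : 0 < D) (hdvd : ∀ l, d l ∣ D)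
    (F : MvPowerSeries (Fin (m + 1)) W)
    (hF : ∀ (k : ℕ) (β : Fin (m + 1) →₀ ℕ),
      ∑ α ∈ (Ak (fun l => D / d l) k).filter (fun α => ∀ l, α l % d l = β l % d l),
        MvPowerSeries.coeff α F = 0) :
    F ∈ Ideal.span {p : MvPowerSeries (Fin (m + 1)) W |
      ∃ i j, p = MvPowerSeries.X i ^ d i - MvPowerSeries.X j ^ d j} := by
  classical
  have hr : ∀ l, 1 ≤ D / d l := fun l => (Nat.one_le_div_iff (hd l)).2 (Nat.le_of_dvd hD (hdvd l))
  have hclaim : F = ∑ j ∈ Finset.univ.filter (fun j : Fin (m + 1) => 0 < j),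
      Gser F d D j * (MvPowerSeries.X j ^ d j - MvPowerSeries.X 0 ^ d 0) := by
    apply MvPowerSeries.ext
    intro μ
    rw [map_sum]
    have hterm : ∀ j ∈ Finset.univ.filter (fun j : Fin (m + 1) => 0 < j),
        MvPowerSeries.coeff μ (Gser F d D j *
            (MvPowerSeries.X j ^ d j - MvPowerSeries.X 0 ^ d 0))
        = (if ∀ l, j < l → μ l < d l then
            (if d j ≤ μ j then ∑ α' ∈ Qset d D j μ, MvPowerSeries.coeff α' F
             else - ∑ α' ∈ Uset d D j μ, MvPowerSeries.coeff α' F)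
           else 0) := by
      intro j hj
      rw [Finset.mem_filter] at hj
      rw [mul_sub, map_sub, MvPowerSeries.X_pow_eq, MvPowerSeries.X_pow_eq,
        MvPowerSeries.coeff_mul_monomial, MvPowerSeries.coeff_mul_monomial]
      simp only [mul_one]
      rw [← tj_eq hd hD hdvd F μ j hj.2]
      congr 1
      · by_cases hle : Finsupp.single j (d j) ≤ μ
        · rw [if_pos hle, if_pos hle, coeff_Gser, tsub_add_cancel_of_le hle]
        · rw [if_neg hle, if_neg hle]
    rw [Finset.sum_congr rfl hterm]
    by_cases hJ : (Finset.univ.filter (fun j : Fin (m + 1) => 0 < j ∧ d j ≤ μ j)).Nonempty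
    · -- there is a maximal index j* with d j* ≤ μ j*
      set js := (Finset.univ.filter (fun j : Fin (m + 1) => 0 < j ∧ d j ≤ μ j)).max' hJ with hjs
      have hjsmem := (Finset.univ.filter
        (fun j : Fin (m + 1) => 0 < j ∧ d j ≤ μ j)).max'_mem hJ
      rw [Finset.mem_filter] at hjsmem
      obtain ⟨-, hjspos, hjsd⟩ := hjsmem
      have hPjs : ∀ l, js < l → μ l < d l := by
        intro l hl
        by_contra hcon
        have hmem : l ∈ Finset.univ.filter (fun j : Fin (m + 1) => 0 < j ∧ d j ≤ μ j) := by
          rw [Finset.mem_filter]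
          exact ⟨Finset.mem_univ l, hjspos.trans hl, by omega⟩
        have := Finset.le_max' _ l hmem
        rw [← hjs] at this
        exact absurd hl (not_lt.2 this)
      have s1 : ∑ j ∈ Finset.univ.filter (fun j : Fin (m + 1) => 0 < j),
          (if ∀ l, j < l → μ l < d l then
            (if d j ≤ μ j then ∑ α' ∈ Qset d D j μ, MvPowerSeries.coeff α' F
             else - ∑ α' ∈ Uset d D j μ, MvPowerSeries.coeff α' F)
           else 0)
          = ∑ j ∈ Finset.univ.filter (fun j : Fin (m + 1) => js ≤ j),
            (if ∀ l, j < l → μ l < d l then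
              (if d j ≤ μ j then ∑ α' ∈ Qset d D j μ, MvPowerSeries.coeff α' F
               else - ∑ α' ∈ Uset d D j μ, MvPowerSeries.coeff α' F)
             else 0) := by
        apply (Finset.sum_subset ?_ ?_).symm
        · intro j hjm
          rw [Finset.mem_filter] at hjm ⊢
          exact ⟨hjm.1, lt_of_lt_of_le hjspos hjm.2⟩
        · intro j hj1 hj2
          rw [Finset.mem_filter] at hj1 hj2
          have hlt : j < js := by
            rcases lt_or_ge j js with h | h
            · exact h
            · exact absurd ⟨hj1.1, h⟩ hj2
          rw [if_neg]
          intro hP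
          exact absurd (hP js hlt) (not_lt.2 hjsd)
      have s2 : Finset.univ.filter (fun j : Fin (m + 1) => js ≤ j)
          = insert js (Finset.univ.filter (fun j : Fin (m + 1) => js < j)) := by
        ext j
        simp only [Finset.mem_filter, Finset.mem_insert, Finset.mem_univ, true_and]
        rw [le_iff_lt_or_eq]
        constructor
        · rintro (h | h)
          · exact Or.inr h
          · exact Or.inl h.symm
        · rintro (rfl | h)
          · exact Or.inr rfl
          · exact Or.inl h
      have s2' : js ∉ Finset.univ.filter (fun j : Fin (m + 1) => js < j) := by
        simp
      rw [s1, s2, Finset.sum_insert s2', if_pos hPjs, if_pos hjsd]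
      have s4 : ∀ j ∈ Finset.univ.filter (fun j : Fin (m + 1) => js < j),
          (if ∀ l, j < l → μ l < d l then
            (if d j ≤ μ j then ∑ α' ∈ Qset d D j μ, MvPowerSeries.coeff α' F
             else - ∑ α' ∈ Uset d D j μ, MvPowerSeries.coeff α' F)
           else 0) = - ∑ α' ∈ Uset d D j μ, MvPowerSeries.coeff α' F := by
        intro j hjm
        rw [Finset.mem_filter] at hjm
        rw [if_pos (fun l hl => hPjs l (hjm.2.trans hl)), if_neg (not_le.2 (hPjs j hjm.2))]
      rw [Finset.sum_congr rfl s4]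
      -- identify Qset with Agr
      have hQA : Qset d D js μ = Agr d D js.val μ := by
        ext α'
        rw [mem_Qset hd hD hdvd, mem_Agr hd hD hdvd]
        constructor
        · rintro ⟨h1, h2, h3, h4⟩
          refine ⟨h1, h2, fun l hl hv => ?_⟩
          rcases lt_or_eq_of_le (show l ≤ js from Fin.le_def.2 hv) with h | h
          · exact h3 l hl h
          · rw [h]; exact h4
        · rintro ⟨h1, h2, h3⟩
          exact ⟨h1, h2, fun l hl hll => h3 l hl (Fin.le_def.1 hll.le),
            h3 js hjspos le_rfl⟩
      have hpart := partition_lemma hd hD hdvd F μ (m + 1) js.val (by omega)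
        (fun l hl hv => hPjs l (Fin.lt_def.2 hv))
      have hIdx2 : Finset.univ.filter (fun j : Fin (m + 1) => 0 < j ∧ js.val < j.val)
          = Finset.univ.filter (fun j : Fin (m + 1) => js < j) := by
        apply Finset.filter_congr
        intro j _
        constructor
        · rintro ⟨h1, h2⟩
          exact Fin.lt_def.2 h2
        · intro h
          exact ⟨hjspos.trans h, Fin.lt_def.1 h⟩
      rw [hQA, hpart, hIdx2]
      simp [Finset.sum_neg_distrib]
    · -- no index with d j ≤ μ j
      have hempty : ∀ j : Fin (m + 1), 0 < j → μ j < d j := by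
        intro j hjpos
        by_contra hcon
        exact hJ ⟨j, by rw [Finset.mem_filter]; exact ⟨Finset.mem_univ j, hjpos, by omega⟩⟩
      have s4 : ∀ j ∈ Finset.univ.filter (fun j : Fin (m + 1) => 0 < j),
          (if ∀ l, j < l → μ l < d l then
            (if d j ≤ μ j then ∑ α' ∈ Qset d D j μ, MvPowerSeries.coeff α' F
             else - ∑ α' ∈ Uset d D j μ, MvPowerSeries.coeff α' F)
           else 0) = - ∑ α' ∈ Uset d D j μ, MvPowerSeries.coeff α' F := by
        intro j hjm
        rw [Finset.mem_filter] at hjm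
        rw [if_pos (fun l hl => hempty l (hjm.2.trans hl)),
          if_neg (not_le.2 (hempty j hjm.2))]
      rw [Finset.sum_congr rfl s4]
      have hpart := partition_lemma hd hD hdvd F μ (m + 1) 0 (by omega)
        (fun l hl _ => hempty l hl)
      have hAgr0 : Agr d D 0 μ = (Ak (fun l => D / d l) (wt (fun l => D / d l) μ)).filter
          (fun α => ∀ l, α l % d l = μ l % d l) := by
        ext α'
        rw [mem_Agr hd hD hdvd]
        have hr' := hr
        rw [Finset.mem_filter, mem_Ak hr']
        constructor
        · rintro ⟨h1, h2, h3⟩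
          exact ⟨h1, h2⟩
        · rintro ⟨h1, h2⟩
          refine ⟨h1, h2, fun l hl hv => ?_⟩
          rw [Fin.lt_def] at hl
          simp only [Fin.val_zero] at hl
          omega
      have hzero : ∑ α' ∈ Agr d D 0 μ, MvPowerSeries.coeff α' F = 0 := by
        rw [hAgr0]
        exact hF (wt (fun l => D / d l) μ) μ
      rw [hzero] at hpart
      have hIdx3 : Finset.univ.filter (fun j : Fin (m + 1) => 0 < j ∧ 0 < j.val)
          = Finset.univ.filter (fun j : Fin (m + 1) => 0 < j) := by
        apply Finset.filter_congr
        intro j _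
        constructor
        · rintro ⟨h1, _⟩; exact h1
        · intro h; exact ⟨h, by rw [← Fin.val_zero (m + 1)]; exact Fin.lt_def.1 h⟩
      rw [hIdx3] at hpart
      rw [Finset.sum_neg_distrib]
      linear_combination -hpart
  rw [hclaim]
  refine Ideal.sum_mem _ (fun j _ => Ideal.mul_mem_left _ _ (Ideal.subset_span ⟨j, 0, rfl⟩))

end PerJ

end Construction

end Stmt6Aux

open Stmt6Aux

/-- Let `W` be an integral domain, `d₁, …, d_m` positive integers, `D = lcm (d₁, …, d_m)`,
and assume `W` contains a primitive `D`-th root of unity.  For each tuple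
`ζ = (ζ₁, …, ζ_m)` with `ζ_j ^ (d_j) = 1`, let `φ_ζ : W[[τ₁, …, τ_m]] → W[[t]]` be the
substitution homomorphism `τ_j ↦ ζ_j · t^(D / d_j)`.  Then `⋂_ζ ker φ_ζ` equals the ideal
generated by the elements `τ_i ^ (d_i) - τ_j ^ (d_j)`; in particular the quotient by this
ideal is reduced. -/
theorem stmt6 {W : Type*} [CommRing W] [IsDomain W] (m : ℕ) (d : Fin m → ℕ)
    (hd : ∀ j, 0 < d j) (D : ℕ) (hD : D = Finset.univ.lcm d)
    (ω : W) (hω : IsPrimitiveRoot ω D) :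
    {F : MvPowerSeries (Fin m) W |
        ∀ ζ : Fin m → W, (∀ j, ζ j ^ d j = 1) → substCoeff (fun j => D / d j) ζ F = 0} =
      ↑(Ideal.span {p : MvPowerSeries (Fin m) W |
          ∃ i j, p = MvPowerSeries.X i ^ d i - MvPowerSeries.X j ^ d j}) ∧
    IsReduced (MvPowerSeries (Fin m) W ⧸ Ideal.span {p : MvPowerSeries (Fin m) W |
          ∃ i j, p = MvPowerSeries.X i ^ d i - MvPowerSeries.X j ^ d j}) := by
  classical
  have hdvd : ∀ j, d j ∣ D := fun j => hD ▸ Finset.dvd_lcm (Finset.mem_univ j)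
  have hDpos : 0 < D := by
    rcases Nat.eq_zero_or_pos D with h0 | h
    · exfalso
      rw [hD, Finset.lcm_eq_zero_iff] at h0
      obtain ⟨j, -, hj⟩ := h0
      exact (hd j).ne' hj
    · exact h
  have hr : ∀ j, 1 ≤ D / d j := fun j => (Nat.one_le_div_iff (hd j)).2 (Nat.le_of_dvd hDpos (hdvd j))
  have hE : {F : MvPowerSeries (Fin m) W |
        ∀ ζ : Fin m → W, (∀ j, ζ j ^ d j = 1) → substCoeff (fun j => D / d j) ζ F = 0} =
      ↑(Ideal.span {p : MvPowerSeries (Fin m) W |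
          ∃ i j, p = MvPowerSeries.X i ^ d i - MvPowerSeries.X j ^ d j}) := by
    ext F
    simp only [Set.mem_setOf_eq, SetLike.mem_coe]
    constructor
    · intro hF
      have hcs : ∀ (k : ℕ) (β : Fin m →₀ ℕ),
          ∑ α ∈ (Ak (fun j => D / d j) k).filter (fun α => ∀ j, α j % d j = β j % d j),
            MvPowerSeries.coeff α F = 0 := by
        intro k β
        apply classSum_eq_zero hd hDpos hdvd hω (fun α => MvPowerSeries.coeff α F) _ _ β
        intro ζ hζ
        have h1 := congrArg (PowerSeries.coeff k) (hF ζ hζ)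
        rwa [coeff_substCoeff, map_zero] at h1
      cases m with
      | zero =>
        have hFeq : F = 0 := by
          have hsub : ∀ γ : Fin 0 →₀ ℕ, γ = 0 := fun γ => Finsupp.ext (fun a => a.elim0)
          apply MvPowerSeries.ext
          intro α
          have h1 := congrArg (PowerSeries.coeff 0) (hF (fun j => j.elim0) (fun j => j.elim0))
          rw [coeff_substCoeff, map_zero] at h1
          have hA : Ak (fun j : Fin 0 => D / d j) 0 = {0} := by
            ext γ
            rw [mem_Ak hr, Finset.mem_singleton]
            constructor
            · intro _; exact hsub γ
            · intro _; simp [wt]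
          rw [hA, Finset.sum_singleton] at h1
          simp only [Finset.univ_eq_empty, Finset.prod_empty, mul_one] at h1
          rw [hsub α, map_zero]
          exact h1
        rw [hFeq]
        exact Ideal.zero_mem _
      | succ m' => exact mem_span_of_classSum_zero hd hDpos hdvd F hcs
    · intro hF ζ hζ
      exact span_subset_inter_ker hdvd hDpos hd ζ hζ F hF
  refine ⟨hE, ?_⟩
  constructor
  intro x hx
  obtain ⟨F, rfl⟩ := Ideal.Quotient.mk_surjective x
  obtain ⟨n, hn⟩ := hx
  rw [← map_pow] at hn
  have hmem : F ^ n ∈ Ideal.span {p : MvPowerSeries (Fin m) W |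
      ∃ i j, p = MvPowerSeries.X i ^ d i - MvPowerSeries.X j ^ d j} :=
    Ideal.Quotient.eq_zero_iff_mem.1 hn
  rcases Nat.eq_zero_or_pos n with rfl | hn1
  · have h1 : (1 : MvPowerSeries (Fin m) W) ∈ Ideal.span {p : MvPowerSeries (Fin m) W |
        ∃ i j, p = MvPowerSeries.X i ^ d i - MvPowerSeries.X j ^ d j} := by
      simpa using hmem
    rw [Ideal.Quotient.eq_zero_iff_mem, (Ideal.eq_top_iff_one _).2 h1]
    trivial
  · have hFS : F ∈ {F : MvPowerSeries (Fin m) W |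
        ∀ ζ : Fin m → W, (∀ j, ζ j ^ d j = 1) → substCoeff (fun j => D / d j) ζ F = 0} := by
      intro ζ hζ
      have h1 : substCoeff (fun j => D / d j) ζ (F ^ n) = 0 :=
        span_subset_inter_ker hdvd hDpos hd ζ hζ _ hmem
      rw [substCoeff_pow hr ζ F n hn1] at h1
      exact (pow_eq_zero_iff hn1.ne').1 h1
    rw [hE] at hFS
    exact Ideal.Quotient.eq_zero_iff_mem.2 hFS
end

section
/- Let W be a Noetherian integrally closed domain, d_1, …, d_m positive integers, and d = lcm(d_1, …, d_m); assume W contains a primitive d-th root of unity. For each m-tuple ζ = (ζ_1, …, ζ_m) of elements of W with ζ_j^{d_j} = 1 for all j, let φ_ζ : W[[τ_1, …, τ_m]] → W[[t]] be the substitution W-algebra homomorphism determined by φ_ζ(τ_j) = ζ_j·t^{d/d_j}. Then ker φ_ζ = ker φ_{ζ'} if and only if there exists ε ∈ W with ε^d = 1 and ζ'_j = ε^{d/d_j}·ζ_j for all j. Consequently, the number of distinct ideals among the ker φ_ζ equals (∏_{j=1}^m d_j)/d. -/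
open scoped Classical in
lemma substCoeff_coeff {W : Type*} [CommRing W] {m : ℕ} (r : Fin m → ℕ) (u : Fin m → W)
    (F : MvPowerSeries (Fin m) W) (k : ℕ) :
    PowerSeries.coeff k (substCoeff r u F) =
      ∑ α ∈ (Finset.Iic ((Finsupp.equivFunOnFinite).symm fun _ => k)).filter
        (fun α : Fin m →₀ ℕ => ∑ j, α j * r j = k),
      MvPowerSeries.coeff α F * ∏ j, u j ^ α j := by
  simp [substCoeff]

open scoped Classical in
lemma mem_substFilter {m : ℕ} (r : Fin m → ℕ) (k : ℕ) (α : Fin m →₀ ℕ) :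
    α ∈ (Finset.Iic ((Finsupp.equivFunOnFinite).symm fun _ => k)).filter
        (fun α : Fin m →₀ ℕ => ∑ j, α j * r j = k) ↔
      (∀ i, α i ≤ k) ∧ ∑ j, α j * r j = k := by
  simp [Finset.mem_filter, Finset.mem_Iic, Finsupp.le_def]

lemma substCoeff_sub {W : Type*} [CommRing W] {m : ℕ} (r : Fin m → ℕ) (u : Fin m → W)
    (F G : MvPowerSeries (Fin m) W) :
    substCoeff r u (F - G) = substCoeff r u F - substCoeff r u G := by
  ext k
  simp [substCoeff_coeff, sub_mul, Finset.sum_sub_distrib]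

lemma substCoeff_monomial {W : Type*} [CommRing W] {m : ℕ} (r : Fin m → ℕ)
    (hr : ∀ j, 1 ≤ r j) (u : Fin m → W) (β : Fin m →₀ ℕ) (c : W) :
    substCoeff r u (MvPowerSeries.monomial β c) =
      PowerSeries.monomial (∑ j, β j * r j) (c * ∏ j, u j ^ β j) := by
  classical
  ext k
  rw [substCoeff_coeff, PowerSeries.coeff_monomial]
  have : ∀ α ∈ (Finset.Iic ((Finsupp.equivFunOnFinite).symm fun _ => k)).filter
        (fun α : Fin m →₀ ℕ => ∑ j, α j * r j = k),
      MvPowerSeries.coeff α (MvPowerSeries.monomial β c) * ∏ j, u j ^ α j =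
      if α = β then c * ∏ j, u j ^ β j else 0 := by
    intro α _
    rw [MvPowerSeries.coeff_monomial]
    split_ifs with h
    · subst h; rfl
    · simp
  rw [Finset.sum_congr rfl this, Finset.sum_ite_eq' _ β (fun _ => c * ∏ j, u j ^ β j)]
  by_cases hk : k = ∑ j, β j * r j
  · subst hk
    rw [if_pos, if_pos rfl]
    rw [mem_substFilter]
    refine ⟨fun i => ?_, rfl⟩
    calc β i ≤ β i * r i := Nat.le_mul_of_pos_right _ (hr i)
    _ ≤ ∑ j, β j * r j := Finset.single_le_sum (f := fun j => β j * r j) (fun j _ => Nat.zero_le _) (Finset.mem_univ i)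
  · rw [if_neg hk, if_neg]
    intro hmem
    exact hk ((mem_substFilter r k β).mp hmem).2.symm

lemma substCoeff_twist {W : Type*} [CommRing W] {m : ℕ} (r : Fin m → ℕ) (ζ : Fin m → W)
    (ε : W) (F : MvPowerSeries (Fin m) W) (k : ℕ) :
    PowerSeries.coeff k (substCoeff r (fun j => ε ^ r j * ζ j) F) =
      ε ^ k * PowerSeries.coeff k (substCoeff r ζ F) := by
  classical
  rw [substCoeff_coeff, substCoeff_coeff, Finset.mul_sum]
  refine Finset.sum_congr rfl fun α hα => ?_
  have hk : ∑ j, α j * r j = k := ((mem_substFilter r k α).mp hα).2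
  have : ∏ j, (ε ^ r j * ζ j) ^ α j = ε ^ k * ∏ j, ζ j ^ α j := by
    rw [← hk]
    rw [Finset.prod_congr rfl (fun j _ => mul_pow (ε ^ r j) (ζ j) (α j)),
      Finset.prod_mul_distrib]
    congr 1
    rw [Finset.prod_congr rfl (fun j _ => (pow_mul ε (r j) (α j)).symm),
      Finset.prod_pow_eq_pow_sum]
    congr 1
    exact Finset.sum_congr rfl fun j _ => Nat.mul_comm _ _
  rw [this]; ring

lemma ker_twist {W : Type*} [CommRing W] [IsDomain W] {m : ℕ} (r : Fin m → ℕ)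
    (ζ : Fin m → W) (ε : W) (hε : IsUnit ε) :
    {F : MvPowerSeries (Fin m) W | substCoeff r (fun j => ε ^ r j * ζ j) F = 0} =
      {F : MvPowerSeries (Fin m) W | substCoeff r ζ F = 0} := by
  ext F
  simp only [Set.mem_setOf_eq, PowerSeries.ext_iff, map_zero]
  exact forall_congr' fun k => by
    rw [substCoeff_twist, (hε.pow k).mul_right_eq_zero]

lemma single_sum_mul {m : ℕ} (j : Fin m) (a : ℕ) (r : Fin m → ℕ) :
    ∑ i, (Finsupp.single j a) i * r i = a * r j := by
  classical
  rw [Finset.sum_eq_single j]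
  · simp
  · intro b _ hb; simp [Finsupp.single_apply, Ne.symm hb]
  · simp

lemma single_prod_pow {W : Type*} [CommRing W] {m : ℕ} (j : Fin m) (a : ℕ) (u : Fin m → W) :
    ∏ i, u i ^ (Finsupp.single j a) i = u j ^ a := by
  classical
  rw [Finset.prod_eq_single j]
  · simp
  · intro b _ hb; simp [Finsupp.single_apply, Ne.symm hb]
  · simp

lemma ker_rel {W : Type*} [CommRing W] [IsDomain W] {m : ℕ} (r : Fin m → ℕ)
    (hr : ∀ j, 1 ≤ r j) (ζ ζ' : Fin m → W)
    (hK : {F : MvPowerSeries (Fin m) W | substCoeff r ζ F = 0} =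
      {F : MvPowerSeries (Fin m) W | substCoeff r ζ' F = 0})
    (j k : Fin m) (a b : ℕ) (hab : a * r j = b * r k) :
    ζ k ^ b * ζ' j ^ a = ζ j ^ a * ζ' k ^ b := by
  classical
  set F : MvPowerSeries (Fin m) W :=
    MvPowerSeries.monomial (Finsupp.single j a) (ζ k ^ b) -
      MvPowerSeries.monomial (Finsupp.single k b) (ζ j ^ a) with hF
  have hsub : ∀ u : Fin m → W, substCoeff r u F =
      PowerSeries.monomial (a * r j) (ζ k ^ b * u j ^ a) -
        PowerSeries.monomial (b * r k) (ζ j ^ a * u k ^ b) := by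
    intro u
    rw [hF, substCoeff_sub, substCoeff_monomial r hr, substCoeff_monomial r hr,
      single_sum_mul, single_sum_mul, single_prod_pow, single_prod_pow]
  have hFζ : substCoeff r ζ F = 0 := by
    rw [hsub, hab, mul_comm (ζ k ^ b) (ζ j ^ a), sub_self]
  have hFζ' : substCoeff r ζ' F = 0 := by
    have hmem : F ∈ {F : MvPowerSeries (Fin m) W | substCoeff r ζ F = 0} := hFζ
    rw [hK] at hmem
    exact hmem
  have := congrArg (PowerSeries.coeff (a * r j)) (hsub ζ' ▸ hFζ')
  rw [map_sub, PowerSeries.coeff_monomial, PowerSeries.coeff_monomial, if_pos rfl,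
    if_pos hab, map_zero] at this
  exact sub_eq_zero.mp this

lemma finset_bezout {ι : Type*} [DecidableEq ι] (f : ι → ℕ) (s : Finset ι) :
    ∃ x : ι → ℤ, ∑ j ∈ s, x j * (f j : ℤ) = ((s.gcd f : ℕ) : ℤ) := by
  induction s using Finset.induction_on with
  | empty => exact ⟨0, by simp⟩
  | @insert a s ha ih =>
    obtain ⟨x, hx⟩ := ih
    set A : ℤ := Nat.gcdA (f a) (s.gcd f) with hA
    set B : ℤ := Nat.gcdB (f a) (s.gcd f) with hB
    refine ⟨Function.update (fun j => B * x j) a A, ?_⟩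
    rw [Finset.gcd_insert]
    have hs : ∑ j ∈ s, Function.update (fun j => B * x j) a A j * (f j : ℤ) =
        B * ∑ j ∈ s, x j * (f j : ℤ) := by
      rw [Finset.mul_sum]
      refine Finset.sum_congr rfl fun j hj => ?_
      rw [Function.update_of_ne (by rintro rfl; exact ha hj)]
      ring
    simp only [Finset.sum_insert ha]
    rw [Function.update_self, hs, hx]
    have hg : ((GCDMonoid.gcd (f a) (s.gcd f) : ℕ) : ℤ) = ((Nat.gcd (f a) (s.gcd f) : ℕ) : ℤ) := rfl
    rw [hg, Nat.gcd_eq_gcd_ab, hA, hB]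
    ring

lemma zpow_sum_eq {G : Type*} [CommGroup G] (a : G) {ι : Type*} (s : Finset ι) (f : ι → ℤ) :
    a ^ (∑ j ∈ s, f j) = ∏ j ∈ s, a ^ f j := by
  induction s using Finset.cons_induction with
  | empty => simp
  | cons j s hj ih => rw [Finset.sum_cons, Finset.prod_cons, zpow_add, ih]

lemma exists_eps {W : Type*} [CommRing W] [IsDomain W] {m : ℕ} (hm : 0 < m)
    (d r : Fin m → ℕ) (hd : ∀ j, 0 < d j) (D : ℕ) (hDr : ∀ j, r j * d j = D)
    (hgcd : Finset.univ.gcd r = 1) (ζ ζ' : Fin m → W)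
    (hζ : ∀ j, ζ j ^ d j = 1) (hζ' : ∀ j, ζ' j ^ d j = 1)
    (hrel : ∀ j k, ζ k ^ r j * ζ' j ^ r k = ζ j ^ r k * ζ' k ^ r j) :
    ∃ ε : W, ε ^ D = 1 ∧ ∀ j, ζ' j = ε ^ r j * ζ j := by
  have huζ : ∀ j, IsUnit (ζ j) := fun j => IsUnit.of_mul_eq_one (ζ j ^ (d j - 1))
    (by rw [← pow_succ', Nat.sub_add_cancel (hd j)]; exact hζ j)
  have huζ' : ∀ j, IsUnit (ζ' j) := fun j => IsUnit.of_mul_eq_one (ζ' j ^ (d j - 1))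
    (by rw [← pow_succ', Nat.sub_add_cancel (hd j)]; exact hζ' j)
  set u : Fin m → Wˣ := fun j => (huζ j).unit with hu
  set u' : Fin m → Wˣ := fun j => (huζ' j).unit with hu'
  have huv : ∀ j, (u j : W) = ζ j := fun j => (huζ j).unit_spec
  have huv' : ∀ j, (u' j : W) = ζ' j := fun j => (huζ' j).unit_spec
  have h1 : ∀ j, u j ^ d j = 1 := fun j => Units.ext (by
    rw [Units.val_pow_eq_pow_val, huv, hζ j, Units.val_one])
  have h1' : ∀ j, u' j ^ d j = 1 := fun j => Units.ext (by
    rw [Units.val_pow_eq_pow_val, huv', hζ' j, Units.val_one])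
  have hrelU : ∀ j k, u k ^ r j * u' j ^ r k = u j ^ r k * u' k ^ r j := fun j k =>
    Units.ext (by
      push_cast
      rw [huv, huv, huv', huv']
      exact hrel j k)
  set η : Fin m → Wˣ := fun j => u' j / u j with hη
  have hηd : ∀ j, η j ^ d j = 1 := fun j => by
    rw [hη, div_pow, h1, h1', div_one]
  have hηrel : ∀ j k, η j ^ r k = η k ^ r j := by
    intro j k
    rw [hη, div_pow, div_pow, div_eq_div_iff_mul_eq_mul]
    rw [mul_comm (u' j ^ r k) (u k ^ r j), mul_comm (u' k ^ r j) (u j ^ r k)]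
    exact hrelU j k
  obtain ⟨x, hx⟩ := finset_bezout r Finset.univ
  rw [hgcd] at hx
  set ε' : Wˣ := ∏ j, η j ^ x j with hε'
  have hεr : ∀ k, ε' ^ r k = η k := by
    intro k
    have : ε' ^ (r k : ℤ) = η k := by
      rw [hε', ← Finset.prod_zpow]
      have : ∀ j ∈ Finset.univ, (η j ^ x j) ^ (r k : ℤ) = η k ^ ((r j : ℤ) * x j) := by
        intro j _
        rw [← zpow_mul, mul_comm (x j) (r k : ℤ), zpow_mul, zpow_natCast, hηrel j k,
          ← zpow_natCast, ← zpow_mul]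
      rw [Finset.prod_congr rfl this, ← zpow_sum_eq]
      have hsum : ∑ j, (r j : ℤ) * x j = 1 := by
        have : ∑ j, (r j : ℤ) * x j = ∑ j, x j * (r j : ℤ) :=
          Finset.sum_congr rfl fun j _ => mul_comm _ _
        rw [this, hx]; norm_num
      rw [hsum, zpow_one]
    rw [← zpow_natCast, this]
  set j0 : Fin m := ⟨0, hm⟩
  have hεD : ε' ^ D = 1 := by
    rw [← hDr j0, pow_mul, hεr j0, hηd j0]
  refine ⟨(ε' : W), ?_, ?_⟩
  · rw [← Units.val_pow_eq_pow_val, hεD, Units.val_one]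
  · intro j
    have : u' j = ε' ^ r j * u j := by
      rw [hεr j]
      simp only [hη]
      simp
    have := congrArg (Units.val) this
    rw [Units.val_mul, Units.val_pow_eq_pow_val, huv, huv'] at this
    exact this

lemma gcd_quot_eq_one {m : ℕ} (hm : 0 < m) (d : Fin m → ℕ) (hd : ∀ j, 0 < d j)
    (D : ℕ) (hD : D = Finset.univ.lcm d) :
    Finset.univ.gcd (fun j => D / d j) = 1 := by
  have hdD : ∀ j, d j ∣ D := fun j => hD ▸ Finset.dvd_lcm (Finset.mem_univ j)
  have hDne : D ≠ 0 := by
    rw [hD]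
    intro h
    rw [Finset.lcm_eq_zero_iff] at h
    obtain ⟨j, _, hj⟩ := h
    exact (hd j).ne' hj
  set g := Finset.univ.gcd (fun j => D / d j) with hg
  have hgr : ∀ j, g ∣ D / d j := fun j => Finset.gcd_dvd (Finset.mem_univ j)
  have hrd : ∀ j, D / d j * d j = D := fun j => Nat.div_mul_cancel (hdD j)
  set j0 : Fin m := ⟨0, hm⟩
  have hgD : g ∣ D := (hgr j0).trans (Dvd.intro _ (hrd j0))
  have hgne : g ≠ 0 := by
    intro h
    rw [h] at hgr
    have := Nat.eq_zero_of_zero_dvd (hgr j0)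
    rw [← hrd j0, this, zero_mul] at hDne
    exact hDne rfl
  have hDdvd : D ∣ D / g := by
    have key : Finset.univ.lcm d ∣ D / g := by
      refine Finset.lcm_dvd fun j _ => ?_
      obtain ⟨t, ht⟩ := hgr j
      refine ⟨t, ?_⟩
      have hth : D = g * (t * d j) := by rw [← hrd j, ht]; ring
      rw [hth, Nat.mul_div_cancel_left _ (Nat.pos_of_ne_zero hgne)]
      exact Nat.mul_comm _ _
    rw [← hD] at key
    exact key
  have hdvdD : D / g ∣ D := Nat.div_dvd_of_dvd hgD
  have heq : D / g = D := Nat.dvd_antisymm hdvdD hDdvd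
  have := Nat.div_mul_cancel hgD
  rw [heq] at this
  nth_rewrite 2 [← mul_one D] at this
  exact Nat.eq_of_mul_eq_mul_left (Nat.pos_of_ne_zero hDne) (by linarith [this] : D * g = D * 1)

lemma D_ne_zero {m : ℕ} (d : Fin m → ℕ) (hd : ∀ j, 0 < d j) (D : ℕ)
    (hD : D = Finset.univ.lcm d) : D ≠ 0 := by
  rw [hD]
  intro h
  rw [Finset.lcm_eq_zero_iff] at h
  obtain ⟨j, _, hj⟩ := h
  exact (hd j).ne' hj

lemma iff_part {W : Type*} [CommRing W] [IsDomain W] {m : ℕ} (d : Fin m → ℕ)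
    (hd : ∀ j, 0 < d j) (D : ℕ) (hD : D = Finset.univ.lcm d)
    (ζ ζ' : Fin m → W) (hζ : ∀ j, ζ j ^ d j = 1) (hζ' : ∀ j, ζ' j ^ d j = 1) :
    ({F : MvPowerSeries (Fin m) W | substCoeff (fun j => D / d j) ζ F = 0} =
        {F : MvPowerSeries (Fin m) W | substCoeff (fun j => D / d j) ζ' F = 0} ↔
      ∃ ε : W, ε ^ D = 1 ∧ ∀ j, ζ' j = ε ^ (D / d j) * ζ j) := by
  have hdD : ∀ j, d j ∣ D := fun j => hD ▸ Finset.dvd_lcm (Finset.mem_univ j)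
  have hDne : D ≠ 0 := D_ne_zero d hd D hD
  have hDr : ∀ j, D / d j * d j = D := fun j => Nat.div_mul_cancel (hdD j)
  have hr1 : ∀ j, 1 ≤ D / d j := by
    intro j
    rcases Nat.eq_zero_or_pos (D / d j) with h | h
    · exfalso; rw [← hDr j, h, zero_mul] at hDne; exact hDne rfl
    · exact h
  constructor
  · intro h
    rcases Nat.eq_zero_or_pos m with hm | hm
    · subst hm
      exact ⟨1, one_pow D, fun j => j.elim0⟩
    · exact exists_eps hm d (fun j => D / d j) hd D hDr
        (gcd_quot_eq_one hm d hd D hD) ζ ζ' hζ hζ'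
        (fun j k => ker_rel _ hr1 ζ ζ' h j k (D / d k) (D / d j) (Nat.mul_comm _ _))
  · rintro ⟨ε, hεD, hε⟩
    have hεu : IsUnit ε := IsUnit.of_mul_eq_one (ε ^ (D - 1))
      (by rw [← pow_succ', Nat.sub_add_cancel (Nat.pos_of_ne_zero hDne)]; exact hεD)
    have : ζ' = fun j => ε ^ (D / d j) * ζ j := funext hε
    rw [this]
    exact (ker_twist _ ζ ε hεu).symm

lemma count_part {W : Type*} [CommRing W] [IsDomain W] {m : ℕ} (d : Fin m → ℕ) (hd : ∀ j, 0 < d j) (D : ℕ)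
    (hD : D = Finset.univ.lcm d) (ω : W) (hω : IsPrimitiveRoot ω D) :
    Set.ncard {K : Set (MvPowerSeries (Fin m) W) |
        ∃ ζ : Fin m → W, (∀ j, ζ j ^ d j = 1) ∧
          K = {F : MvPowerSeries (Fin m) W | substCoeff (fun j => D / d j) ζ F = 0}} =
      (∏ j, d j) / D := by
  classical
  have hdD : ∀ j, d j ∣ D := fun j => hD ▸ Finset.dvd_lcm (Finset.mem_univ j)
  have hDne : D ≠ 0 := D_ne_zero d hd D hD
  haveI : NeZero D := ⟨hDne⟩
  haveI hdz : ∀ j, NeZero (d j) := fun j => ⟨(hd j).ne'⟩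
  have hDr : ∀ j, D / d j * d j = D := fun j => Nat.div_mul_cancel (hdD j)
  have hrne : ∀ j, D / d j ≠ 0 := by
    intro j h
    rw [← hDr j, h, zero_mul] at hDne
    exact hDne rfl
  have hmod : ∀ x : ℕ, ω ^ x = ω ^ (x % D) := by
    intro x
    conv_lhs => rw [← Nat.div_add_mod x D]
    rw [pow_add, pow_mul, hω.pow_eq_one, one_pow, one_mul]
  have hpow : ∀ {x y : ℕ}, x ≡ y [MOD D] → ω ^ x = ω ^ y := by
    intro x y h
    rw [hmod x, hmod y, h]
  have hpow' : ∀ {x y : ℕ}, ω ^ x = ω ^ y → x ≡ y [MOD D] := by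
    intro x y h
    rw [hmod x, hmod y] at h
    exact hω.pow_inj (Nat.mod_lt _ (Nat.pos_of_ne_zero hDne))
      (Nat.mod_lt _ (Nat.pos_of_ne_zero hDne)) h
  set φ : ZMod D →+ (∀ j, ZMod (d j)) :=
    AddMonoidHom.mk' (fun e j => ZMod.castHom (hdD j) (ZMod (d j)) e)
      (by intro a b; funext j; simp [map_add]) with hφ
  have hφ_nat : ∀ (c : ℕ) (j : Fin m), φ (c : ZMod D) j = (c : ZMod (d j)) := by
    intro c j
    simp [hφ]
    exact ZMod.cast_natCast (hdD j) c
  have hφinj : Function.Injective φ := by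
    rw [injective_iff_map_eq_zero]
    intro e he
    have hdvd : ∀ j, d j ∣ e.val := by
      intro j
      have h2 : ((e.val : ℕ) : ZMod D) = e := ZMod.natCast_rightInverse e
      have h1 : φ ((e.val : ℕ) : ZMod D) j = 0 := by
        rw [h2]; exact congrFun he j
      rw [hφ_nat] at h1
      exact (ZMod.natCast_eq_zero_iff _ _).mp h1
    have hdl : D ∣ e.val := by
      have hl : Finset.univ.lcm d ∣ e.val := Finset.lcm_dvd fun j _ => hdvd j
      rw [← hD] at hl
      exact hl
    have hv0 := Nat.eq_zero_of_dvd_of_lt hdl (ZMod.val_lt e)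
    have h2 : ((e.val : ℕ) : ZMod D) = e := ZMod.natCast_rightInverse e
    rw [← h2, hv0]
    simp
  set H := φ.range with hH
  set zet : (∀ j, ZMod (d j)) → (Fin m → W) :=
    fun a j => ω ^ (D / d j * (a j).val) with hzet
  have hzpow : ∀ a j, zet a j ^ d j = 1 := by
    intro a j
    simp only [hzet]
    rw [← pow_mul, mul_right_comm, hDr j, pow_mul, hω.pow_eq_one, one_pow]
  set f : (∀ j, ZMod (d j)) → Set (MvPowerSeries (Fin m) W) :=
    fun a => {F | substCoeff (fun j => D / d j) (zet a) F = 0} with hf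
  have key : ∀ a a', f a = f a' ↔ ∃ e : ZMod D, a' = a + φ e := by
    intro a a'
    simp only [hf]
    rw [iff_part d hd D hD (zet a) (zet a') (hzpow a) (hzpow a')]
    constructor
    · rintro ⟨ε, hε1, hεj⟩
      obtain ⟨c, hclt, hcε⟩ := hω.eq_pow_of_pow_eq_one hε1
      refine ⟨(c : ZMod D), funext fun j => ?_⟩
      have hj := hεj j
      rw [← hcε] at hj
      simp only [hzet] at hj
      have h1 : ω ^ (D / d j * (a' j).val) = ω ^ (D / d j * (c + (a j).val)) := by
        rw [hj, ← pow_mul, ← pow_add]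
        congr 1
        ring
      have h2 := hpow' h1
      have h2' : D / d j * (a' j).val ≡ D / d j * (c + (a j).val)
          [MOD D / d j * d j] := by rw [hDr j]; exact h2
      have h3 : (a' j).val ≡ c + (a j).val [MOD d j] :=
        Nat.ModEq.mul_left_cancel' (hrne j) h2'
      have h4 : ((a' j).val : ZMod (d j)) = ((c + (a j).val : ℕ) : ZMod (d j)) :=
        (ZMod.natCast_eq_natCast_iff _ _ _).mpr h3
      rw [ZMod.natCast_rightInverse (a' j)] at h4
      push_cast at h4
      rw [ZMod.natCast_rightInverse (a j)] at h4
      rw [Pi.add_apply, hφ_nat c j, h4]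
      ring
    · rintro ⟨e, rfl⟩
      refine ⟨ω ^ e.val, ?_, fun j => ?_⟩
      · rw [← pow_mul, mul_comm, pow_mul, hω.pow_eq_one, one_pow]
      · simp only [hzet, Pi.add_apply]
        have hφe : φ e j = ((e.val : ℕ) : ZMod (d j)) := by
          have h2 : ((e.val : ℕ) : ZMod D) = e := ZMod.natCast_rightInverse e
          have := hφ_nat e.val j
          rw [h2] at this
          exact this
        have hval : (a j + φ e j).val ≡ (a j).val + e.val [MOD d j] := by
          rw [ZMod.val_add, hφe, ZMod.val_natCast]
          calc ((a j).val + e.val % d j) % d j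
              ≡ (a j).val + e.val % d j [MOD d j] := Nat.mod_modEq _ _
            _ ≡ (a j).val + e.val [MOD d j] :=
              Nat.ModEq.add_left _ (Nat.mod_modEq _ _)
        have hexp' : D / d j * (a j + φ e j).val ≡ D / d j * ((a j).val + e.val)
            [MOD D / d j * d j] := Nat.ModEq.mul_left' _ hval
        rw [hDr j] at hexp'
        have hexp := hexp'
        rw [hpow hexp, ← pow_mul, ← pow_add]
        congr 1
        ring
  have hrange : {K : Set (MvPowerSeries (Fin m) W) |
      ∃ ζ : Fin m → W, (∀ j, ζ j ^ d j = 1) ∧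
        K = {F : MvPowerSeries (Fin m) W | substCoeff (fun j => D / d j) ζ F = 0}} =
      Set.range f := by
    ext K
    constructor
    · rintro ⟨ζ, hζ, rfl⟩
      have hprim : ∀ j, IsPrimitiveRoot (ω ^ (D / d j)) (d j) := fun j =>
        IsPrimitiveRoot.pow (Nat.pos_of_ne_zero hDne) hω (hDr j).symm
      choose c hclt hceq using fun j => (hprim j).eq_pow_of_pow_eq_one (hζ j)
      have hza : zet (fun j => (c j : ZMod (d j))) = ζ := funext fun j => by
        simp only [hzet]
        rw [ZMod.val_natCast, Nat.mod_eq_of_lt (hclt j), pow_mul]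
        exact hceq j
      exact ⟨fun j => (c j : ZMod (d j)), by simp only [hf]; rw [hza]⟩
    · rintro ⟨a, rfl⟩
      exact ⟨zet a, hzpow a, by simp only [hf]⟩
  -- cardinalities
  have hcardA : Nat.card (∀ j, ZMod (d j)) = ∏ j, d j := by
    rw [Nat.card_pi]
    exact Finset.prod_congr rfl fun j _ => Nat.card_zmod (d j)
  have hcardH : Nat.card H = D := by
    rw [← Nat.card_zmod D]
    exact (Nat.card_congr (AddMonoidHom.ofInjective hφinj).toEquiv).symm
  have hlag := AddSubgroup.card_eq_card_quotient_mul_card_addSubgroup H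
  rw [hcardA, hcardH] at hlag
  -- quotient lift
  have hresp : ∀ a b : (∀ j, ZMod (d j)),
      (QuotientAddGroup.leftRel H) a b → f a = f b := by
    intro a b hab
    rw [QuotientAddGroup.leftRel_apply] at hab
    obtain ⟨e, he⟩ := hab
    refine (key a b).mpr ⟨e, ?_⟩
    rw [he, add_neg_cancel_left]
  set g : ((∀ j, ZMod (d j)) ⧸ H) → Set (MvPowerSeries (Fin m) W) :=
    Quotient.lift f hresp with hg
  have hginj : Function.Injective g := by
    intro x y
    refine QuotientAddGroup.induction_on x fun a => QuotientAddGroup.induction_on y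
      fun b hab => ?_
    have hfab : f a = f b := hab
    obtain ⟨e, he⟩ := (key a b).mp hfab
    refine (QuotientAddGroup.eq).mpr ⟨e, ?_⟩
    rw [he, neg_add_cancel_left]
  have hrg : Set.range g = Set.range f := by
    have hsurj : Function.Surjective
        (QuotientAddGroup.mk : (∀ j, ZMod (d j)) → (∀ j, ZMod (d j)) ⧸ H) :=
      fun x => QuotientAddGroup.induction_on x fun a => ⟨a, rfl⟩
    calc Set.range g = Set.range (g ∘ QuotientAddGroup.mk) := (hsurj.range_comp g).symm
      _ = Set.range f := rfl
  rw [hrange, ← hrg, ← Nat.card_coe_set_eq, Nat.card_range_of_injective hginj]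
  have hq : Nat.card ((∀ j, ZMod (d j)) ⧸ H) = (∏ j, d j) / D := by
    rw [hlag]
    rw [Nat.mul_div_cancel _ (Nat.pos_of_ne_zero hDne)]
  rw [← hq]

/-- Let `W` be a Noetherian integrally closed domain, `d₁, …, d_m` positive integers,
`D = lcm (d₁, …, d_m)`, and assume `W` contains a primitive `D`-th root of unity.
For tuples `ζ` with `ζ_j ^ (d_j) = 1` let `φ_ζ : W[[τ₁, …, τ_m]] → W[[t]]` be the
substitution `τ_j ↦ ζ_j t^(D / d_j)`.  Then `ker φ_ζ = ker φ_ζ'` iff there is `ε ∈ W` with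
`ε ^ D = 1` and `ζ'_j = ε ^ (D / d_j) · ζ_j` for all `j`; consequently the number of
distinct kernels is `(∏ d_j) / D`. -/
theorem stmt7 {W : Type*} [CommRing W] [IsDomain W] [IsNoetherianRing W]
    [IsIntegrallyClosed W] (m : ℕ) (d : Fin m → ℕ) (hd : ∀ j, 0 < d j)
    (D : ℕ) (hD : D = Finset.univ.lcm d) (ω : W) (hω : IsPrimitiveRoot ω D) :
    (∀ ζ ζ' : Fin m → W, (∀ j, ζ j ^ d j = 1) → (∀ j, ζ' j ^ d j = 1) →
      ({F : MvPowerSeries (Fin m) W | substCoeff (fun j => D / d j) ζ F = 0} =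
          {F : MvPowerSeries (Fin m) W | substCoeff (fun j => D / d j) ζ' F = 0} ↔
        ∃ ε : W, ε ^ D = 1 ∧ ∀ j, ζ' j = ε ^ (D / d j) * ζ j)) ∧
    Set.ncard {K : Set (MvPowerSeries (Fin m) W) |
        ∃ ζ : Fin m → W, (∀ j, ζ j ^ d j = 1) ∧
          K = {F : MvPowerSeries (Fin m) W | substCoeff (fun j => D / d j) ζ F = 0}} =
      (∏ j, d j) / D := by
  exact ⟨fun ζ ζ' hζ hζ' => iff_part d hd D hD ζ ζ' hζ hζ', count_part d hd D hD ω hω⟩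
end

section
/- Let W be a commutative ring, r_1, …, r_m positive integers with gcd(r_1, …, r_m) = 1, and u_1, …, u_m units of W. Let φ : W[[τ_1, …, τ_m]] → W[[t]] be the substitution W-algebra homomorphism determined by φ(τ_j) = u_j·t^{r_j}. Then W[[t]] is a finitely generated module over the image of φ; in particular, every element of W[[t]] is integral over the image of φ. -/
theorem bezout_finset {ι : Type*} [DecidableEq ι] (s : Finset ι) (f : ι → ℕ) :
    ∃ x : ι → ℤ, ((s.gcd f : ℕ) : ℤ) = ∑ j ∈ s, x j * f j := by
  induction s using Finset.induction_on with
  | empty => exact ⟨0, by simp⟩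
  | @insert a s ha ih =>
    obtain ⟨x, hx⟩ := ih
    refine ⟨fun j => if j = a then Nat.gcdA (f a) (s.gcd f) else Nat.gcdB (f a) (s.gcd f) * x j, ?_⟩
    rw [Finset.gcd_insert, Finset.sum_insert ha]
    have : GCDMonoid.gcd (f a) (s.gcd f) = Nat.gcd (f a) (s.gcd f) := rfl
    rw [this, Nat.gcd_eq_gcd_ab]
    simp only [if_pos rfl]
    rw [Finset.sum_congr rfl (fun j hj => by rw [if_neg (by rintro rfl; exact ha hj)])]
    push_cast
    rw [Finset.sum_congr rfl (fun j hj => (mul_assoc _ _ _ : (Nat.gcdB (f a) (s.gcd f) * x j) * f j = _))]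
    rw [← Finset.mul_sum, ← hx]
    ring

theorem semigroup_cofinite {m : ℕ} (r : Fin m → ℕ) (hr : ∀ j, 0 < r j)
    (hgcd : Finset.univ.gcd r = 1) :
    ∃ N : ℕ, ∀ k, N ≤ k → ∃ c : Fin m → ℕ, ∑ j, c j * r j = k := by
  obtain ⟨x, hx⟩ := bezout_finset Finset.univ r
  rw [hgcd] at hx
  set p : Fin m → ℕ := fun j => (x j).toNat with hp
  set q : Fin m → ℕ := fun j => (-(x j)).toNat with hq
  set a : ℕ := ∑ j, p j * r j with hadef
  set b : ℕ := ∑ j, q j * r j with hbdef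
  have hab : a = b + 1 := by
    have h1 : (a : ℤ) - b = 1 := by
      rw [hadef, hbdef, Nat.cast_sum, Nat.cast_sum, ← Finset.sum_sub_distrib]
      rw [show (1 : ℤ) = ∑ j, x j * r j from by exact_mod_cast hx]
      refine Finset.sum_congr rfl fun j _ => ?_
      rw [Nat.cast_mul, Nat.cast_mul]
      have hxx : (((x j).toNat : ℤ)) - (((-(x j)).toNat : ℤ)) = x j := by omega
      rw [← hxx]; ring
    omega
  refine ⟨b * b, fun k hk => ?_⟩
  rcases Nat.eq_zero_or_pos b with hb | hb
  · refine ⟨fun j => k * p j, ?_⟩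
    have : ∑ j, k * p j * r j = k * a := by
      rw [hadef, Finset.mul_sum]
      exact Finset.sum_congr rfl fun j _ => by ring
    rw [this, hab, hb]; ring
  · set s := k % b with hs
    set t := k / b with ht
    have hsb : s < b := Nat.mod_lt _ hb
    have hst : s ≤ t := by
      have : b ≤ t := by
        rw [ht, Nat.le_div_iff_mul_le hb]
        exact hk
      omega
    refine ⟨fun j => s * p j + (t - s) * q j, ?_⟩
    have h1 : ∑ j, (s * p j + (t - s) * q j) * r j = s * a + (t - s) * b := by
      rw [hadef, hbdef, Finset.mul_sum, Finset.mul_sum, ← Finset.sum_add_distrib]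
      exact Finset.sum_congr rfl fun j _ => by ring
    rw [h1, hab]
    have h2 : s + t * b = k := Nat.mod_add_div' k b
    have h3 : (t - s) * b = t * b - s * b := Nat.sub_mul t s b
    have h4 : s * b ≤ t * b := Nat.mul_le_mul_right b hst
    calc s * (b + 1) + (t - s) * b = s * b + s + (t * b - s * b) := by rw [h3]; ring
      _ = s + t * b := by omega
      _ = k := h2

open scoped Classical in
theorem substCoeff_coeff_eq_zero {W : Type*} [CommRing W] {m : ℕ} (r : Fin m → ℕ) (u : Fin m → W)
    (F : MvPowerSeries (Fin m) W) (k : ℕ)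
    (hk : ¬ ∃ α : Fin m →₀ ℕ, ∑ j, α j * r j = k) :
    PowerSeries.coeff k (substCoeff r u F) = 0 := by
  rw [substCoeff, PowerSeries.coeff_mk]
  exact Finset.sum_eq_zero fun α hα => absurd ⟨α, (Finset.mem_filter.mp hα).2⟩ hk

open scoped Classical in
theorem substCoeff_surj {W : Type*} [CommRing W] {m : ℕ} (r : Fin m → ℕ) (hr : ∀ j, 0 < r j)
    (u : Fin m → Wˣ) (a : PowerSeries W)
    (ha : ∀ k, ¬ (∃ α : Fin m →₀ ℕ, ∑ j, α j * r j = k) → PowerSeries.coeff k a = 0) :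
    ∃ F, substCoeff r (fun j => (u j : W)) F = a := by
  set ρ : ℕ → (Fin m →₀ ℕ) :=
    fun k => if h : ∃ α : Fin m →₀ ℕ, ∑ j, α j * r j = k then h.choose else 0 with hρdef
  have hρ : ∀ k, (∃ α : Fin m →₀ ℕ, ∑ j, α j * r j = k) → ∑ j, ρ k j * r j = k := by
    intro k h
    simp only [hρdef, dif_pos h]
    exact h.choose_spec
  refine ⟨fun β => if ρ (∑ j, β j * r j) = β then
      PowerSeries.coeff (∑ j, β j * r j) a * ∏ j, (((u j)⁻¹ : Wˣ) : W) ^ β j else 0, ?_⟩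
  ext k
  unfold substCoeff
  rw [PowerSeries.coeff_mk]
  by_cases h : ∃ α : Fin m →₀ ℕ, ∑ j, α j * r j = k
  · have hmem : ρ k ∈ (Finset.Iic ((Finsupp.equivFunOnFinite).symm fun _ => k)).filter
        (fun α : Fin m →₀ ℕ => ∑ j, α j * r j = k) := by
      refine Finset.mem_filter.mpr ⟨Finset.mem_Iic.mpr (Finsupp.le_def.mpr fun j => ?_), hρ k h⟩
      have h1 : ρ k j ≤ ρ k j * r j := Nat.le_mul_of_pos_right _ (hr j)
      have h2 : ρ k j * r j ≤ ∑ i, ρ k i * r i :=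
        Finset.single_le_sum (f := fun i => ρ k i * r i) (fun i _ => Nat.zero_le _)
          (Finset.mem_univ j)
      have h3 := hρ k h
      simp only [Finsupp.coe_equivFunOnFinite_symm]
      omega
    rw [Finset.sum_eq_single_of_mem (ρ k) hmem ?_]
    · erw [MvPowerSeries.coeff_apply]
      simp only [hρ k h, if_true, eq_self_iff_true]
      have hu : (∏ j, (((u j)⁻¹ : Wˣ) : W) ^ ρ k j) * ∏ j, ((u j : W)) ^ ρ k j = 1 := by
        rw [← Finset.prod_mul_distrib]
        refine Finset.prod_eq_one fun j _ => ?_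
        rw [← mul_pow, Units.inv_mul, one_pow]
      rw [mul_assoc, hu, mul_one]
    · intro β hβ hne
      erw [MvPowerSeries.coeff_apply]
      have : ∑ j, β j * r j = k := (Finset.mem_filter.mp hβ).2
      rw [this, if_neg (fun hc => hne hc.symm), zero_mul]
  · rw [ha k h]
    exact Finset.sum_eq_zero fun α hα => absurd ⟨α, (Finset.mem_filter.mp hα).2⟩ h

/-- Decomposition of a power series along `t^0, …, t^{N'-1}` with coefficient series
supported on `{0} ∪ [N', ∞)`. -/
theorem decomp {W : Type*} [CommRing W] {N' : ℕ} (hN' : 0 < N') (h : PowerSeries W) :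
    h = ∑ i : Fin N',
      (if (i : ℕ) = 0 then
          PowerSeries.mk (fun s => if s = 0 ∨ N' ≤ s then PowerSeries.coeff s h else 0)
        else PowerSeries.C (PowerSeries.coeff i h)) * (PowerSeries.X : PowerSeries W) ^ (i : ℕ) := by
  ext k
  rw [map_sum]
  by_cases hk : k < N'
  · rw [Finset.sum_eq_single_of_mem (⟨k, hk⟩ : Fin N') (Finset.mem_univ _)]
    · rw [PowerSeries.coeff_mul_X_pow', if_pos le_rfl, Nat.sub_self]
      by_cases hk0 : k = 0
      · subst hk0
        simp [PowerSeries.coeff_mk]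
      · rw [if_neg hk0, PowerSeries.coeff_C, if_pos rfl]
    · intro i _ hi
      have hikne : (i : ℕ) ≠ k := fun hc => hi (Fin.ext hc)
      by_cases hi0 : (i : ℕ) = 0
      · rw [if_pos hi0, PowerSeries.coeff_mul_X_pow']
        split_ifs with hik
        · rw [PowerSeries.coeff_mk, if_neg (by omega)]
        · rfl
      · rw [if_neg hi0, PowerSeries.coeff_mul_X_pow']
        split_ifs with hik
        · rw [PowerSeries.coeff_C, if_neg (by omega)]
        · rfl
  · rw [Finset.sum_eq_single_of_mem (⟨0, hN'⟩ : Fin N') (Finset.mem_univ _)]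
    · rw [PowerSeries.coeff_mul_X_pow', if_pos (Nat.zero_le _), Nat.sub_zero, if_pos rfl,
        PowerSeries.coeff_mk, if_pos (Or.inr (by omega))]
    · intro i _ hi
      have hi0 : (i : ℕ) ≠ 0 := fun hc => hi (Fin.ext hc)
      rw [PowerSeries.coeff_mul_X_pow', if_pos (by omega : (i:ℕ) ≤ k), if_neg hi0,
        PowerSeries.coeff_C, if_neg (by have := i.isLt; omega)]


set_option maxHeartbeats 1000000 in
set_option synthInstance.maxHeartbeats 1000000 in
/-- Let `W` be a commutative ring, `r₁, …, r_m` positive integers with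
`gcd (r₁, …, r_m) = 1` and `u₁, …, u_m` units of `W`, and let
`φ : W[[τ₁, …, τ_m]] → W[[t]]` be the substitution homomorphism `τ_j ↦ u_j t^{r_j}`.
Then `W[[t]]` is a finitely generated module over the image of `φ`
(there are finitely many `g i ∈ W[[t]]` such that every `h` is of the form
`∑ φ (F i) * g i`); in particular every element of `W[[t]]` is integral over the image
(it satisfies a monic polynomial equation with coefficients in the image of `φ`). -/
theorem stmt9 {W : Type*} [CommRing W] (m : ℕ) (r : Fin m → ℕ) (hr : ∀ j, 0 < r j)
    (hgcd : Finset.univ.gcd r = 1) (u : Fin m → Wˣ) :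
    (∃ (N : ℕ) (g : Fin N → PowerSeries W), ∀ h : PowerSeries W,
        ∃ F : Fin N → MvPowerSeries (Fin m) W,
          h = ∑ i, substCoeff r (fun j => (u j : W)) (F i) * g i) ∧
    (∀ h : PowerSeries W, ∃ n : ℕ, 0 < n ∧ ∃ c : Fin n → MvPowerSeries (Fin m) W,
        h ^ n + ∑ i, substCoeff r (fun j => (u j : W)) (c i) * h ^ (i : ℕ) = 0) := by
  classical
  obtain ⟨N, hN⟩ := semigroup_cofinite r hr hgcd
  set N' := N + 1 with hN'def
  have hN' : 0 < N' := Nat.succ_pos N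
  have hS0 : ∃ α : Fin m →₀ ℕ, ∑ j, α j * r j = 0 := ⟨0, by simp⟩
  have hSbig : ∀ k, N' ≤ k → ∃ α : Fin m →₀ ℕ, ∑ j, α j * r j = k := by
    intro k hk
    obtain ⟨c, hc⟩ := hN k (by omega)
    exact ⟨Finsupp.equivFunOnFinite.symm c, by
      simpa [Finsupp.coe_equivFunOnFinite_symm] using hc⟩
  have key : ∀ h : PowerSeries W, ∃ a : Fin N' → PowerSeries W,
      (∀ i k, ¬(∃ α : Fin m →₀ ℕ, ∑ j, α j * r j = k) → PowerSeries.coeff k (a i) = 0) ∧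
      h = ∑ i, a i * (PowerSeries.X : PowerSeries W) ^ (i : ℕ) := by
    intro h
    refine ⟨fun i => if (i : ℕ) = 0 then
        PowerSeries.mk (fun s => if s = 0 ∨ N' ≤ s then PowerSeries.coeff s h else 0)
      else PowerSeries.C (PowerSeries.coeff i h), ?_, decomp hN' h⟩
    intro i k hk
    dsimp only
    by_cases hi0 : (i : ℕ) = 0
    · rw [if_pos hi0, PowerSeries.coeff_mk, if_neg ?_]
      rintro (rfl | hbig)
      · exact hk hS0
      · exact hk (hSbig k hbig)
    · rw [if_neg hi0, PowerSeries.coeff_C, if_neg ?_]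
      rintro rfl
      exact hk hS0
  constructor
  · refine ⟨N', fun i => (PowerSeries.X : PowerSeries W) ^ (i : ℕ), fun h => ?_⟩
    obtain ⟨a, ha, hdec⟩ := key h
    choose F hF using fun i => substCoeff_surj r hr u (a i) (ha i)
    refine ⟨F, ?_⟩
    rw [hdec]
    exact Finset.sum_congr rfl fun i _ => by rw [hF i]
  · rcases subsingleton_or_nontrivial W with hW | hW
    · exact fun h => ⟨1, one_pos, fun _ => 0, Subsingleton.elim _ _⟩
    · set A : Subring (PowerSeries W) :=
        { carrier := {h : PowerSeries W |
            ∀ k, ¬(∃ α : Fin m →₀ ℕ, ∑ j, α j * r j = k) → PowerSeries.coeff k h = 0}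
          zero_mem' := fun k _ => by simp
          one_mem' := fun k hk => by
            rw [PowerSeries.coeff_one, if_neg (by rintro rfl; exact hk hS0)]
          add_mem' := fun {x y} hx hy k hk => by
            rw [map_add, hx k hk, hy k hk, add_zero]
          neg_mem' := fun {x} hx k hk => by
            rw [map_neg, hx k hk, neg_zero]
          mul_mem' := fun {x y} hx hy k hk => by
            rw [PowerSeries.coeff_mul]
            refine Finset.sum_eq_zero fun p hp => ?_
            have hpk : p.1 + p.2 = k := Finset.HasAntidiagonal.mem_antidiagonal.mp hp
            by_cases h1 : ∃ α : Fin m →₀ ℕ, ∑ j, α j * r j = p.1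
            · by_cases h2 : ∃ β : Fin m →₀ ℕ, ∑ j, β j * r j = p.2
              · exfalso
                obtain ⟨α, hα⟩ := h1
                obtain ⟨β, hβ⟩ := h2
                refine hk ⟨α + β, ?_⟩
                rw [← hpk, ← hα, ← hβ, ← Finset.sum_add_distrib]
                exact Finset.sum_congr rfl fun j _ => by
                  rw [Finsupp.add_apply, add_mul]
              · rw [hy p.2 h2, mul_zero]
            · rw [hx p.1 h1, zero_mul] } with hAdef
      haveI hA : Nontrivial A := nontrivial_of_ne 0 1 fun hc => by
        have : (0 : PowerSeries W) = 1 := congrArg Subtype.val hc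
        exact zero_ne_one this
      haveI hfin : Module.Finite A (PowerSeries W) := by
        constructor
        refine ⟨Finset.univ.image (fun i : Fin N' => (PowerSeries.X : PowerSeries W) ^ (i : ℕ)), ?_⟩
        rw [Finset.coe_image, Finset.coe_univ, Set.image_univ, eq_top_iff]
        rintro h -
        obtain ⟨a, ha, hdec⟩ := key h
        rw [hdec]
        refine Submodule.sum_mem _ fun i _ => ?_
        have hmem : a i ∈ A := ha i
        have heq : a i * (PowerSeries.X : PowerSeries W) ^ (i : ℕ)
            = (⟨a i, hmem⟩ : A) • ((PowerSeries.X : PowerSeries W) ^ (i : ℕ)) := by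
          rw [Algebra.smul_def]; rfl
        rw [heq]
        exact Submodule.smul_mem _ _ (Submodule.subset_span ⟨i, rfl⟩)
      intro h
      obtain ⟨p, hpm, hpev⟩ := IsIntegral.of_finite A h
      set q := p * Polynomial.X with hqdefn
      have hqm : q.Monic := hpm.mul Polynomial.monic_X
      have hqdeg : q.natDegree = p.natDegree + 1 := Polynomial.natDegree_mul_X hpm.ne_zero
      set n := q.natDegree with hndef
      have hn : 0 < n := by omega
      have hqev : Polynomial.eval₂ (algebraMap A (PowerSeries W)) h q = 0 := by
        rw [hqdefn, Polynomial.eval₂_mul, hpev, zero_mul]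
      have hsum := Polynomial.eval₂_eq_sum_range (p := q) (algebraMap A (PowerSeries W)) h
      choose c hc using fun i : Fin n =>
        substCoeff_surj r hr u ((q.coeff i : A) : PowerSeries W) (q.coeff i).2
      refine ⟨n, hn, c, ?_⟩
      have htop : q.coeff n = 1 := hqm.coeff_natDegree
      calc h ^ n + ∑ i : Fin n, substCoeff r (fun j => (u j : W)) (c i) * h ^ (i : ℕ)
          = h ^ n + ∑ i ∈ Finset.range n, algebraMap A (PowerSeries W) (q.coeff i) * h ^ i := by
            rw [← Fin.sum_univ_eq_sum_range (fun i => algebraMap A (PowerSeries W) (q.coeff i) * h ^ i) n]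
            exact congrArg _ (Finset.sum_congr rfl fun i _ => by rw [hc i]; rfl)
        _ = ∑ i ∈ Finset.range (n + 1), algebraMap A (PowerSeries W) (q.coeff i) * h ^ i := by
            rw [Finset.sum_range_succ, htop, map_one, one_mul, add_comm]
        _ = 0 := by rw [← hsum, hqev]
end

section
/- Let (R, m) be a Noetherian local ring, complete for the m-adic topology, let π ∈ m, let e ≥ 2 be an integer, let α be an integer with 0 < α < e, and set β = e − α. Let A = R[[x,y]]/(xy − π) and B = R[[u,v]]/(uv − π^e), and let ι : B → A be the R-algebra homomorphism sending the class of u to x̄^e and the class of v to ȳ^e. Then for all F, G ∈ B, the equality ȳ^β·ι(F) = x̄^α·ι(G) holds in A if and only if there exist Φ, Ψ ∈ B with F = ū·Φ + π^α·Ψ and G = π^β·Φ + v̄·Ψ. -/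
open scoped Classical in
/-- The monomial substitution `ι : R[[u,v]] → R[[x,y]]`, `u ↦ x^e`, `v ↦ y^e`
(variable `0` is `u`/`x`, variable `1` is `v`/`y`), given on coefficients by
reindexing the exponents. -/
noncomputable def monSubst (R : Type*) [CommRing R] (e : ℕ)
    (F : MvPowerSeries (Fin 2) R) : MvPowerSeries (Fin 2) R :=
  fun n => if ∀ i, e ∣ n i then
    MvPowerSeries.coeff (R := R) (Finsupp.mapRange (· / e) (Nat.zero_div e) n) F else 0

namespace Stmt10Aux

open Finset MvPowerSeries

variable {R : Type*} [CommRing R]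

/-- the exponent `(i,j)` as a `Fin 2 →₀ ℕ` -/
noncomputable def pt (i j : ℕ) : Fin 2 →₀ ℕ := Finsupp.single 0 i + Finsupp.single 1 j

@[simp] lemma pt_fst (i j : ℕ) : pt i j 0 = i := by simp [pt]
@[simp] lemma pt_snd (i j : ℕ) : pt i j 1 = j := by simp [pt]

lemma eq_pt (n : Fin 2 →₀ ℕ) : n = pt (n 0) (n 1) := by
  ext i; fin_cases i <;> simp

lemma pt_le_pt {a b i j : ℕ} : pt a b ≤ pt i j ↔ a ≤ i ∧ b ≤ j := by
  constructor
  · intro h; exact ⟨by simpa using h 0, by simpa using h 1⟩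
  · rintro ⟨h1, h2⟩ i'; fin_cases i'
    · simpa using h1
    · simpa using h2

lemma pt_sub_pt (a b i j : ℕ) : pt i j - pt a b = pt (i - a) (j - b) := by
  ext k; fin_cases k <;> simp [Finsupp.tsub_apply]

lemma dvd_window {e m : ℕ} (h : e ∣ m) (h1 : 0 < m) (h2 : m < 2*e) : m = e := by
  obtain ⟨t, rfl⟩ := h
  rcases Nat.lt_or_ge t 2 with ht | ht
  · interval_cases t <;> omega
  · exfalso; have : e * 2 ≤ e * t := Nat.mul_le_mul_left e ht; omega

lemma exists_adicSum (I : Ideal R) [IsAdicComplete I R] {ρ : R} (hρ : ρ ∈ I) (c : ℕ → R) :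
    ∃ S : R, ∀ M, S - ∑ m ∈ range M, ρ ^ m * c m ∈ I ^ M := by
  have key : ∀ {m n : ℕ}, m ≤ n → (∑ k ∈ range m, ρ ^ k * c k) ≡ (∑ k ∈ range n, ρ ^ k * c k)
      [SMOD (I ^ m • ⊤ : Submodule R R)] := by
    intro m n hmn
    rw [SModEq.sub_mem]
    have h1 : ∑ k ∈ range m, ρ ^ k * c k - ∑ k ∈ range n, ρ ^ k * c k
        = -∑ k ∈ Ico m n, ρ ^ k * c k := by
      rw [show range n = range m ∪ Ico m n by
        rw [Finset.range_eq_Ico, Finset.range_eq_Ico, Finset.Ico_union_Ico_eq_Ico (Nat.zero_le m) hmn],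
        Finset.sum_union (by rw [Finset.range_eq_Ico]
                             exact Finset.Ico_disjoint_Ico_consecutive 0 m n)]
      ring
    rw [h1]
    have h2 : ∑ k ∈ Ico m n, ρ ^ k * c k ∈ (I ^ m : Ideal R) := by
      refine Ideal.sum_mem _ fun k hk => ?_
      rw [Finset.mem_Ico] at hk
      exact Ideal.mul_mem_right _ _ ((Ideal.pow_le_pow_right hk.1) (Ideal.pow_mem_pow hρ k))
    simpa using neg_mem h2
  obtain ⟨L, hL⟩ := IsPrecomplete.prec (IsAdicComplete.toIsPrecomplete : IsPrecomplete I R) key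
  refine ⟨L, fun M => ?_⟩
  have := (hL M).symm
  rw [SModEq.sub_mem] at this
  simpa using this

lemma adic_haus (I : Ideal R) [IsAdicComplete I R] {x : R} (h : ∀ M, x ∈ I ^ M) : x = 0 := by
  refine IsHausdorff.haus (IsAdicComplete.toIsHausdorff : IsHausdorff I R) x fun n => ?_
  rw [SModEq.sub_mem, sub_zero]
  simpa using h n

lemma coeff_key_mul (c : R) (H : MvPowerSeries (Fin 2) R) (i j : ℕ) :
    coeff (R := R) (pt i j) ((X 0 * X 1 - C (σ := Fin 2) (R := R) c) * H)
      = (if 1 ≤ i ∧ 1 ≤ j then coeff (R := R) (pt (i-1) (j-1)) H else 0)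
        - c * coeff (R := R) (pt i j) H := by
  have hX : (X 0 * X 1 : MvPowerSeries (Fin 2) R) = monomial (R := R) (pt 1 1) 1 := by
    rw [X, X, monomial_mul_monomial, one_mul]; rfl
  rw [sub_mul, map_sub, hX, coeff_monomial_mul, coeff_C_mul, pt_sub_pt]
  simp [pt_le_pt]

lemma coeff_monSubst (e : ℕ) (F : MvPowerSeries (Fin 2) R) (i j : ℕ) :
    coeff (R := R) (pt i j) (monSubst R e F)
      = if e ∣ i ∧ e ∣ j then coeff (R := R) (pt (i/e) (j/e)) F else 0 := by
  rw [coeff_apply, monSubst]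
  have h1 : (∀ k : Fin 2, e ∣ (pt i j) k) ↔ e ∣ i ∧ e ∣ j := by
    rw [Fin.forall_fin_two]; simp
  have h2 : Finsupp.mapRange (· / e) (Nat.zero_div e) (pt i j) = pt (i/e) (j/e) := by
    ext k; fin_cases k <;> simp [Finsupp.mapRange_apply]
  rw [h2]
  split
  · rw [if_pos (h1.1 ‹_›)]
  · rw [if_neg (fun h => ‹¬_› (h1.2 h))]

lemma coeff_X0pow_mul (a : ℕ) (f : MvPowerSeries (Fin 2) R) (i j : ℕ) :
    coeff (R := R) (pt i j) (X 0 ^ a * f) = if a ≤ i then coeff (R := R) (pt (i - a) j) f else 0 := by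
  rw [X_pow_eq, show (Finsupp.single (0 : Fin 2) a) = pt a 0 from by simp [pt],
    coeff_monomial_mul, pt_sub_pt]
  simp [pt_le_pt]

lemma coeff_X1pow_mul (b : ℕ) (f : MvPowerSeries (Fin 2) R) (i j : ℕ) :
    coeff (R := R) (pt i j) (X 1 ^ b * f) = if b ≤ j then coeff (R := R) (pt i (j - b)) f else 0 := by
  rw [X_pow_eq, show (Finsupp.single (1 : Fin 2) b) = pt 0 b from by simp [pt],
    coeff_monomial_mul, pt_sub_pt]
  simp [pt_le_pt]

lemma monSubst_add (e : ℕ) (f g : MvPowerSeries (Fin 2) R) :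
    monSubst R e (f + g) = monSubst R e f + monSubst R e g := by
  ext n
  rw [eq_pt n, map_add, coeff_monSubst, coeff_monSubst, coeff_monSubst]
  split <;> simp

lemma monSubst_sub (e : ℕ) (f g : MvPowerSeries (Fin 2) R) :
    monSubst R e (f - g) = monSubst R e f - monSubst R e g := by
  ext n
  rw [eq_pt n, map_sub, coeff_monSubst, coeff_monSubst, coeff_monSubst]
  split <;> simp

lemma monSubst_C_mul (e : ℕ) (r : R) (f : MvPowerSeries (Fin 2) R) :
    monSubst R e (C (σ := Fin 2) (R := R) r * f) = C (σ := Fin 2) (R := R) r * monSubst R e f := by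
  ext n
  rw [eq_pt n, coeff_C_mul, coeff_monSubst, coeff_monSubst, coeff_C_mul]
  split <;> simp

lemma monSubst_X0_mul (e : ℕ) (he : 0 < e) (f : MvPowerSeries (Fin 2) R) :
    monSubst R e (X 0 * f) = X 0 ^ e * monSubst R e f := by
  ext n
  rw [eq_pt n, coeff_monSubst, coeff_X0pow_mul, coeff_monSubst]
  generalize n 0 = i
  generalize n 1 = j
  by_cases hij : e ∣ i ∧ e ∣ j
  · obtain ⟨⟨a, rfl⟩, hj⟩ := hij
    rw [if_pos ⟨⟨a, rfl⟩, hj⟩]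
    have h1 : e * a / e = a := Nat.mul_div_cancel_left a he
    rw [h1, show (X 0 * f : MvPowerSeries (Fin 2) R) = X 0 ^ 1 * f from by rw [pow_one],
      coeff_X0pow_mul]
    by_cases ha : 1 ≤ a
    · have hsub : e * a - e = e * (a - 1) := by rw [Nat.mul_sub, mul_one]
      rw [if_pos ha, if_pos (by nlinarith), if_pos ⟨⟨a - 1, hsub⟩, hj⟩,
        hsub, Nat.mul_div_cancel_left _ he]
    · have h0 : a = 0 := by omega
      subst h0
      rw [if_neg ha, if_neg (by simp; omega)]
  · rw [if_neg hij]
    by_cases hei : e ≤ i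
    · rw [if_pos hei, if_neg]
      rintro ⟨h1, h2⟩
      refine hij ⟨?_, h2⟩
      have : e ∣ (i - e) + e := Nat.dvd_add h1 dvd_rfl
      rwa [Nat.sub_add_cancel hei] at this
    · rw [if_neg hei]

lemma monSubst_X1_mul (e : ℕ) (he : 0 < e) (f : MvPowerSeries (Fin 2) R) :
    monSubst R e (X 1 * f) = X 1 ^ e * monSubst R e f := by
  ext n
  rw [eq_pt n, coeff_monSubst, coeff_X1pow_mul, coeff_monSubst]
  generalize n 0 = i
  generalize n 1 = j
  by_cases hij : e ∣ i ∧ e ∣ j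
  · obtain ⟨hi, ⟨b, rfl⟩⟩ := hij
    rw [if_pos ⟨hi, ⟨b, rfl⟩⟩]
    have h1 : e * b / e = b := Nat.mul_div_cancel_left b he
    rw [h1, show (X 1 * f : MvPowerSeries (Fin 2) R) = X 1 ^ 1 * f from by rw [pow_one],
      coeff_X1pow_mul]
    by_cases hb : 1 ≤ b
    · have hsub : e * b - e = e * (b - 1) := by rw [Nat.mul_sub, mul_one]
      rw [if_pos hb, if_pos (by nlinarith), if_pos ⟨hi, ⟨b - 1, hsub⟩⟩,
        hsub, Nat.mul_div_cancel_left _ he]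
    · have h0 : b = 0 := by omega
      subst h0
      rw [if_neg hb, if_neg (by simp; omega)]
  · rw [if_neg hij]
    by_cases hej : e ≤ j
    · rw [if_pos hej, if_neg]
      rintro ⟨h1, h2⟩
      refine hij ⟨h1, ?_⟩
      have : e ∣ (j - e) + e := Nat.dvd_add h2 dvd_rfl
      rwa [Nat.sub_add_cancel hej] at this
    · rw [if_neg hej]

section crit

variable [IsLocalRing R] [IsAdicComplete (IsLocalRing.maximalIdeal R) R]

local notation "𝔪" => IsLocalRing.maximalIdeal R

omit [IsLocalRing R] [IsAdicComplete 𝔪 R] in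
/-- Necessity: telescoping of diagonal partial sums. -/
lemma diag_partial (c : R) (H f : MvPowerSeries (Fin 2) R)
    (hf : f = (X 0 * X 1 - C (σ := Fin 2) (R := R) c) * H) {i j : ℕ} (hij : i = 0 ∨ j = 0) (M : ℕ) :
    ∑ m ∈ range (M+1), c ^ m * coeff (R := R) (pt (i+m) (j+m)) f
      = -(c ^ (M+1) * coeff (R := R) (pt (i+M) (j+M)) H) := by
  induction M with
  | zero =>
    rw [Finset.sum_range_one, hf, coeff_key_mul]
    rcases hij with h | h <;> subst h <;> simp
  | succ M ih =>
    rw [Finset.sum_range_succ, ih]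
    have e1 : i + (M+1) - 1 = i + M := by omega
    have e2 : j + (M+1) - 1 = j + M := by omega
    rw [hf, coeff_key_mul, if_pos ⟨by omega, by omega⟩, e1, e2]
    ring

/-- Sufficiency: a series whose boundary diagonal partial sums lie in `𝔪^M`
is divisible by `X 0 * X 1 - C c`. -/
lemma mem_span_of_diag (c : R) (hc : c ∈ 𝔪) (f : MvPowerSeries (Fin 2) R)
    (h1 : ∀ i M, ∑ m ∈ range M, c ^ m * coeff (R := R) (pt (i+m) m) f ∈ 𝔪 ^ M)
    (h2 : ∀ j M, ∑ m ∈ range M, c ^ m * coeff (R := R) (pt m (j+m)) f ∈ 𝔪 ^ M) :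
    f ∈ Ideal.span {X 0 * X 1 - C (σ := Fin 2) (R := R) c} := by
  classical
  set H : MvPowerSeries (Fin 2) R := fun n =>
    (exists_adicSum 𝔪 hc (fun m => coeff (R := R) (pt (n 0 + 1 + m) (n 1 + 1 + m)) f)).choose with hHdef
  have hH : ∀ a b M, coeff (R := R) (pt a b) H
      - ∑ m ∈ range M, c ^ m * coeff (R := R) (pt (a + 1 + m) (b + 1 + m)) f ∈ 𝔪 ^ M := by
    intro a b M
    have := (exists_adicSum 𝔪 hc
      (fun m => coeff (R := R) (pt ((pt a b) 0 + 1 + m) ((pt a b) 1 + 1 + m)) f)).choose_spec M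
    rw [coeff_apply]
    simpa [coeff_apply, hHdef] using this
  have hrec : ∀ a b, coeff (R := R) (pt (a+1) (b+1)) f
      = coeff (R := R) (pt a b) H - c * coeff (R := R) (pt (a+1) (b+1)) H := by
    intro a b
    rw [← sub_eq_zero]
    refine adic_haus 𝔪 fun M => ?_
    have k1 := hH a b (M+1)
    have k2 := Ideal.mul_mem_left _ c (hH (a+1) (b+1) M)
    have hterm : ∀ m, c ^ (m+1) * coeff (R := R) (pt (a + 1 + (m+1)) (b + 1 + (m+1))) f
        = c * (c ^ m * coeff (R := R) (pt (a + 1 + 1 + m) (b + 1 + 1 + m)) f) := by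
      intro m
      rw [show a + 1 + (m+1) = a + 1 + 1 + m from by omega,
        show b + 1 + (m+1) = b + 1 + 1 + m from by omega]
      ring
    have key : coeff (R := R) (pt (a+1) (b+1)) f
        - (∑ m ∈ range (M+1), c ^ m * coeff (R := R) (pt (a + 1 + m) (b + 1 + m)) f)
        + c * (∑ m ∈ range M, c ^ m * coeff (R := R) (pt (a + 1 + 1 + m) (b + 1 + 1 + m)) f) = 0 := by
      rw [Finset.sum_range_succ', Finset.sum_congr rfl (fun m _ => hterm m), ← Finset.mul_sum]
      simp only [pow_zero, one_mul, add_zero]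
      ring
    have : coeff (R := R) (pt (a+1) (b+1)) f
        - (coeff (R := R) (pt a b) H - c * coeff (R := R) (pt (a+1) (b+1)) H)
        = -(coeff (R := R) (pt a b) H - ∑ m ∈ range (M+1), c ^ m * coeff (R := R) (pt (a+1+m) (b+1+m)) f)
          + c * (coeff (R := R) (pt (a+1) (b+1)) H
              - ∑ m ∈ range M, c ^ m * coeff (R := R) (pt (a+1+1+m) (b+1+1+m)) f)
          + (coeff (R := R) (pt (a+1) (b+1)) f
              - (∑ m ∈ range (M+1), c ^ m * coeff (R := R) (pt (a+1+m) (b+1+m)) f)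
              + c * (∑ m ∈ range M, c ^ m * coeff (R := R) (pt (a+1+1+m) (b+1+1+m)) f)) := by ring
    rw [this, key, add_zero]
    exact add_mem (neg_mem ((Ideal.pow_le_pow_right (Nat.le_succ M)) k1)) k2
  have hbdry : ∀ i j, i = 0 ∨ j = 0 →
      coeff (R := R) (pt i j) f = - (c * coeff (R := R) (pt i j) H) := by
    intro i j hij
    rw [← sub_eq_zero]
    refine adic_haus 𝔪 fun M => ?_
    have k2 := Ideal.mul_mem_left _ c (hH i j M)
    have hterm : ∀ m, c ^ (m+1) * coeff (R := R) (pt (i + (m+1)) (j + (m+1))) f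
        = c * (c ^ m * coeff (R := R) (pt (i + 1 + m) (j + 1 + m)) f) := by
      intro m
      rw [show i + (m+1) = i + 1 + m from by omega, show j + (m+1) = j + 1 + m from by omega]
      ring
    have hpartial : coeff (R := R) (pt i j) f
        + c * (∑ m ∈ range M, c ^ m * coeff (R := R) (pt (i + 1 + m) (j + 1 + m)) f)
        = ∑ m ∈ range (M+1), c ^ m * coeff (R := R) (pt (i+m) (j+m)) f := by
      rw [Finset.sum_range_succ', Finset.sum_congr rfl (fun m _ => hterm m), ← Finset.mul_sum]
      simp only [pow_zero, one_mul, add_zero]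
      ring
    have hps : ∑ m ∈ range (M+1), c ^ m * coeff (R := R) (pt (i+m) (j+m)) f ∈ 𝔪 ^ M := by
      rcases hij with h | h
      · subst h
        exact (Ideal.pow_le_pow_right (Nat.le_succ M)) (by simpa using h2 j (M+1))
      · subst h
        exact (Ideal.pow_le_pow_right (Nat.le_succ M)) (by simpa using h1 i (M+1))
    have : coeff (R := R) (pt i j) f - -(c * coeff (R := R) (pt i j) H)
        = (coeff (R := R) (pt i j) f
            + c * ∑ m ∈ range M, c ^ m * coeff (R := R) (pt (i + 1 + m) (j + 1 + m)) f)
          + c * (coeff (R := R) (pt i j) H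
              - ∑ m ∈ range M, c ^ m * coeff (R := R) (pt (i + 1 + m) (j + 1 + m)) f) := by ring
    rw [this, hpartial]
    exact add_mem hps k2
  refine Ideal.mem_span_singleton.2 ⟨H, ?_⟩
  ext n
  rw [eq_pt n]
  by_cases h0 : n 0 = 0
  · rw [coeff_key_mul, hbdry _ _ (Or.inl h0), h0]
    simp
  · by_cases h1' : n 1 = 0
    · rw [coeff_key_mul, hbdry _ _ (Or.inr h1'), h1']
      simp
    · obtain ⟨a, ha⟩ := Nat.exists_eq_succ_of_ne_zero h0
      obtain ⟨b, hb⟩ := Nat.exists_eq_succ_of_ne_zero h1'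
      rw [coeff_key_mul, if_pos ⟨by omega, by omega⟩, ha, hb]
      simpa using hrec a b

end crit

end Stmt10Aux

open Finset MvPowerSeries Stmt10Aux in
/-- Let `(R, 𝔪)` be a complete Noetherian local ring, `π ∈ 𝔪`, `e ≥ 2`, `0 < α < e`,
`β = e - α`.  Let `A = R[[x,y]]/(xy - π)`, `B = R[[u,v]]/(uv - π^e)` and
`ι : B → A`, `u ↦ x^e`, `v ↦ y^e`.  For `F, G ∈ B` one has
`y^β · ι F = x^α · ι G` in `A` iff there are `Φ, Ψ ∈ B` with `F = u·Φ + π^α·Ψ` and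
`G = π^β·Φ + v·Ψ`.  (Equalities in the quotients `A`, `B` are expressed as membership of
the difference of representatives in the ideals `(xy - π)`, resp. `(uv - π^e)`.) -/
theorem stmt10 {R : Type*} [CommRing R] [IsNoetherianRing R] [IsLocalRing R]
    [IsAdicComplete (IsLocalRing.maximalIdeal R) R]
    (π : R) (hπ : π ∈ IsLocalRing.maximalIdeal R)
    (e α β : ℕ) (he : 2 ≤ e) (hα : 0 < α) (hαe : α < e) (hβ : β = e - α)
    (F G : MvPowerSeries (Fin 2) R) :
    MvPowerSeries.X 1 ^ β * monSubst R e F - MvPowerSeries.X 0 ^ α * monSubst R e G ∈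
        Ideal.span {MvPowerSeries.X 0 * MvPowerSeries.X 1 - MvPowerSeries.C (σ := Fin 2) (R := R) π} ↔
      ∃ Φ Ψ : MvPowerSeries (Fin 2) R,
        F - (MvPowerSeries.X 0 * Φ + MvPowerSeries.C (σ := Fin 2) (R := R) (π ^ α) * Ψ) ∈
            Ideal.span {MvPowerSeries.X 0 * MvPowerSeries.X 1 -
              MvPowerSeries.C (σ := Fin 2) (R := R) (π ^ e)} ∧
        G - (MvPowerSeries.C (σ := Fin 2) (R := R) (π ^ β) * Φ + MvPowerSeries.X 1 * Ψ) ∈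
            Ideal.span {MvPowerSeries.X 0 * MvPowerSeries.X 1 -
              MvPowerSeries.C (σ := Fin 2) (R := R) (π ^ e)} := by
  have he' : 0 < e := by omega
  have hβpos : 0 < β := by omega
  have hαβ : α + β = e := by omega
  constructor
  · intro h
    classical
    have hβlt : β < e := by omega
    have hπe : (π ^ e : R) ∈ IsLocalRing.maximalIdeal R := Ideal.pow_mem_of_mem _ hπ e he'
    set D : MvPowerSeries (Fin 2) R
      := X 1 ^ β * monSubst R e F - X 0 ^ α * monSubst R e G with hDdef
    obtain ⟨H, hH⟩ := Ideal.mem_span_singleton.1 h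
    -- coefficients of `D`
    have hD : ∀ i j, coeff (R := R) (pt i j) D
        = (if β ≤ j ∧ e ∣ i ∧ e ∣ (j - β) then coeff (R := R) (pt (i/e) ((j-β)/e)) F else 0)
          - (if α ≤ i ∧ e ∣ (i-α) ∧ e ∣ j then coeff (R := R) (pt ((i-α)/e) (j/e)) G else 0) := by
      intro i j
      rw [hDdef, map_sub, coeff_X1pow_mul, coeff_X0pow_mul, coeff_monSubst, coeff_monSubst]
      congr 1
      · split_ifs <;> tauto
      · split_ifs <;> tauto
    -- telescoped diagonal partial sums of `D`
    have htelrow : ∀ i N, 0 < N →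
        ∑ m ∈ range N, π ^ m * coeff (R := R) (pt (i+m) m) D ∈ IsLocalRing.maximalIdeal R ^ N := by
      intro i N hN
      rcases N with _ | M
      · omega
      · have := diag_partial π H D hH (Or.inr rfl : i = 0 ∨ 0 = 0) M
        simp only [Nat.zero_add] at this
        rw [this]
        exact neg_mem (Ideal.mul_mem_right _ _ (Ideal.pow_mem_pow hπ (M+1)))
    have htelcol : ∀ j N, 0 < N →
        ∑ m ∈ range N, π ^ m * coeff (R := R) (pt m (j+m)) D ∈ IsLocalRing.maximalIdeal R ^ N := by
      intro j N hN
      rcases N with _ | M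
      · omega
      · have := diag_partial π H D hH (Or.inl rfl : (0:ℕ) = 0 ∨ j = 0) M
        simp only [Nat.zero_add] at this
        rw [this]
        exact neg_mem (Ideal.mul_mem_right _ _ (Ideal.pow_mem_pow hπ (M+1)))
    -- the adic sums along diagonals of F and G
    choose φ hφ using fun a : ℕ => exists_adicSum (IsLocalRing.maximalIdeal R) hπe
      (fun m => coeff (R := R) (pt (a + 1 + m) m) F)
    choose ψ hψ using fun b : ℕ => exists_adicSum (IsLocalRing.maximalIdeal R) hπe
      (fun m => coeff (R := R) (pt m (b + 1 + m)) G)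
    choose gp hgp using fun k : ℕ => exists_adicSum (IsLocalRing.maximalIdeal R) hπe
      (fun m => coeff (R := R) (pt (k + m) m) G)
    choose fm hfm using fun n : ℕ => exists_adicSum (IsLocalRing.maximalIdeal R) hπe
      (fun m => coeff (R := R) (pt m (n + m)) F)
    -- grouped partial sums, row diagonals
    have claim1 : ∀ k N, ∑ m ∈ range (e*N), π ^ m * coeff (R := R) (pt (e*k+α+m) m) D
        = π ^ β * (∑ m ∈ range N, (π^e) ^ m * coeff (R := R) (pt (k + 1 + m) m) F)
          - ∑ m ∈ range N, (π^e) ^ m * coeff (R := R) (pt (k + m) m) G := by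
      intro k N
      induction N with
      | zero => simp
      | succ N ih =>
        have hval : ∀ r ∈ range e, π ^ (e*N+r) * coeff (R := R) (pt (e*k+α+(e*N+r)) (e*N+r)) D
            = (if r = β then π ^ (e*N+β) * coeff (R := R) (pt (k+1+N) N) F else 0)
              + (if r = 0 then -(π ^ (e*N) * coeff (R := R) (pt (k+N) N) G) else 0) := by
          intro r hr
          rw [Finset.mem_range] at hr
          rw [hD]
          by_cases hrβ : r = β
          · rw [hrβ]
            have c1 : β ≤ e*N+β ∧ e ∣ e*k+α+(e*N+β) ∧ e ∣ e*N+β-β :=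
              ⟨by omega, ⟨k+1+N, by rw [← hαβ]; ring⟩, ⟨N, by omega⟩⟩
            have c2 : ¬(α ≤ e*k+α+(e*N+β) ∧ e ∣ e*k+α+(e*N+β)-α ∧ e ∣ e*N+β) := by
              rintro ⟨-, -, hdvd⟩
              have hd : e ∣ β := (Nat.dvd_add_right ⟨N, rfl⟩).mp hdvd
              have := Nat.eq_zero_of_dvd_of_lt hd hβlt
              omega
            rw [if_pos c1, if_neg c2, if_pos rfl, if_neg (show ¬ β = 0 from by omega)]
            rw [show e*k+α+(e*N+β) = e*(k+1+N) from by rw [← hαβ]; ring,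
              show e*N+β-β = e*N from by omega, Nat.mul_div_cancel_left _ he',
              Nat.mul_div_cancel_left _ he']
            ring
          · by_cases hr0 : r = 0
            · subst hr0
              have c2 : α ≤ e*k+α+(e*N+0) ∧ e ∣ e*k+α+(e*N+0)-α ∧ e ∣ e*N+0 :=
                ⟨by omega, ⟨k+N, by rw [Nat.mul_add]; omega⟩, ⟨N, by omega⟩⟩
              have c1 : ¬(β ≤ e*N+0 ∧ e ∣ e*k+α+(e*N+0) ∧ e ∣ e*N+0-β) := by
                rintro ⟨-, hdvd, -⟩
                have hd : e ∣ α := by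
                  have h0 : e*k+α+(e*N+0) = e*(k+N) + α := by ring
                  rw [h0] at hdvd
                  exact (Nat.dvd_add_right ⟨k+N, rfl⟩).mp hdvd
                have := Nat.eq_zero_of_dvd_of_lt hd hαe
                omega
              rw [if_neg c1, if_pos c2, if_neg (show ¬ (0:ℕ) = β from by omega), if_pos rfl]
              rw [show e*k+α+(e*N+0)-α = e*(k+N) from by rw [Nat.mul_add]; omega,
                show e*N+0 = e*N from rfl, Nat.mul_div_cancel_left _ he',
                Nat.mul_div_cancel_left _ he']
              ring
            · have c1 : ¬(β ≤ e*N+r ∧ e ∣ e*k+α+(e*N+r) ∧ e ∣ e*N+r-β) := by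
                rintro ⟨-, hdvd, -⟩
                have hd : e ∣ α + r := by
                  have h0 : e*k+α+(e*N+r) = e*(k+N) + (α+r) := by ring
                  rw [h0] at hdvd
                  exact (Nat.dvd_add_right ⟨k+N, rfl⟩).mp hdvd
                have := dvd_window hd (by omega) (by omega)
                omega
              have c2 : ¬(α ≤ e*k+α+(e*N+r) ∧ e ∣ e*k+α+(e*N+r)-α ∧ e ∣ e*N+r) := by
                rintro ⟨-, -, hdvd⟩
                have hd : e ∣ r := (Nat.dvd_add_right ⟨N, rfl⟩).mp hdvd
                have := Nat.eq_zero_of_dvd_of_lt hd hr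
                omega
              rw [if_neg c1, if_neg c2, if_neg hrβ, if_neg hr0]
              ring
        have hinner : ∑ r ∈ range e, π ^ (e*N+r) * coeff (R := R) (pt (e*k+α+(e*N+r)) (e*N+r)) D
            = π ^ (e*N+β) * coeff (R := R) (pt (k+1+N) N) F - π ^ (e*N) * coeff (R := R) (pt (k+N) N) G := by
          rw [Finset.sum_congr rfl hval, Finset.sum_add_distrib,
            Finset.sum_ite_eq' (range e) β (fun _ => π ^ (e*N+β) * coeff (R := R) (pt (k+1+N) N) F),
            Finset.sum_ite_eq' (range e) 0
              (fun _ => -(π ^ (e*N) * coeff (R := R) (pt (k+N) N) G)),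
            if_pos (Finset.mem_range.2 hβlt), if_pos (Finset.mem_range.2 he')]
          ring
        rw [show e*(N+1) = e*N + e from by ring, Finset.sum_range_add,
          Finset.sum_range_succ, Finset.sum_range_succ, ih, hinner]
        simp only [← pow_mul, pow_add]
        ring
    -- grouped partial sums, column diagonals
    have claim2 : ∀ n N, ∑ m ∈ range (e*N), π ^ m * coeff (R := R) (pt m (e*n+β+m)) D
        = (∑ m ∈ range N, (π^e) ^ m * coeff (R := R) (pt m (n + m)) F)
          - π ^ α * ∑ m ∈ range N, (π^e) ^ m * coeff (R := R) (pt m (n + 1 + m)) G := by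
      intro n N
      induction N with
      | zero => simp
      | succ N ih =>
        have hval : ∀ r ∈ range e, π ^ (e*N+r) * coeff (R := R) (pt (e*N+r) (e*n+β+(e*N+r))) D
            = (if r = 0 then π ^ (e*N) * coeff (R := R) (pt N (n+N)) F else 0)
              + (if r = α then -(π ^ (e*N+α) * coeff (R := R) (pt N (n+1+N)) G) else 0) := by
          intro r hr
          rw [Finset.mem_range] at hr
          rw [hD]
          by_cases hr0 : r = 0
          · subst hr0
            have c1 : β ≤ e*n+β+(e*N+0) ∧ e ∣ e*N+0 ∧ e ∣ e*n+β+(e*N+0)-β :=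
              ⟨by omega, ⟨N, by omega⟩, ⟨n+N, by rw [Nat.mul_add]; omega⟩⟩
            have c2 : ¬(α ≤ e*N+0 ∧ e ∣ e*N+0-α ∧ e ∣ e*n+β+(e*N+0)) := by
              rintro ⟨-, -, hdvd⟩
              have hd : e ∣ β := by
                have h0 : e*n+β+(e*N+0) = e*(n+N) + β := by ring
                rw [h0] at hdvd
                exact (Nat.dvd_add_right ⟨n+N, rfl⟩).mp hdvd
              have := Nat.eq_zero_of_dvd_of_lt hd hβlt
              omega
            rw [if_pos c1, if_neg c2, if_pos rfl, if_neg (show ¬ (0:ℕ) = α from by omega)]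
            rw [show e*n+β+(e*N+0)-β = e*(n+N) from by rw [Nat.mul_add]; omega,
              show e*N+0 = e*N from rfl, Nat.mul_div_cancel_left _ he',
              Nat.mul_div_cancel_left _ he']
            ring
          · by_cases hrα : r = α
            · rw [hrα]
              have c2 : α ≤ e*N+α ∧ e ∣ e*N+α-α ∧ e ∣ e*n+β+(e*N+α) :=
                ⟨by omega, ⟨N, by omega⟩, ⟨n+1+N, by rw [← hαβ]; ring⟩⟩
              have c1 : ¬(β ≤ e*n+β+(e*N+α) ∧ e ∣ e*N+α ∧ e ∣ e*n+β+(e*N+α)-β) := by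
                rintro ⟨-, hdvd, -⟩
                have hd : e ∣ α := (Nat.dvd_add_right ⟨N, rfl⟩).mp hdvd
                have := Nat.eq_zero_of_dvd_of_lt hd hαe
                omega
              rw [if_neg c1, if_pos c2, if_neg (show ¬ α = 0 from by omega), if_pos rfl]
              rw [show e*N+α-α = e*N from by omega,
                show e*n+β+(e*N+α) = e*(n+1+N) from by rw [← hαβ]; ring,
                Nat.mul_div_cancel_left _ he', Nat.mul_div_cancel_left _ he']
              ring
            · have c1 : ¬(β ≤ e*n+β+(e*N+r) ∧ e ∣ e*N+r ∧ e ∣ e*n+β+(e*N+r)-β) := by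
                rintro ⟨-, hdvd, -⟩
                have hd : e ∣ r := (Nat.dvd_add_right ⟨N, rfl⟩).mp hdvd
                have := Nat.eq_zero_of_dvd_of_lt hd hr
                omega
              have c2 : ¬(α ≤ e*N+r ∧ e ∣ e*N+r-α ∧ e ∣ e*n+β+(e*N+r)) := by
                rintro ⟨-, -, hdvd⟩
                have hd : e ∣ β + r := by
                  have h0 : e*n+β+(e*N+r) = e*(n+N) + (β+r) := by ring
                  rw [h0] at hdvd
                  exact (Nat.dvd_add_right ⟨n+N, rfl⟩).mp hdvd
                have := dvd_window hd (by omega) (by omega)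
                omega
              rw [if_neg c1, if_neg c2, if_neg hr0, if_neg hrα]
              ring
        have hinner : ∑ r ∈ range e, π ^ (e*N+r) * coeff (R := R) (pt (e*N+r) (e*n+β+(e*N+r))) D
            = π ^ (e*N) * coeff (R := R) (pt N (n+N)) F
              - π ^ (e*N+α) * coeff (R := R) (pt N (n+1+N)) G := by
          rw [Finset.sum_congr rfl hval, Finset.sum_add_distrib,
            Finset.sum_ite_eq' (range e) 0 (fun _ => π ^ (e*N) * coeff (R := R) (pt N (n+N)) F),
            Finset.sum_ite_eq' (range e) α
              (fun _ => -(π ^ (e*N+α) * coeff (R := R) (pt N (n+1+N)) G)),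
            if_pos (Finset.mem_range.2 he'), if_pos (Finset.mem_range.2 hαe)]
          ring
        rw [show e*(N+1) = e*N + e from by ring, Finset.sum_range_add,
          Finset.sum_range_succ, Finset.sum_range_succ, ih, hinner]
        simp only [← pow_mul, pow_add]
        ring
    -- the two relations
    have hrel1 : ∀ k, gp k = π ^ β * φ k := by
      intro k
      rw [← sub_eq_zero]
      refine adic_haus (IsLocalRing.maximalIdeal R) fun N => ?_
      have hmem : ∑ m ∈ range (e*N), π ^ m * coeff (R := R) (pt (e*k+α+m) m) D
          ∈ IsLocalRing.maximalIdeal R ^ N := by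
        rcases Nat.eq_zero_or_pos N with rfl | hN
        · simp
        · exact Ideal.pow_le_pow_right (Nat.le_mul_of_pos_left N he')
            (htelrow (e*k+α) (e*N) (Nat.mul_pos he' hN))
      have hx : gp k - π ^ β * φ k
          = -(π ^ β * (φ k - ∑ m ∈ range N, (π^e) ^ m * coeff (R := R) (pt (k + 1 + m) m) F))
            + (gp k - ∑ m ∈ range N, (π^e) ^ m * coeff (R := R) (pt (k + m) m) G)
            - ∑ m ∈ range (e*N), π ^ m * coeff (R := R) (pt (e*k+α+m) m) D := by
        rw [claim1 k N]; ring
      rw [hx]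
      exact sub_mem (add_mem (neg_mem (Ideal.mul_mem_left _ _ (hφ k N))) (hgp k N)) hmem
    have hrel2 : ∀ n, fm n = π ^ α * ψ n := by
      intro n
      rw [← sub_eq_zero]
      refine adic_haus (IsLocalRing.maximalIdeal R) fun N => ?_
      have hmem : ∑ m ∈ range (e*N), π ^ m * coeff (R := R) (pt m (e*n+β+m)) D
          ∈ IsLocalRing.maximalIdeal R ^ N := by
        rcases Nat.eq_zero_or_pos N with rfl | hN
        · simp
        · exact Ideal.pow_le_pow_right (Nat.le_mul_of_pos_left N he')
            (htelcol (e*n+β) (e*N) (Nat.mul_pos he' hN))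
      have hx : fm n - π ^ α * ψ n
          = (fm n - ∑ m ∈ range N, (π^e) ^ m * coeff (R := R) (pt m (n + m)) F)
            - π ^ α * (ψ n - ∑ m ∈ range N, (π^e) ^ m * coeff (R := R) (pt m (n + 1 + m)) G)
            + ∑ m ∈ range (e*N), π ^ m * coeff (R := R) (pt m (e*n+β+m)) D := by
        rw [claim2 n N]; ring
      rw [hx]
      exact add_mem (sub_mem (hfm n N) (Ideal.mul_mem_left _ _ (hψ n N))) hmem
    -- the witnesses
    set Φ : MvPowerSeries (Fin 2) R := fun n => if n 1 = 0 then φ (n 0) else 0 with hΦdef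
    set Ψ : MvPowerSeries (Fin 2) R := fun n => if n 0 = 0 then ψ (n 1) else 0 with hΨdef
    have hcΦ : ∀ a b, coeff (R := R) (pt a b) Φ = if b = 0 then φ a else 0 := by
      intro a b; rw [coeff_apply, hΦdef]; simp
    have hcΨ : ∀ a b, coeff (R := R) (pt a b) Ψ = if a = 0 then ψ b else 0 := by
      intro a b; rw [coeff_apply, hΨdef]; simp
    have hcF' : ∀ a b, coeff (R := R) (pt a b) (F - (X 0 * Φ + C (σ := Fin 2) (R := R) (π^α) * Ψ))
        = coeff (R := R) (pt a b) F
          - ((if 1 ≤ a ∧ b = 0 then φ (a-1) else 0) + π^α * (if a = 0 then ψ b else 0)) := by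
      intro a b
      rw [map_sub, map_add, coeff_C_mul,
        show (X 0 * Φ : MvPowerSeries (Fin 2) R) = X 0 ^ 1 * Φ from by rw [pow_one],
        coeff_X0pow_mul, hcΨ, hcΦ]
      split_ifs <;> first | (exfalso; omega) | rfl
    have hcG' : ∀ a b, coeff (R := R) (pt a b) (G - (C (σ := Fin 2) (R := R) (π^β) * Φ + X 1 * Ψ))
        = coeff (R := R) (pt a b) G
          - (π^β * (if b = 0 then φ a else 0) + (if 1 ≤ b ∧ a = 0 then ψ (b-1) else 0)) := by
      intro a b
      rw [map_sub, map_add, coeff_C_mul,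
        show (X 1 * Ψ : MvPowerSeries (Fin 2) R) = X 1 ^ 1 * Ψ from by rw [pow_one],
        coeff_X1pow_mul, hcΦ, hcΨ]
      split_ifs <;> first | (exfalso; omega) | rfl
    have hsplit : ∀ (t : ℕ → R) (r0 : R) (M : ℕ),
        (∑ m ∈ range M, (π^e) ^ m * (t m - if m = 0 then r0 else 0))
        = (∑ m ∈ range M, (π^e) ^ m * t m) - if 0 ∈ range M then r0 else 0 := by
      intro t r0 M
      have h1 : ∀ m, (π^e)^m * (t m - if m = 0 then r0 else 0)
          = (π^e)^m * t m - (if m = 0 then r0 else 0) := by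
        intro m; split_ifs with hm
        · subst hm; simp
        · simp
      rw [Finset.sum_congr rfl fun m _ => h1 m, Finset.sum_sub_distrib,
        Finset.sum_ite_eq' (range M) 0 (fun _ => r0)]
    refine ⟨Φ, Ψ, ?_, ?_⟩
    · refine mem_span_of_diag (π^e) hπe _ ?_ ?_
      · intro i M
        rcases Nat.eq_zero_or_pos i with rfl | hi
        · have hterm : ∀ m, coeff (R := R) (pt (0+m) m) (F - (X 0 * Φ + C (σ := Fin 2) (R := R) (π^α) * Ψ))
              = coeff (R := R) (pt m (0+m)) F - if m = 0 then π ^ α * ψ 0 else 0 := by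
            intro m
            rw [hcF' (0+m) m]
            simp only [Nat.zero_add]
            rcases Nat.eq_zero_or_pos m with rfl | hm
            · simp
            · rw [if_neg (by omega), if_neg (by omega), if_neg (by omega)]
              ring
          rw [Finset.sum_congr rfl fun m _ => by rw [hterm m],
            hsplit (fun m => coeff (R := R) (pt m (0+m)) F) (π ^ α * ψ 0) M]
          rcases Nat.eq_zero_or_pos M with rfl | hM
          · simp
          · rw [if_pos (Finset.mem_range.2 hM), ← hrel2 0]
            simpa using neg_mem (hfm 0 M)
        · obtain ⟨i', rfl⟩ : ∃ i', i = i'+1 := ⟨i-1, by omega⟩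
          have hterm : ∀ m, coeff (R := R) (pt (i'+1+m) m) (F - (X 0 * Φ + C (σ := Fin 2) (R := R) (π^α) * Ψ))
              = coeff (R := R) (pt (i'+1+m) m) F - if m = 0 then φ i' else 0 := by
            intro m
            rw [hcF' (i'+1+m) m]
            rcases Nat.eq_zero_or_pos m with rfl | hm
            · rw [if_pos ⟨by omega, rfl⟩, if_neg (by omega), if_pos rfl]
              simp
            · rw [if_neg (by omega), if_neg (by omega), if_neg (by omega)]
              ring
          rw [Finset.sum_congr rfl fun m _ => by rw [hterm m],
            hsplit (fun m => coeff (R := R) (pt (i'+1+m) m) F) (φ i') M]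
          rcases Nat.eq_zero_or_pos M with rfl | hM
          · simp
          · rw [if_pos (Finset.mem_range.2 hM)]
            simpa using neg_mem (hφ i' M)
      · intro j M
        have hterm : ∀ m, coeff (R := R) (pt m (j+m)) (F - (X 0 * Φ + C (σ := Fin 2) (R := R) (π^α) * Ψ))
            = coeff (R := R) (pt m (j+m)) F - if m = 0 then π ^ α * ψ j else 0 := by
          intro m
          rw [hcF' m (j+m)]
          rcases Nat.eq_zero_or_pos m with rfl | hm
          · rw [if_neg (by omega), if_pos rfl, if_pos rfl]
            simp
          · rw [if_neg (by omega), if_neg (by omega), if_neg (by omega)]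
            ring
        rw [Finset.sum_congr rfl fun m _ => by rw [hterm m],
          hsplit (fun m => coeff (R := R) (pt m (j+m)) F) (π ^ α * ψ j) M]
        rcases Nat.eq_zero_or_pos M with rfl | hM
        · simp
        · rw [if_pos (Finset.mem_range.2 hM), ← hrel2 j]
          simpa using neg_mem (hfm j M)
    · refine mem_span_of_diag (π^e) hπe _ ?_ ?_
      · intro i M
        have hterm : ∀ m, coeff (R := R) (pt (i+m) m) (G - (C (σ := Fin 2) (R := R) (π^β) * Φ + X 1 * Ψ))
            = coeff (R := R) (pt (i+m) m) G - if m = 0 then π ^ β * φ i else 0 := by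
          intro m
          rw [hcG' (i+m) m]
          rcases Nat.eq_zero_or_pos m with rfl | hm
          · rw [if_pos rfl, if_neg (by omega)]
            simp
          · rw [if_neg (by omega), if_neg (by omega), if_neg (by omega)]
            ring
        rw [Finset.sum_congr rfl fun m _ => by rw [hterm m],
          hsplit (fun m => coeff (R := R) (pt (i+m) m) G) (π ^ β * φ i) M]
        rcases Nat.eq_zero_or_pos M with rfl | hM
        · simp
        · rw [if_pos (Finset.mem_range.2 hM), ← hrel1 i]
          simpa using neg_mem (hgp i M)
      · intro j M
        rcases Nat.eq_zero_or_pos j with rfl | hj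
        · have hterm : ∀ m, coeff (R := R) (pt m (0+m)) (G - (C (σ := Fin 2) (R := R) (π^β) * Φ + X 1 * Ψ))
              = coeff (R := R) (pt (0+m) m) G - if m = 0 then π ^ β * φ 0 else 0 := by
            intro m
            rw [hcG' m (0+m)]
            simp only [Nat.zero_add]
            rcases Nat.eq_zero_or_pos m with rfl | hm
            · rw [if_pos rfl, if_neg (by omega)]
              simp
            · rw [if_neg (by omega), if_neg (by omega), if_neg (by omega)]
              ring
          rw [Finset.sum_congr rfl fun m _ => by rw [hterm m],
            hsplit (fun m => coeff (R := R) (pt (0+m) m) G) (π ^ β * φ 0) M]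
          rcases Nat.eq_zero_or_pos M with rfl | hM
          · simp
          · rw [if_pos (Finset.mem_range.2 hM), ← hrel1 0]
            simpa using neg_mem (hgp 0 M)
        · obtain ⟨j', rfl⟩ : ∃ j', j = j'+1 := ⟨j-1, by omega⟩
          have hterm : ∀ m, coeff (R := R) (pt m (j'+1+m)) (G - (C (σ := Fin 2) (R := R) (π^β) * Φ + X 1 * Ψ))
              = coeff (R := R) (pt m (j'+1+m)) G - if m = 0 then ψ j' else 0 := by
            intro m
            rw [hcG' m (j'+1+m)]
            rcases Nat.eq_zero_or_pos m with rfl | hm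
            · rw [if_neg (by omega), if_pos ⟨by omega, rfl⟩]
              simp
            · rw [if_neg (by omega), if_neg (by omega), if_neg (by omega)]
              ring
          rw [Finset.sum_congr rfl fun m _ => by rw [hterm m],
            hsplit (fun m => coeff (R := R) (pt m (j'+1+m)) G) (ψ j') M]
          rcases Nat.eq_zero_or_pos M with rfl | hM
          · simp
          · rw [if_pos (Finset.mem_range.2 hM)]
            simpa using neg_mem (hψ j' M)
  · rintro ⟨Φ, Ψ, hFmem, hGmem⟩
    obtain ⟨H1, hH1⟩ := Ideal.mem_span_singleton.1 hFmem
    obtain ⟨H2, hH2⟩ := Ideal.mem_span_singleton.1 hGmem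
    have hFeq : F = X 0 * Φ + C (σ := Fin 2) (R := R) (π ^ α) * Ψ
        + ((X 0 * (X 1 * H1)) - C (σ := Fin 2) (R := R) (π ^ e) * H1) := by
      linear_combination hH1
    have hGeq : G = C (σ := Fin 2) (R := R) (π ^ β) * Φ + X 1 * Ψ
        + ((X 0 * (X 1 * H2)) - C (σ := Fin 2) (R := R) (π ^ e) * H2) := by
      linear_combination hH2
    have hiF : monSubst R e F = X 0 ^ e * monSubst R e Φ
        + C (σ := Fin 2) (R := R) (π ^ α) * monSubst R e Ψ
        + (X 0 ^ e * (X 1 ^ e * monSubst R e H1) - C (σ := Fin 2) (R := R) (π ^ e) * monSubst R e H1) := by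
      rw [hFeq, monSubst_add, monSubst_add, monSubst_sub, monSubst_C_mul,
        monSubst_X0_mul e he', monSubst_X0_mul e he', monSubst_X1_mul e he', monSubst_C_mul]
    have hiG : monSubst R e G = C (σ := Fin 2) (R := R) (π ^ β) * monSubst R e Φ
        + X 1 ^ e * monSubst R e Ψ
        + (X 0 ^ e * (X 1 ^ e * monSubst R e H2) - C (σ := Fin 2) (R := R) (π ^ e) * monSubst R e H2) := by
      rw [hGeq, monSubst_add, monSubst_add, monSubst_sub, monSubst_C_mul,
        monSubst_X0_mul e he', monSubst_X1_mul e he', monSubst_X1_mul e he', monSubst_C_mul]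
    rw [Ideal.mem_span_singleton, hiF, hiG]
    have d1 := sub_dvd_pow_sub_pow (X 0 * X 1 : MvPowerSeries (Fin 2) R) (C (σ := Fin 2) (R := R) π) β
    have d2 := sub_dvd_pow_sub_pow (X 0 * X 1 : MvPowerSeries (Fin 2) R) (C (σ := Fin 2) (R := R) π) α
    have d3 := sub_dvd_pow_sub_pow (X 0 * X 1 : MvPowerSeries (Fin 2) R) (C (σ := Fin 2) (R := R) π) e
    have hid : X 1 ^ β * (X 0 ^ e * monSubst R e Φ
        + C (σ := Fin 2) (R := R) (π ^ α) * monSubst R e Ψ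
        + (X 0 ^ e * (X 1 ^ e * monSubst R e H1) - C (σ := Fin 2) (R := R) (π ^ e) * monSubst R e H1))
        - X 0 ^ α * (C (σ := Fin 2) (R := R) (π ^ β) * monSubst R e Φ
        + X 1 ^ e * monSubst R e Ψ
        + (X 0 ^ e * (X 1 ^ e * monSubst R e H2) - C (σ := Fin 2) (R := R) (π ^ e) * monSubst R e H2))
        = (X 0 ^ α * monSubst R e Φ) * ((X 0 * X 1) ^ β - (C (σ := Fin 2) (R := R) π) ^ β)
          - (X 1 ^ β * monSubst R e Ψ) * ((X 0 * X 1) ^ α - (C (σ := Fin 2) (R := R) π) ^ α)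
          + (X 1 ^ β * monSubst R e H1 - X 0 ^ α * monSubst R e H2)
            * ((X 0 * X 1) ^ e - (C (σ := Fin 2) (R := R) π) ^ e) := by
      rw [map_pow, map_pow, map_pow, ← hαβ]
      ring
    rw [hid]
    exact dvd_add (dvd_sub (d1.mul_left _) (d2.mul_left _)) (d3.mul_left _)
end

section
/- Let (R, m) be a Noetherian local ring, complete for the m-adic topology, and let π ∈ m. Then the R-module map R[[x]] × R[[y]] → R[[x,y]]/(xy − π) sending (f, g) to f(x̄) + ȳ·g(ȳ) is bijective; equivalently, every element of R[[x,y]]/(xy − π) can be written uniquely in the form f(x) + g(y) with f ∈ R[[x]] and g ∈ y·R[[y]]. -/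
section SigAux

variable {R : Type*} [CommRing R] {I : Ideal R} {π : R}

noncomputable def auxPart (π : R) (a : ℕ → R) (N : ℕ) : R :=
  ∑ k ∈ Finset.range N, π ^ k * a k

lemma auxPart_cauchy (hπ : π ∈ I) (a : ℕ → R) {m n : ℕ} (h : m ≤ n) :
    auxPart π a m ≡ auxPart π a n [SMOD (I ^ m • ⊤ : Submodule R R)] := by
  rw [SModEq.sub_mem, smul_eq_mul, Ideal.mul_top]
  have h1 : auxPart π a n - auxPart π a m = ∑ k ∈ Finset.Ico m n, π ^ k * a k := by
    rw [auxPart, auxPart, Finset.sum_Ico_eq_sub _ h]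
  have h2 : auxPart π a m - auxPart π a n = -(auxPart π a n - auxPart π a m) := by ring
  rw [h2, h1]
  exact neg_mem (Submodule.sum_mem _ fun k hk =>
    Ideal.mul_mem_right _ _
      (Ideal.pow_le_pow_right (Finset.mem_Ico.mp hk).1 (Ideal.pow_mem_pow hπ k)))

variable [IsAdicComplete I R]

noncomputable def auxSig (hπ : π ∈ I) (a : ℕ → R) : R :=
  (IsPrecomplete.prec IsAdicComplete.toIsPrecomplete
    (fun {m n} h => auxPart_cauchy hπ a h)).choose

lemma auxSig_spec (hπ : π ∈ I) (a : ℕ → R) (n : ℕ) :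
    auxPart π a n ≡ auxSig hπ a [SMOD (I ^ n • ⊤ : Submodule R R)] :=
  (IsPrecomplete.prec IsAdicComplete.toIsPrecomplete
    (fun {m n} h => auxPart_cauchy hπ a h)).choose_spec n

lemma auxSig_eq (hπ : π ∈ I) (a : ℕ → R) (L : R)
    (h : ∀ n, auxPart π a n ≡ L [SMOD (I ^ n • ⊤ : Submodule R R)]) :
    auxSig hπ a = L := by
  refine eq_of_sub_eq_zero
    (IsHausdorff.haus (IsAdicComplete.toIsHausdorff (I := I) (M := R)) _ fun n => ?_)
  rw [SModEq.zero]
  exact SModEq.sub_mem.mp ((auxSig_spec hπ a n).symm.trans (h n))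

lemma auxSig_head (hπ : π ∈ I) (a : ℕ → R) (h : ∀ k, k ≠ 0 → a k = 0) :
    auxSig hπ a = a 0 := by
  apply auxSig_eq
  intro n
  cases n with
  | zero =>
      rw [SModEq.sub_mem, pow_zero, Ideal.one_eq_top]
      simp
  | succ m =>
      have key : auxPart π a (m + 1) = a 0 := by
        rw [auxPart, Finset.sum_eq_single 0]
        · simp
        · intro k _ hk0; rw [h k hk0, mul_zero]
        · simp
      rw [key]

lemma auxSig_shift (hπ : π ∈ I) (a : ℕ → R) :
    auxSig hπ a = a 0 + π * auxSig hπ (fun k => a (k + 1)) := by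
  apply auxSig_eq
  intro n
  cases n with
  | zero =>
      rw [SModEq.sub_mem, pow_zero, Ideal.one_eq_top]
      simp
  | succ m =>
      have h1 : auxPart π a (m + 1) = a 0 + π * auxPart π (fun k => a (k + 1)) m := by
        rw [auxPart, Finset.sum_range_succ', auxPart, Finset.mul_sum]
        rw [pow_zero, one_mul, add_comm]
        congr 1
        refine Finset.sum_congr rfl fun k _ => by ring
      rw [SModEq.sub_mem, h1]
      have h2 := SModEq.sub_mem.mp (auxSig_spec hπ (fun k => a (k + 1)) m)
      rw [smul_eq_mul, Ideal.mul_top] at h2 ⊢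
      have h3 : a 0 + π * auxPart π (fun k => a (k + 1)) m -
          (a 0 + π * auxSig hπ (fun k => a (k + 1)))
          = π * (auxPart π (fun k => a (k + 1)) m - auxSig hπ (fun k => a (k + 1))) := by ring
      rw [h3, pow_succ']
      exact Ideal.mul_mem_mul hπ h2

lemma auxSig_shift2 (hπ : π ∈ I) (c : ℕ → ℕ → R) (a b : ℕ) :
    auxSig hπ (fun k => c (a + k) (b + k)) =
      c a b + π * auxSig hπ (fun k => c (a + 1 + k) (b + 1 + k)) := by
  rw [auxSig_shift hπ]
  have h1 : (fun k => c (a + (k + 1)) (b + (k + 1))) =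
      fun k => c (a + 1 + k) (b + 1 + k) := by
    funext k
    rw [show a + (k + 1) = a + 1 + k by omega, show b + (k + 1) = b + 1 + k by omega]
  simp only [Nat.add_zero]
  rw [h1]

lemma auxSig_telescope (hπ : π ∈ I) (b : ℕ → R) (hb : b 0 = 0) :
    auxSig hπ (fun k => b k - π * b (k + 1)) = 0 := by
  apply auxSig_eq
  intro n
  rw [SModEq.sub_mem, sub_zero, smul_eq_mul, Ideal.mul_top]
  have key : auxPart π (fun k => b k - π * b (k + 1)) n = π ^ 0 * b 0 - π ^ n * b n := by
    rw [auxPart, ← Finset.sum_range_sub' (fun k => π ^ k * b k) n]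
    exact Finset.sum_congr rfl fun k _ => by ring
  rw [key, hb, mul_zero, zero_sub]
  exact neg_mem (Ideal.mul_mem_right _ _ (Ideal.pow_mem_pow hπ n))

end SigAux

open scoped Classical in
/-- The embedding `R[[T]] → R[[x,y]]` sending a one-variable power series `f` to the
power series `f` in the variable of index `i` (so `embX R 0 f = f(x)` and
`embX R 1 g = g(y)`), given on coefficients in the obvious way. -/
noncomputable def embX (R : Type*) [CommRing R] (i : Fin 2) (f : PowerSeries R) :
    MvPowerSeries (Fin 2) R :=
  fun n => if n = Finsupp.single i (n i) then PowerSeries.coeff (n i) f else 0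

noncomputable def DD (a b : ℕ) : Fin 2 →₀ ℕ := Finsupp.single 0 a + Finsupp.single 1 b

lemma DD_apply0 (a b : ℕ) : DD a b 0 = a := by
  simp [DD, Finsupp.single_apply]

lemma DD_apply1 (a b : ℕ) : DD a b 1 = b := by
  simp [DD, Finsupp.single_apply]

lemma eq_DD (n : Fin 2 →₀ ℕ) : n = DD (n 0) (n 1) := by
  ext i
  fin_cases i
  · simpa using (DD_apply0 (n 0) (n 1)).symm
  · simpa using (DD_apply1 (n 0) (n 1)).symm

lemma DD_sub11 (a b : ℕ) : DD (a + 1) (b + 1) - DD 1 1 = DD a b := by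
  ext i
  fin_cases i
  · simpa [Finsupp.tsub_apply, DD_apply0] using rfl
  · simpa [Finsupp.tsub_apply, DD_apply1] using rfl

section Coeffs

variable {R : Type*} [CommRing R]

lemma coeff_embX0 (f : PowerSeries R) (n : Fin 2 →₀ ℕ) :
    MvPowerSeries.coeff n (embX R 0 f) =
      if n 1 = 0 then PowerSeries.coeff (n 0) f else 0 := by
  classical
  rw [MvPowerSeries.coeff_apply]
  show (if n = Finsupp.single 0 (n 0) then PowerSeries.coeff (n 0) f else 0) = _
  by_cases h : n 1 = 0
  · rw [if_pos h, if_pos]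
    ext i
    fin_cases i
    · simp [Finsupp.single_apply]
    · simpa [Finsupp.single_apply] using h
  · rw [if_neg h, if_neg]
    intro hn
    apply h
    rw [hn]
    simp [Finsupp.single_apply]

lemma coeff_embX1 (g : PowerSeries R) (n : Fin 2 →₀ ℕ) :
    MvPowerSeries.coeff n (embX R 1 g) =
      if n 0 = 0 then PowerSeries.coeff (n 1) g else 0 := by
  classical
  rw [MvPowerSeries.coeff_apply]
  show (if n = Finsupp.single 1 (n 1) then PowerSeries.coeff (n 1) g else 0) = _
  by_cases h : n 0 = 0
  · rw [if_pos h, if_pos]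
    ext i
    fin_cases i
    · simpa [Finsupp.single_apply] using h
    · simp [Finsupp.single_apply]
  · rw [if_neg h, if_neg]
    intro hn
    apply h
    rw [hn]
    simp [Finsupp.single_apply]

lemma coeff_X1_mul (g : PowerSeries R) (n : Fin 2 →₀ ℕ) :
    MvPowerSeries.coeff n (MvPowerSeries.X 1 * embX R 1 g) =
      if n 0 = 0 ∧ 1 ≤ n 1 then PowerSeries.coeff (n 1 - 1) g else 0 := by
  classical
  rw [MvPowerSeries.X_def, MvPowerSeries.coeff_monomial_mul]
  by_cases hb : (1 : ℕ) ≤ n 1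
  · rw [if_pos (Finsupp.single_le_iff.mpr hb), one_mul, coeff_embX1]
    have e0 : ((n - Finsupp.single 1 1 : Fin 2 →₀ ℕ)) 0 = n 0 := by
      rw [Finsupp.tsub_apply]
      simp [Finsupp.single_apply]
    have e1 : ((n - Finsupp.single 1 1 : Fin 2 →₀ ℕ)) 1 = n 1 - 1 := by
      rw [Finsupp.tsub_apply]
      simp
    rw [e0, e1]
    by_cases ha : n 0 = 0
    · rw [if_pos ha, if_pos ⟨ha, hb⟩]
    · rw [if_neg ha, if_neg (fun hh => ha hh.1)]
  · rw [if_neg (fun hh => hb (Finsupp.single_le_iff.mp hh)), if_neg (fun hh => hb hh.2)]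

lemma coeff_node_mul (π : R) (η : MvPowerSeries (Fin 2) R) (n : Fin 2 →₀ ℕ) :
    MvPowerSeries.coeff n
      ((MvPowerSeries.X 0 * MvPowerSeries.X 1 - (MvPowerSeries.C π : MvPowerSeries (Fin 2) R)) * η) =
      (if 1 ≤ n 0 ∧ 1 ≤ n 1 then MvPowerSeries.coeff (n - DD 1 1) η else 0)
        - π * MvPowerSeries.coeff n η := by
  classical
  rw [sub_mul, map_sub]
  congr 1
  · rw [MvPowerSeries.X_def, MvPowerSeries.X_def, MvPowerSeries.monomial_mul_monomial,
      one_mul, MvPowerSeries.coeff_monomial_mul]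
    have hc : (Finsupp.single (0 : Fin 2) 1 + Finsupp.single 1 1 ≤ n) ↔ (1 ≤ n 0 ∧ 1 ≤ n 1) := by
      constructor
      · intro h
        refine ⟨?_, ?_⟩
        · simpa [Finsupp.single_apply] using h 0
        · simpa [Finsupp.single_apply] using h 1
      · rintro ⟨h0, h1⟩ i
        fin_cases i
        · simpa [Finsupp.single_apply] using h0
        · simpa [Finsupp.single_apply] using h1
    by_cases h : 1 ≤ n 0 ∧ 1 ≤ n 1
    · rw [if_pos (hc.mpr h), if_pos h, one_mul]
      rfl
    · rw [if_neg (fun hh => h (hc.mp hh)), if_neg h]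
  · rw [MvPowerSeries.coeff_C_mul]

end Coeffs

/-- Let `(R, 𝔪)` be a complete Noetherian local ring and `π ∈ 𝔪`.  The `R`-module map
`R[[x]] × R[[y]] → R[[x,y]]/(xy - π)`, `(f, g) ↦ f(x̄) + ȳ·g(ȳ)`, is bijective:
every element of `R[[x,y]]/(xy - π)` is uniquely of the form `f(x) + g(y)` with
`g ∈ y·R[[y]]`. -/
theorem stmt11 {R : Type*} [CommRing R] [IsNoetherianRing R] [IsLocalRing R]
    [IsAdicComplete (IsLocalRing.maximalIdeal R) R]
    (π : R) (hπ : π ∈ IsLocalRing.maximalIdeal R) :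
    Function.Bijective (fun p : PowerSeries R × PowerSeries R =>
      Ideal.Quotient.mk
        (Ideal.span {MvPowerSeries.X 0 * MvPowerSeries.X 1 - (MvPowerSeries.C π : MvPowerSeries (Fin 2) R)})
        (embX R 0 p.1 + MvPowerSeries.X 1 * embX R 1 p.2)) := by
  classical
  constructor
  · rintro ⟨p1, p2⟩ ⟨q1, q2⟩ h
    simp only [Ideal.Quotient.eq, Ideal.mem_span_singleton] at h
    obtain ⟨η, hη⟩ := h
    have key1 : ∀ n : ℕ, PowerSeries.coeff n p1 = PowerSeries.coeff n q1 := by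
      intro n
      have e1 : auxSig hπ (fun k => MvPowerSeries.coeff (DD (n + k) k) (embX R 0 p1 + MvPowerSeries.X 1 * embX R 1 p2 - (embX R 0 q1 + MvPowerSeries.X 1 * embX R 1 q2)))
          = PowerSeries.coeff n p1 - PowerSeries.coeff n q1 := by
        rw [auxSig_head hπ _ ?_]
        · simp only [map_sub, map_add, coeff_embX0, coeff_X1_mul, DD_apply0, DD_apply1]
          norm_num
        · intro k hk
          simp only [map_sub, map_add, coeff_embX0, coeff_X1_mul, DD_apply0, DD_apply1]
          have c1 : ¬ (k = 0) := hk
          have c2 : ¬ (n + k = 0 ∧ 1 ≤ k) := by rintro ⟨h1, -⟩; omega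
          rw [if_neg c1, if_neg c1, if_neg c2, if_neg c2]
          ring
      have e2 : auxSig hπ (fun k => MvPowerSeries.coeff (DD (n + k) k) (embX R 0 p1 + MvPowerSeries.X 1 * embX R 1 p2 - (embX R 0 q1 + MvPowerSeries.X 1 * embX R 1 q2))) = 0 := by
        have hfun : (fun k => MvPowerSeries.coeff (DD (n + k) k) (embX R 0 p1 + MvPowerSeries.X 1 * embX R 1 p2 - (embX R 0 q1 + MvPowerSeries.X 1 * embX R 1 q2))) =
            fun k => (fun k => Nat.casesOn k (0 : R)
                fun j => MvPowerSeries.coeff (DD (n + j) j) η) k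
              - π * (fun k => Nat.casesOn k (0 : R)
                fun j => MvPowerSeries.coeff (DD (n + j) j) η) (k + 1) := by
          funext k
          rw [hη, coeff_node_mul]
          cases k with
          | zero =>
              have c : ¬ ((1:ℕ) ≤ DD (n + 0) 0 0 ∧ (1:ℕ) ≤ DD (n + 0) 0 1) := by
                rw [DD_apply0, DD_apply1]; omega
              rw [if_neg c]
              all_goals rfl
          | succ j =>
              have c : ((1:ℕ) ≤ DD (n + (j + 1)) (j + 1) 0 ∧
                  (1:ℕ) ≤ DD (n + (j + 1)) (j + 1) 1) := by
                rw [DD_apply0, DD_apply1]; omega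
              have hdd : DD (n + (j + 1)) (j + 1) - DD 1 1 = DD (n + j) j := by
                rw [show n + (j + 1) = (n + j) + 1 from by omega]
                exact DD_sub11 _ _
              rw [if_pos c, hdd]
              all_goals rfl
        rw [hfun]
        exact auxSig_telescope hπ _ rfl
      exact sub_eq_zero.mp (e1.symm.trans e2)
    have key2 : ∀ n : ℕ, PowerSeries.coeff n p2 = PowerSeries.coeff n q2 := by
      intro n
      have e1 : auxSig hπ (fun k => MvPowerSeries.coeff (DD k (n + 1 + k)) (embX R 0 p1 + MvPowerSeries.X 1 * embX R 1 p2 - (embX R 0 q1 + MvPowerSeries.X 1 * embX R 1 q2)))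
          = PowerSeries.coeff n p2 - PowerSeries.coeff n q2 := by
        rw [auxSig_head hπ _ ?_]
        · simp only [map_sub, map_add, coeff_embX0, coeff_X1_mul, DD_apply0, DD_apply1]
          norm_num
        · intro k hk
          simp only [map_sub, map_add, coeff_embX0, coeff_X1_mul, DD_apply0, DD_apply1]
          have c1 : ¬ (n + 1 + k = 0) := by omega
          have c2 : ¬ (k = 0 ∧ 1 ≤ n + 1 + k) := by rintro ⟨h1, -⟩; exact hk h1
          rw [if_neg c1, if_neg c1, if_neg c2, if_neg c2]
          ring
      have e2 : auxSig hπ (fun k => MvPowerSeries.coeff (DD k (n + 1 + k)) (embX R 0 p1 + MvPowerSeries.X 1 * embX R 1 p2 - (embX R 0 q1 + MvPowerSeries.X 1 * embX R 1 q2))) = 0 := by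
        have hfun : (fun k => MvPowerSeries.coeff (DD k (n + 1 + k)) (embX R 0 p1 + MvPowerSeries.X 1 * embX R 1 p2 - (embX R 0 q1 + MvPowerSeries.X 1 * embX R 1 q2))) =
            fun k => (fun k => Nat.casesOn k (0 : R)
                fun j => MvPowerSeries.coeff (DD j (n + 1 + j)) η) k
              - π * (fun k => Nat.casesOn k (0 : R)
                fun j => MvPowerSeries.coeff (DD j (n + 1 + j)) η) (k + 1) := by
          funext k
          rw [hη, coeff_node_mul]
          cases k with
          | zero =>
              have c : ¬ ((1:ℕ) ≤ DD 0 (n + 1 + 0) 0 ∧ (1:ℕ) ≤ DD 0 (n + 1 + 0) 1) := by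
                rw [DD_apply0, DD_apply1]; omega
              rw [if_neg c]
              all_goals rfl
          | succ j =>
              have c : ((1:ℕ) ≤ DD (j + 1) (n + 1 + (j + 1)) 0 ∧
                  (1:ℕ) ≤ DD (j + 1) (n + 1 + (j + 1)) 1) := by
                rw [DD_apply0, DD_apply1]; omega
              have hdd : DD (j + 1) (n + 1 + (j + 1)) - DD 1 1 = DD j (n + 1 + j) := by
                rw [show n + 1 + (j + 1) = (n + 1 + j) + 1 from by omega]
                exact DD_sub11 _ _
              rw [if_pos c, hdd]
              all_goals rfl
        rw [hfun]
        exact auxSig_telescope hπ _ rfl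
      exact sub_eq_zero.mp (e1.symm.trans e2)
    have hp1 : p1 = q1 := PowerSeries.ext key1
    have hp2 : p2 = q2 := PowerSeries.ext key2
    simp [hp1, hp2]
  · intro q
    obtain ⟨ξ, rfl⟩ := Ideal.Quotient.mk_surjective q
    refine ⟨(PowerSeries.mk fun n =>
        auxSig hπ (fun k => MvPowerSeries.coeff (DD (n + k) (0 + k)) ξ),
      PowerSeries.mk fun n =>
        auxSig hπ (fun k => MvPowerSeries.coeff (DD (0 + k) (n + 1 + k)) ξ)), ?_⟩
    set η : MvPowerSeries (Fin 2) R := fun m =>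
      auxSig hπ (fun k => MvPowerSeries.coeff (DD (m 0 + 1 + k) (m 1 + 1 + k)) ξ) with hη
    have main : embX R 0 (PowerSeries.mk fun n =>
          auxSig hπ (fun k => MvPowerSeries.coeff (DD (n + k) (0 + k)) ξ))
        + MvPowerSeries.X 1 * embX R 1 (PowerSeries.mk fun n =>
          auxSig hπ (fun k => MvPowerSeries.coeff (DD (0 + k) (n + 1 + k)) ξ)) - ξ
        = (MvPowerSeries.X 0 * MvPowerSeries.X 1 - (MvPowerSeries.C π : MvPowerSeries (Fin 2) R)) * (-η) := by
      apply MvPowerSeries.ext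
      intro m
      rw [mul_neg, map_neg, coeff_node_mul]
      rw [map_sub, map_add, coeff_embX0, coeff_X1_mul, PowerSeries.coeff_mk,
        PowerSeries.coeff_mk]
      have hξ : MvPowerSeries.coeff m ξ = MvPowerSeries.coeff (DD (m 0) (m 1)) ξ := by
        rw [← eq_DD m]
      have hηm : MvPowerSeries.coeff m η =
          auxSig hπ (fun k => MvPowerSeries.coeff (DD (m 0 + 1 + k) (m 1 + 1 + k)) ξ) := by
        rw [MvPowerSeries.coeff_apply, hη]
      have hshift := fun a b => auxSig_shift2 hπ
        (fun x y => MvPowerSeries.coeff (DD x y) ξ) a b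
      rcases Nat.eq_zero_or_pos (m 1) with h1 | h1
      · have cX : ¬ (m 0 = 0 ∧ 1 ≤ m 1) := by omega
        have cN : ¬ (1 ≤ m 0 ∧ 1 ≤ m 1) := by omega
        rw [if_pos h1, if_neg cX, if_neg cN, hηm, hξ, h1, hshift (m 0) 0]
        ring
      · rcases Nat.eq_zero_or_pos (m 0) with h0 | h0
        · obtain ⟨b, hb⟩ : ∃ b, m 1 = b + 1 := ⟨m 1 - 1, by omega⟩
          have c0 : ¬ (m 1 = 0) := by omega
          have cN : ¬ (1 ≤ m 0 ∧ 1 ≤ m 1) := by omega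
          rw [if_neg c0, if_pos ⟨h0, h1⟩, if_neg cN, hηm, hξ, h0, hb,
            show b + 1 - 1 = b from by omega, hshift 0 (b + 1)]
          ring
        · have c0 : ¬ (m 1 = 0) := by omega
          have cX : ¬ (m 0 = 0 ∧ 1 ≤ m 1) := by omega
          have hcm : MvPowerSeries.coeff (m - DD 1 1) η =
              auxSig hπ (fun k => MvPowerSeries.coeff (DD (m 0 + k) (m 1 + k)) ξ) := by
            have ea : ((m - DD 1 1 : Fin 2 →₀ ℕ)) 0 + 1 = m 0 := by
              rw [Finsupp.tsub_apply, DD_apply0]; omega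
            have eb : ((m - DD 1 1 : Fin 2 →₀ ℕ)) 1 + 1 = m 1 := by
              rw [Finsupp.tsub_apply, DD_apply1]; omega
            calc MvPowerSeries.coeff (m - DD 1 1) η
                = auxSig hπ (fun k => MvPowerSeries.coeff
                    (DD (((m - DD 1 1 : Fin 2 →₀ ℕ)) 0 + 1 + k)
                        (((m - DD 1 1 : Fin 2 →₀ ℕ)) 1 + 1 + k)) ξ) := by
                  rw [MvPowerSeries.coeff_apply, hη]
              _ = _ := by rw [ea, eb]
          rw [if_neg c0, if_neg cX, if_pos ⟨h0, h1⟩, hηm, hξ, hcm, hshift (m 0) (m 1)]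
          ring
    exact Ideal.Quotient.eq.mpr (Ideal.mem_span_singleton.mpr ⟨-η, main⟩)
end

section
/- Fix an integer n ≥ 1. Let S and S' be finite multisets of pairs of integers (e, ν) with e dividing n, e ≥ 2, 1 ≤ ν < e and gcd(ν, e) = 1. Suppose that for every integer m ≥ 1 and every integer l, the equality ∑_{(e,ν)∈S} (⟨(lν − m)/e⟩ + m/e) = ∑_{(e,ν)∈S'} (⟨(lν − m)/e⟩ + m/e) holds in ℚ, where ⟨x⟩ = x − ⌊x⌋ denotes the fractional part and the sums are taken with multiplicity. Then S = S'. -/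
lemma emod_step (e : ℕ) (he : 1 ≤ e) (x : ℤ) :
    x % e - (x - 1) % e = 1 - e * (if (e : ℤ) ∣ x then 1 else 0) := by
  have he' : (0:ℤ) < e := by exact_mod_cast he
  by_cases hd : (e : ℤ) ∣ x
  · have h0 : x % e = 0 := Int.emod_eq_zero_of_dvd hd
    have h1 : (x - 1) % e = e - 1 := by
      have h2 : (x - 1) % e = (e - 1) % e := by
        rw [Int.emod_eq_emod_iff_emod_sub_eq_zero]
        have : x - 1 - (e - 1) = x - e := by ring
        rw [this]
        exact Int.emod_eq_zero_of_dvd (dvd_sub hd dvd_rfl)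
      rw [h2, Int.emod_eq_of_lt (by omega) (by omega)]
    rw [h0, h1, if_pos hd]; ring
  · have hr0 : 0 ≤ x % e := Int.emod_nonneg x (by omega)
    have hrlt : x % e < e := Int.emod_lt_of_pos x he'
    have hrne : x % e ≠ 0 := fun h => hd (Int.dvd_of_emod_eq_zero h)
    have h1 : (x - 1) % e = x % e - 1 := by
      have h2 : (x - 1) % e = (x % e - 1) % e := by
        rw [Int.emod_eq_emod_iff_emod_sub_eq_zero]
        have : x - 1 - (x % e - 1) = x - x % e := by ring
        rw [this]
        exact Int.emod_eq_zero_of_dvd (Int.dvd_self_sub_of_emod_eq rfl)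
      rw [h2, Int.emod_eq_of_lt (by omega) (by omega)]
    rw [h1, if_neg hd]; ring

lemma fract_step (e : ℕ) (he : 1 ≤ e) (x : ℤ) :
    Int.fract ((x : ℚ) / e) - Int.fract (((x : ℚ) - 1) / e)
      = 1 / e - (if (e : ℤ) ∣ x then 1 else 0) := by
  have he' : (0:ℚ) < e := by exact_mod_cast he
  have h1 : ((x : ℚ) - 1) = ((x - 1 : ℤ) : ℚ) := by push_cast; ring
  rw [h1, Int.fract_div_intCast_eq_div_intCast_mod, Int.fract_div_intCast_eq_div_intCast_mod,
    div_sub_div_same]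
  have h2 : ((x % e : ℤ) : ℚ) - ((x - 1) % e : ℤ) = 1 - e * (if (e : ℤ) ∣ x then 1 else 0) := by
    have h3 := emod_step e he x
    split <;> rename_i hh
    · rw [if_pos hh] at h3; exact_mod_cast congrArg (fun z : ℤ => (z : ℚ)) h3
    · rw [if_neg hh] at h3; exact_mod_cast congrArg (fun z : ℤ => (z : ℚ)) h3
  rw [h2]
  split <;> field_simp


lemma msum_sub {α : Type*} (s : Multiset α) (f g : α → ℚ) :
    (s.map fun x => f x - g x).sum = (s.map f).sum - (s.map g).sum := by
  induction s using Multiset.induction_on with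
  | empty => simp
  | cons a s ih => simp [ih]; ring

lemma msum_swap {α β : Type*} (s : Multiset α) (D : Finset β) (f : β → α → ℚ) :
    ∑ b ∈ D, (s.map (f b)).sum = (s.map fun a => ∑ b ∈ D, f b a).sum := by
  induction s using Multiset.induction_on with
  | empty => simp
  | cons a s ih => simp [Finset.sum_add_distrib, ih]

lemma msum_swap_nat {α β : Type*} (s : Multiset α) (D : Finset β) (f : β → α → ℕ) :
    ∑ b ∈ D, (s.map (f b)).sum = (s.map fun a => ∑ b ∈ D, f b a).sum := by
  induction s using Multiset.induction_on with
  | empty => simp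
  | cons a s ih => simp [Finset.sum_add_distrib, ih]

lemma msum_cast {α : Type*} (s : Multiset α) (f : α → ℕ) :
    (s.map fun a => ((f a : ℕ) : ℚ)).sum = ((s.map f).sum : ℚ) := by
  induction s using Multiset.induction_on with
  | empty => simp
  | cons a s ih => simp only [Multiset.map_cons, Multiset.sum_cons, ih]; push_cast; ring

lemma msum_ind {α : Type*} [DecidableEq α] (Y : Multiset α) (a : α) (c : ℕ) :
    (Y.map fun q => if q = a then c else 0).sum = Y.count a * c := by
  induction Y using Multiset.induction_on with
  | empty => simp
  | cons x Y ih =>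
    simp only [Multiset.map_cons, Multiset.sum_cons, ih, Multiset.count_cons]
    by_cases hxa : x = a
    · rw [if_pos hxa, if_pos hxa.symm, add_mul, one_mul, add_comm]
    · rw [if_neg hxa, if_neg (fun h => hxa h.symm), add_zero, zero_add]




section
variable (n : ℕ) (hn : 1 ≤ n) (S S' : Multiset (ℕ × ℕ))

-- rewrite a CW sum difference as a sum of divisibility indicators
lemma per_multiset (X : Multiset (ℕ × ℕ))
    (hX : ∀ p ∈ X, p.1 ∣ n ∧ 2 ≤ p.1 ∧ 1 ≤ p.2 ∧ p.2 < p.1 ∧ Nat.gcd p.2 p.1 = 1)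
    (m : ℕ) (l : ℤ) :
    (X.map fun p => if (p.1 : ℤ) ∣ l * p.2 - (m : ℤ) then (1:ℚ) else 0).sum
      = (X.map fun p => Int.fract (((l : ℚ) * p.2 - (m+1 : ℕ)) / p.1) + ((m+1 : ℕ) : ℚ) / p.1).sum
        - (X.map fun p => Int.fract (((l : ℚ) * p.2 - m) / p.1) + (m : ℚ) / p.1).sum := by
  rw [← msum_sub]
  apply congrArg
  apply Multiset.map_congr rfl
  intro p hp
  obtain ⟨-, he2, -, -, -⟩ := hX p hp
  have he : 1 ≤ p.1 := by omega
  have hx : ((l * (p.2:ℤ) - (m:ℤ) : ℤ) : ℚ) = (l : ℚ) * p.2 - m := by push_cast; ring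
  have hx1 : ((l : ℚ) * p.2 - (m+1 : ℕ)) = ((l * (p.2:ℤ) - (m:ℤ) : ℤ) : ℚ) - 1 := by
    push_cast; ring
  rw [hx1, ← hx]
  have hf := fract_step p.1 he (l * (p.2:ℤ) - (m:ℤ))
  have hcast : ((m+1 : ℕ) : ℚ) = (m : ℚ) + 1 := by push_cast; ring
  rw [hcast]
  have hne : (p.1 : ℚ) ≠ 0 := by positivity
  field_simp at hf ⊢
  linarith [hf]
end

section
variable {n : ℕ} {S S' : Multiset (ℕ × ℕ)}

lemma stepA (hn : 1 ≤ n)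
    (hS : ∀ p ∈ S, p.1 ∣ n ∧ 2 ≤ p.1 ∧ 1 ≤ p.2 ∧ p.2 < p.1 ∧ Nat.gcd p.2 p.1 = 1)
    (hS' : ∀ p ∈ S', p.1 ∣ n ∧ 2 ≤ p.1 ∧ 1 ≤ p.2 ∧ p.2 < p.1 ∧ Nat.gcd p.2 p.1 = 1)
    (h : ∀ m : ℕ, 1 ≤ m → ∀ l : ℤ,
      (S.map fun p => Int.fract (((l : ℚ) * p.2 - m) / p.1) + (m : ℚ) / p.1).sum =
      (S'.map fun p => Int.fract (((l : ℚ) * p.2 - m) / p.1) + (m : ℚ) / p.1).sum)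
    (l m : ℤ) :
    (S.map fun p => if (p.1 : ℤ) ∣ l * p.2 - m then (1:ℚ) else 0).sum
      = (S'.map fun p => if (p.1 : ℤ) ∣ l * p.2 - m then (1:ℚ) else 0).sum := by
  have key : ∀ (mm : ℕ), 1 ≤ mm →
      (S.map fun p => if (p.1 : ℤ) ∣ l * p.2 - (mm : ℤ) then (1:ℚ) else 0).sum
      = (S'.map fun p => if (p.1 : ℤ) ∣ l * p.2 - (mm : ℤ) then (1:ℚ) else 0).sum := by
    intro mm hmm
    rw [per_multiset n S hS mm l, per_multiset n S' hS' mm l,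
      h mm hmm l, h (mm+1) (by omega) l]
  -- extend to all integers m
  set k : ℕ := (1 - m).toNat with hk
  have hk1 : (1 : ℤ) - m ≤ (k : ℤ) := Int.self_le_toNat _
  have hk0 : (0 : ℤ) ≤ (k : ℤ) := by positivity
  have hnk : (k : ℤ) ≤ (n : ℤ) * k := le_mul_of_one_le_left hk0 (by exact_mod_cast hn)
  have hM : (1 : ℤ) ≤ m + (n : ℤ) * k := by omega
  set m' : ℕ := (m + (n : ℤ) * k).toNat with hm'
  have hm'c : (m' : ℤ) = m + (n : ℤ) * k := Int.toNat_of_nonneg (by omega)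
  have hm'1 : 1 ≤ m' := by omega
  have trans : ∀ (X : Multiset (ℕ × ℕ)),
      (∀ p ∈ X, p.1 ∣ n ∧ 2 ≤ p.1 ∧ 1 ≤ p.2 ∧ p.2 < p.1 ∧ Nat.gcd p.2 p.1 = 1) →
      (X.map fun p => if (p.1 : ℤ) ∣ l * p.2 - (m' : ℤ) then (1:ℚ) else 0).sum
      = (X.map fun p => if (p.1 : ℤ) ∣ l * p.2 - m then (1:ℚ) else 0).sum := by
    intro X hX
    apply congrArg
    apply Multiset.map_congr rfl
    intro p hp
    obtain ⟨hdn, -, -, -, -⟩ := hX p hp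
    have hd : (p.1 : ℤ) ∣ (m' : ℤ) - m := by
      rw [hm'c, add_sub_cancel_left]
      exact Dvd.dvd.mul_right (Int.natCast_dvd_natCast.mpr hdn) _
    have hiff : ((p.1 : ℤ) ∣ l * p.2 - (m' : ℤ)) ↔ ((p.1 : ℤ) ∣ l * p.2 - m) := by
      constructor
      · intro hdd
        have := dvd_add hdd hd
        simpa [sub_add_sub_cancel] using this
      · intro hdd
        have := dvd_sub hdd hd
        have h2 : l * (p.2:ℤ) - m - ((m':ℤ) - m) = l * p.2 - m' := by ring
        rwa [h2] at this
    simp [hiff]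
  rw [← trans S hS, ← trans S' hS', key m' hm'1]
end


lemma window (q : ℕ) (hq : 1 ≤ q) (A : ℕ) (r0 : ℤ) :
    ((Finset.Ico A (A+q)).filter fun l : ℕ => (q:ℤ) ∣ (l:ℤ) - r0).card = 1 := by
  have hq' : (0:ℤ) < q := by exact_mod_cast hq
  set t : ℤ := (r0 - A) % q with ht
  have ht0 : 0 ≤ t := Int.emod_nonneg _ (by omega)
  have ht1 : t < q := Int.emod_lt_of_pos _ hq'
  set x : ℕ := A + t.toNat with hx
  have hxc : (x : ℤ) = A + t := by
    rw [hx]; push_cast [Int.toNat_of_nonneg ht0]; ring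
  have hdx : (q:ℤ) ∣ (x:ℤ) - r0 := by
    have hdef : t = (r0 - A) - q * ((r0 - A) / q) := by rw [ht, Int.emod_def]
    refine ⟨-((r0 - A) / q), ?_⟩
    rw [hxc, mul_neg]
    omega
  rw [Finset.card_eq_one]
  refine ⟨x, ?_⟩
  ext l
  simp only [Finset.mem_filter, Finset.mem_Ico, Finset.mem_singleton]
  constructor
  · rintro ⟨⟨hl1, hl2⟩, hdl⟩
    have hdiff : (q:ℤ) ∣ (l:ℤ) - x := by
      have := dvd_sub hdl hdx
      have h2 : (l:ℤ) - r0 - ((x:ℤ) - r0) = (l:ℤ) - x := by ring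
      rwa [h2] at this
    have hb1 : (x:ℤ) < A + q := by omega
    have hzero : (l:ℤ) - x = 0 := by
      apply Int.eq_zero_of_dvd_of_natAbs_lt_natAbs hdiff
      have hl1' : (A:ℤ) ≤ l := by exact_mod_cast hl1
      have hl2' : (l:ℤ) < A + q := by exact_mod_cast hl2
      have hx1 : (A:ℤ) ≤ x := by omega
      omega
    omega
  · rintro rfl
    refine ⟨⟨by omega, by omega⟩, hdx⟩

lemma countC (q : ℕ) (hq : 1 ≤ q) (c : ℕ) (r0 : ℤ) :
    ((Finset.range (q*c)).filter fun l : ℕ => (q:ℤ) ∣ (l:ℤ) - r0).card = c := by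
  induction c with
  | zero => simp
  | succ c ih =>
    have hsplit : Finset.range (q*(c+1)) =
        Finset.range (q*c) ∪ Finset.Ico (q*c) (q*c+q) := by
      rw [Finset.range_eq_Ico, Finset.range_eq_Ico,
        Finset.Ico_union_Ico_eq_Ico (by omega) (by omega)]
      congr 1
    rw [hsplit, Finset.filter_union, Finset.card_union_of_disjoint, ih,
      window q hq (q*c) r0]
    exact Finset.disjoint_filter_filter (by
      rw [Finset.range_eq_Ico]
      exact Finset.Ico_disjoint_Ico_consecutive 0 (q*c) (q*c+q))

lemma count2 (n e : ℕ) (he : 1 ≤ e) (hen : e ∣ n) (a s : ℤ) :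
    ((Finset.range n).filter fun l : ℕ => (e:ℤ) ∣ (l:ℤ)*a + s).card
      = if (Int.gcd (e:ℤ) a : ℤ) ∣ s then n / e * Int.gcd (e:ℤ) a else 0 := by
  set g : ℕ := Int.gcd (e:ℤ) a with hg
  have hge : (g:ℤ) ∣ (e:ℤ) := Int.gcd_dvd_left _ _
  have hga : (g:ℤ) ∣ a := Int.gcd_dvd_right _ _
  have hg1 : 1 ≤ g := by
    rcases Nat.eq_zero_or_pos g with h0 | h
    · exfalso
      have := Int.gcd_eq_zero_iff.mp h0
      have he0 : (e:ℤ) = 0 := this.1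
      simp only [Int.natCast_eq_zero] at he0
      omega
    · omega
  by_cases hds : (g:ℤ) ∣ s
  · rw [if_pos hds]
    obtain ⟨s', hs'⟩ := hds
    obtain ⟨e', he'⟩ : g ∣ e := Int.natCast_dvd_natCast.mp hge
    obtain ⟨a', ha'⟩ := hga
    have he'pos : 1 ≤ e' := by
      rcases Nat.eq_zero_or_pos e' with h0 | h
      · subst h0; simp at he'; omega
      · omega
    have hbez := Int.gcd_eq_gcd_ab (e:ℤ) a
    set u := Int.gcdA (e:ℤ) a with hu
    set w := Int.gcdB (e:ℤ) a with hw
    set r0 : ℤ := -(s' * w) with hr0def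
    have hr0 : (e:ℤ) ∣ r0 * a + s := by
      refine ⟨s' * u, ?_⟩
      have h1 : r0 * a + s = s' * ((g:ℤ) - a * w) := by rw [hs', hr0def]; ring
      rw [h1, hbez]; ring
    have hgne : (g:ℤ) ≠ 0 := Int.natCast_ne_zero.mpr (by omega)
    have hcop : IsCoprime ((e:ℤ)/g) (a/g) :=
      Int.isCoprime_iff_gcd_eq_one.mpr (Int.gcd_div_gcd_div_gcd (by omega))
    have hEg : (e:ℤ)/(g:ℤ) = (e':ℤ) := by
      rw [he']; push_cast; rw [Int.mul_ediv_cancel_left _ hgne]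
    have hag : a/(g:ℤ) = a' := by rw [ha', Int.mul_ediv_cancel_left _ hgne]
    rw [hEg, hag] at hcop
    have hiff : ∀ l : ℕ, ((e:ℤ) ∣ (l:ℤ)*a + s) ↔ ((e':ℤ) ∣ (l:ℤ) - r0) := by
      intro l
      constructor
      · intro hd
        have h1 : (e:ℤ) ∣ ((l:ℤ) - r0) * a := by
          have h2 := dvd_sub hd hr0
          have h3 : (l:ℤ)*a + s - (r0 * a + s) = ((l:ℤ) - r0) * a := by ring
          rwa [h3] at h2
        have h4 : ((g:ℤ)*(e':ℤ)) ∣ ((g:ℤ) * (((l:ℤ) - r0) * a')) := by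
          have hee : (e:ℤ) = (g:ℤ)*(e':ℤ) := by rw [he']; push_cast; ring
          have haa : ((l:ℤ) - r0) * a = (g:ℤ) * (((l:ℤ) - r0) * a') := by rw [ha']; ring
          rw [← hee, ← haa]; exact h1
        have h5 : (e':ℤ) ∣ ((l:ℤ) - r0) * a' := (mul_dvd_mul_iff_left hgne).mp h4
        exact hcop.dvd_of_dvd_mul_right h5
      · intro hd
        obtain ⟨c, hc⟩ := hd
        have h6 : (l:ℤ)*a + s = (r0*a + s) + (e':ℤ)*c*a := by
          have : (l:ℤ) = r0 + (e':ℤ)*c := by omega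
          rw [this]; ring
        rw [h6]
        refine dvd_add hr0 ⟨c*a', ?_⟩
        rw [he', ha']; push_cast; ring
    have hfe : ((Finset.range n).filter fun l : ℕ => (e:ℤ) ∣ (l:ℤ)*a + s)
        = ((Finset.range n).filter fun l : ℕ => (e':ℤ) ∣ (l:ℤ) - r0) :=
      Finset.filter_congr (fun l _ => by rw [hiff l])
    obtain ⟨d, hd⟩ := hen
    have hc0 : n = e' * (g * d) := by rw [hd, he']; ring
    rw [hfe, hc0, countC e' he'pos (g*d) r0]
    have h7 : e' * (g*d) = e * d := by rw [he']; ring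
    rw [h7, Nat.mul_div_cancel_left d (by omega : 0 < e)]
    ring
  · rw [if_neg hds, Finset.card_eq_zero, Finset.filter_eq_empty_iff]
    intro l _
    intro hddd
    apply hds
    have h1 : (g:ℤ) ∣ (l:ℤ)*a + s := dvd_trans hge hddd
    have h2 : (g:ℤ) ∣ (l:ℤ)*a := Dvd.dvd.mul_left hga l
    have := dvd_sub h1 h2
    simpa using this






section
variable {n : ℕ} {S S' : Multiset (ℕ × ℕ)}

lemma Psi (hn : 1 ≤ n)
    (hS : ∀ p ∈ S, p.1 ∣ n ∧ 2 ≤ p.1 ∧ 1 ≤ p.2 ∧ p.2 < p.1 ∧ Nat.gcd p.2 p.1 = 1)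
    (hS' : ∀ p ∈ S', p.1 ∣ n ∧ 2 ≤ p.1 ∧ 1 ≤ p.2 ∧ p.2 < p.1 ∧ Nat.gcd p.2 p.1 = 1)
    (hA : ∀ l m : ℤ,
      (S.map fun p => if (p.1 : ℤ) ∣ l * p.2 - m then (1:ℚ) else 0).sum
      = (S'.map fun p => if (p.1 : ℤ) ∣ l * p.2 - m then (1:ℚ) else 0).sum)
    (v : ℤ) (t : ℕ) :
    (S.map fun p => if Int.gcd (p.1:ℤ) ((p.2:ℤ) - v) ∣ t
        then n / p.1 * Int.gcd (p.1:ℤ) ((p.2:ℤ) - v) else 0).sum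
    = (S'.map fun p => if Int.gcd (p.1:ℤ) ((p.2:ℤ) - v) ∣ t
        then n / p.1 * Int.gcd (p.1:ℤ) ((p.2:ℤ) - v) else 0).sum := by
  have side : ∀ (X : Multiset (ℕ × ℕ)),
      (∀ p ∈ X, p.1 ∣ n ∧ 2 ≤ p.1 ∧ 1 ≤ p.2 ∧ p.2 < p.1 ∧ Nat.gcd p.2 p.1 = 1) →
      (X.map fun p => ∑ l ∈ Finset.range n,
          (if (p.1 : ℤ) ∣ (l:ℤ) * p.2 - ((l:ℤ)*v - (t:ℤ)) then (1:ℚ) else 0)).sum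
      = ((X.map fun p => if Int.gcd (p.1:ℤ) ((p.2:ℤ) - v) ∣ t
          then n / p.1 * Int.gcd (p.1:ℤ) ((p.2:ℤ) - v) else 0).sum : ℚ) := by
    intro X hX
    rw [← msum_cast]
    apply congrArg
    apply Multiset.map_congr rfl
    intro p hp
    obtain ⟨hdn, he2, -, -, -⟩ := hX p hp
    have hrw : ∀ l : ℕ, ((l:ℤ) * p.2 - ((l:ℤ)*v - (t:ℤ))) = (l:ℤ)*((p.2:ℤ) - v) + t := by
      intro l; ring
    calc (∑ l ∈ Finset.range n,
          (if (p.1 : ℤ) ∣ (l:ℤ) * p.2 - ((l:ℤ)*v - (t:ℤ)) then (1:ℚ) else 0))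
        = ∑ l ∈ Finset.range n,
          (if (p.1 : ℤ) ∣ (l:ℤ)*((p.2:ℤ) - v) + t then (1:ℚ) else 0) := by
          exact Finset.sum_congr rfl fun l _ => by rw [hrw l]
      _ = (((Finset.range n).filter fun l : ℕ =>
            (p.1:ℤ) ∣ (l:ℤ)*((p.2:ℤ) - v) + t).card : ℚ) := by
          rw [Finset.sum_boole]
      _ = _ := by
          rw [count2 n p.1 (by omega) hdn ((p.2:ℤ) - v) (t:ℤ)]
          by_cases hdv : (Int.gcd (p.1:ℤ) ((p.2:ℤ) - v) : ℤ) ∣ (t:ℤ)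
          · have h2 := Int.natCast_dvd_natCast.mp hdv
            simp [hdv, h2]
          · have h2 : ¬ (Int.gcd (p.1:ℤ) ((p.2:ℤ) - v)) ∣ t :=
              fun hh => hdv (Int.natCast_dvd_natCast.mpr hh)
            simp [hdv, h2]
  have hsum : ∑ l ∈ Finset.range n,
      (S.map fun p => if (p.1 : ℤ) ∣ (l:ℤ) * p.2 - ((l:ℤ)*v - (t:ℤ)) then (1:ℚ) else 0).sum
      = ∑ l ∈ Finset.range n,
      (S'.map fun p => if (p.1 : ℤ) ∣ (l:ℤ) * p.2 - ((l:ℤ)*v - (t:ℤ)) then (1:ℚ) else 0).sum :=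
    Finset.sum_congr rfl fun l _ => hA (l:ℤ) ((l:ℤ)*v - (t:ℤ))
  rw [msum_swap, msum_swap, side S hS, side S' hS'] at hsum
  exact_mod_cast hsum
end



section
variable {n : ℕ} {S S' : Multiset (ℕ × ℕ)}

-- relate the divisor-sum of Phi to Psi
lemma relPhi (X : Multiset (ℕ × ℕ)) (v : ℤ) (t : ℕ) (ht : 1 ≤ t) :
    (X.map fun p => if Int.gcd (p.1:ℤ) ((p.2:ℤ) - v) ∣ t
        then n / p.1 * Int.gcd (p.1:ℤ) ((p.2:ℤ) - v) else 0).sum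
    = ∑ u ∈ t.divisors, (X.map fun p => if Int.gcd (p.1:ℤ) ((p.2:ℤ) - v) = u
        then n / p.1 * Int.gcd (p.1:ℤ) ((p.2:ℤ) - v) else 0).sum := by
  rw [msum_swap_nat]
  apply congrArg
  apply Multiset.map_congr rfl
  intro p _
  rw [Finset.sum_ite_eq t.divisors (Int.gcd (p.1:ℤ) ((p.2:ℤ) - v))
    (fun _ => n / p.1 * Int.gcd (p.1:ℤ) ((p.2:ℤ) - v))]
  by_cases hdv : Int.gcd (p.1:ℤ) ((p.2:ℤ) - v) ∣ t
  · rw [if_pos hdv, if_pos (Nat.mem_divisors.mpr ⟨hdv, by omega⟩)]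
  · rw [if_neg hdv, if_neg (fun hh => hdv (Nat.mem_divisors.mp hh).1)]

lemma Phi (hn : 1 ≤ n)
    (hPsi : ∀ (v : ℤ) (t : ℕ),
      (S.map fun p => if Int.gcd (p.1:ℤ) ((p.2:ℤ) - v) ∣ t
          then n / p.1 * Int.gcd (p.1:ℤ) ((p.2:ℤ) - v) else 0).sum
      = (S'.map fun p => if Int.gcd (p.1:ℤ) ((p.2:ℤ) - v) ∣ t
          then n / p.1 * Int.gcd (p.1:ℤ) ((p.2:ℤ) - v) else 0).sum) :
    ∀ (t : ℕ), 1 ≤ t → ∀ (v : ℤ),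
      (S.map fun p => if Int.gcd (p.1:ℤ) ((p.2:ℤ) - v) = t
          then n / p.1 * Int.gcd (p.1:ℤ) ((p.2:ℤ) - v) else 0).sum
      = (S'.map fun p => if Int.gcd (p.1:ℤ) ((p.2:ℤ) - v) = t
          then n / p.1 * Int.gcd (p.1:ℤ) ((p.2:ℤ) - v) else 0).sum := by
  intro t
  induction t using Nat.strong_induction_on with
  | _ t IH =>
    intro ht v
    have h1 := hPsi v t
    rw [relPhi S v t ht, relPhi S' v t ht,
      Finset.sum_eq_add_sum_sdiff_singleton_of_mem (Nat.mem_divisors_self t (by omega)),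
      Finset.sum_eq_add_sum_sdiff_singleton_of_mem (Nat.mem_divisors_self t (by omega))] at h1
    have h2 : ∑ u ∈ t.divisors \ {t},
        (S.map fun p => if Int.gcd (p.1:ℤ) ((p.2:ℤ) - v) = u
          then n / p.1 * Int.gcd (p.1:ℤ) ((p.2:ℤ) - v) else 0).sum
        = ∑ u ∈ t.divisors \ {t},
        (S'.map fun p => if Int.gcd (p.1:ℤ) ((p.2:ℤ) - v) = u
          then n / p.1 * Int.gcd (p.1:ℤ) ((p.2:ℤ) - v) else 0).sum := by
      apply Finset.sum_congr rfl
      intro u hu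
      rw [Finset.mem_sdiff, Nat.mem_divisors, Finset.mem_singleton] at hu
      obtain ⟨⟨hud, -⟩, hune⟩ := hu
      have hu1 : 1 ≤ u := by
        rcases Nat.eq_zero_or_pos u with h0 | h
        · exfalso; subst h0; exact (by omega : ¬ t = 0) (Nat.eq_zero_of_zero_dvd hud)
        · omega
      have hult : u < t := Nat.lt_of_le_of_ne (Nat.le_of_dvd (by omega) hud) hune
      exact IH u hult hu1 v
    omega
end



section
variable {n : ℕ} {S S' : Multiset (ℕ × ℕ)}

lemma mainCount (hn : 1 ≤ n)
    (hS : ∀ p ∈ S, p.1 ∣ n ∧ 2 ≤ p.1 ∧ 1 ≤ p.2 ∧ p.2 < p.1 ∧ Nat.gcd p.2 p.1 = 1)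
    (hS' : ∀ p ∈ S', p.1 ∣ n ∧ 2 ≤ p.1 ∧ 1 ≤ p.2 ∧ p.2 < p.1 ∧ Nat.gcd p.2 p.1 = 1)
    (hPhi : ∀ (t : ℕ), 1 ≤ t → ∀ (v : ℤ),
      (S.map fun p => if Int.gcd (p.1:ℤ) ((p.2:ℤ) - v) = t
          then n / p.1 * Int.gcd (p.1:ℤ) ((p.2:ℤ) - v) else 0).sum
      = (S'.map fun p => if Int.gcd (p.1:ℤ) ((p.2:ℤ) - v) = t
          then n / p.1 * Int.gcd (p.1:ℤ) ((p.2:ℤ) - v) else 0).sum) :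
    ∀ p : ℕ × ℕ, S.count p = S'.count p := by
  have hzero : ∀ (X : Multiset (ℕ × ℕ)),
      (∀ p ∈ X, p.1 ∣ n ∧ 2 ≤ p.1 ∧ 1 ≤ p.2 ∧ p.2 < p.1 ∧ Nat.gcd p.2 p.1 = 1) →
      ∀ p : ℕ × ℕ, ¬(p.1 ∣ n ∧ 2 ≤ p.1 ∧ 1 ≤ p.2 ∧ p.2 < p.1 ∧ Nat.gcd p.2 p.1 = 1) →
      X.count p = 0 :=
    fun X hX p hp => Multiset.count_eq_zero.mpr (fun hm => hp (hX p hm))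
  suffices key : ∀ k : ℕ, ∀ p : ℕ × ℕ, p.1 * k = n → S.count p = S'.count p by
    intro p
    by_cases hdvd : p.1 ∣ n
    · obtain ⟨k, hk⟩ := hdvd
      exact key k p hk.symm
    · rw [hzero S hS p (fun hc => hdvd hc.1), hzero S' hS' p (fun hc => hdvd hc.1)]
  intro k
  induction k using Nat.strong_induction_on with
  | _ k IH =>
    rintro ⟨E, v⟩ hpk
    simp only at hpk
    by_cases hval : 2 ≤ E ∧ 1 ≤ v ∧ v < E ∧ Nat.gcd v E = 1
    · obtain ⟨hE2, hv1, hvE, hgcd⟩ := hval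
      have hEn : E ∣ n := ⟨k, hpk.symm⟩
      have hnE1 : 1 ≤ n / E * E := by
        have h1 : E ≤ n := Nat.le_of_dvd (by omega) hEn
        have h2 : 0 < n / E := Nat.div_pos h1 (by omega)
        have := Nat.mul_le_mul h2 (by omega : 1 ≤ E)
        omega
      have hPhiE := hPhi E (by omega) (v:ℤ)
      -- decomposition
      have dec : ∀ (X : Multiset (ℕ × ℕ)),
          (∀ p ∈ X, p.1 ∣ n ∧ 2 ≤ p.1 ∧ 1 ≤ p.2 ∧ p.2 < p.1 ∧ Nat.gcd p.2 p.1 = 1) →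
          (X.map fun q => if Int.gcd (q.1:ℤ) ((q.2:ℤ) - (v:ℤ)) = E
              then n / q.1 * Int.gcd (q.1:ℤ) ((q.2:ℤ) - (v:ℤ)) else 0).sum
          = X.count (E, v) * (n / E * E)
            + ((X.filter fun q => E ∣ q.1 ∧ q.1 ≠ E).map
                fun q => if Int.gcd (q.1:ℤ) ((q.2:ℤ) - (v:ℤ)) = E
                  then n / q.1 * Int.gcd (q.1:ℤ) ((q.2:ℤ) - (v:ℤ)) else 0).sum := by
        intro X hX
        conv_lhs => rw [← Multiset.filter_add_not (fun q => q.1 = E) X]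
        rw [Multiset.map_add, Multiset.sum_add]
        congr 1
        · -- part with q.1 = E
          have hper : ∀ q ∈ X.filter (fun q => q.1 = E),
              (if Int.gcd (q.1:ℤ) ((q.2:ℤ) - (v:ℤ)) = E
                then n / q.1 * Int.gcd (q.1:ℤ) ((q.2:ℤ) - (v:ℤ)) else 0)
              = (if q = (E, v) then n / E * E else 0) := by
            intro q hq
            rw [Multiset.mem_filter] at hq
            obtain ⟨hqX, hqE⟩ := hq
            obtain ⟨-, -, hq1, hqlt, -⟩ := hX q hqX
            by_cases hq2 : q.2 = v
            · have hqv : q = (E, v) := Prod.ext hqE hq2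
              rw [if_pos hqv]
              have hz : ((q.2:ℤ) - (v:ℤ)) = 0 := by
                rw [hq2]; ring
              rw [hz, Int.gcd_zero_right, hqE]
              simp [Int.natAbs_natCast]
            · have hqv : q ≠ (E, v) := fun hc => hq2 (by rw [hc])
              rw [if_neg hqv]
              apply if_neg
              intro hgE
              have hdvd : (E:ℤ) ∣ ((q.2:ℤ) - (v:ℤ)) := by
                rw [← hgE]
                exact Int.gcd_dvd_right _ _
              have hz : ((q.2:ℤ) - (v:ℤ)) = 0 := by
                apply Int.eq_zero_of_dvd_of_natAbs_lt_natAbs hdvd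
                have hq2' : q.2 < E := by omega
                simp only [Int.natAbs_natCast]
                omega
              apply hq2
              omega
          rw [Multiset.map_congr rfl hper, msum_ind, Multiset.count_filter, if_pos rfl]
        · -- part with q.1 ≠ E
          conv_lhs => rw [← Multiset.filter_add_not (fun q => E ∣ q.1)
            (X.filter (fun q => ¬ q.1 = E)), Multiset.map_add, Multiset.sum_add]
          have hz2 : ((Multiset.filter (fun q => ¬ E ∣ q.1)
              (X.filter (fun q => ¬ q.1 = E))).map
              fun q => if Int.gcd (q.1:ℤ) ((q.2:ℤ) - (v:ℤ)) = E
                then n / q.1 * Int.gcd (q.1:ℤ) ((q.2:ℤ) - (v:ℤ)) else 0).sum = 0 := by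
            apply Multiset.sum_eq_zero
            intro x hx
            rw [Multiset.mem_map] at hx
            obtain ⟨q, hq, rfl⟩ := hx
            rw [Multiset.mem_filter] at hq
            apply if_neg
            intro hgE
            apply hq.2
            have : ((E:ℕ):ℤ) ∣ (q.1:ℤ) := by
              rw [← hgE]; exact Int.gcd_dvd_left _ _
            exact_mod_cast this
          rw [hz2, add_zero, Multiset.filter_filter]
      have hmult : S.filter (fun q => E ∣ q.1 ∧ q.1 ≠ E)
          = S'.filter (fun q => E ∣ q.1 ∧ q.1 ≠ E) := by
        apply Multiset.ext.mpr
        intro q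
        rw [Multiset.count_filter, Multiset.count_filter]
        by_cases hq : E ∣ q.1 ∧ q.1 ≠ E
        · rw [if_pos hq, if_pos hq]
          by_cases hqv : q.1 ∣ n ∧ 2 ≤ q.1 ∧ 1 ≤ q.2 ∧ q.2 < q.1 ∧ Nat.gcd q.2 q.1 = 1
          · obtain ⟨d, hd⟩ := hq.1
            obtain ⟨k', hk'⟩ := hqv.1
            have hd0 : d ≠ 0 := by rintro rfl; simp at hd; omega
            have hd1 : d ≠ 1 := by rintro rfl; simp at hd; exact hq.2 hd
            have hk'0 : k' ≠ 0 := by rintro rfl; simp at hk'; omega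
            have hkdk' : k = d * k' := by
              have h1 : E * k = E * (d * k') := by
                rw [hpk, hk', hd]; ring
              exact Nat.eq_of_mul_eq_mul_left (by omega) h1
            have hk'lt : k' < k := by
              rw [hkdk']
              have : 2 * k' ≤ d * k' := Nat.mul_le_mul (by omega) (le_refl k')
              omega
            exact IH k' hk'lt q hk'.symm
          · rw [hzero S hS q hqv, hzero S' hS' q hqv]
        · rw [if_neg hq, if_neg hq]
      rw [dec S hS, dec S' hS', hmult] at hPhiE
      have hc : Multiset.count (E, v) S * (n / E * E)
          = Multiset.count (E, v) S' * (n / E * E) := by omega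
      exact Nat.eq_of_mul_eq_mul_right (by omega) hc
    · have hv1 : ¬((E, v).1 ∣ n ∧ 2 ≤ (E, v).1 ∧ 1 ≤ (E, v).2 ∧ (E, v).2 < (E, v).1
          ∧ Nat.gcd (E, v).2 (E, v).1 = 1) := fun hc => hval ⟨hc.2.1, hc.2.2.1, hc.2.2.2⟩
      rw [hzero S hS _ hv1, hzero S' hS' _ hv1]
end


/-- Inversion of the Chevalley–Weil relations, cyclic case: two multisets of ramification
pairs `(e, ν)` (with `e ∣ n`, `e ≥ 2`, `1 ≤ ν < e`, `gcd ν e = 1`) giving rise to the same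
Chevalley–Weil sums `∑ (⟨(l·ν − m)/e⟩ + m/e)` for all `m ≥ 1` and all integers `l`
are equal. Here `⟨x⟩ = Int.fract x` denotes the fractional part. -/
theorem stmt14 (n : ℕ) (hn : 1 ≤ n) (S S' : Multiset (ℕ × ℕ))
    (hS : ∀ p ∈ S, p.1 ∣ n ∧ 2 ≤ p.1 ∧ 1 ≤ p.2 ∧ p.2 < p.1 ∧ Nat.gcd p.2 p.1 = 1)
    (hS' : ∀ p ∈ S', p.1 ∣ n ∧ 2 ≤ p.1 ∧ 1 ≤ p.2 ∧ p.2 < p.1 ∧ Nat.gcd p.2 p.1 = 1)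
    (h : ∀ m : ℕ, 1 ≤ m → ∀ l : ℤ,
      (S.map fun p => Int.fract (((l : ℚ) * p.2 - m) / p.1) + (m : ℚ) / p.1).sum =
      (S'.map fun p => Int.fract (((l : ℚ) * p.2 - m) / p.1) + (m : ℚ) / p.1).sum) :
    S = S' := by
  have hA := stepA hn hS hS' h
  have hPsi := Psi hn hS hS' hA
  have hPhi := Phi hn hPsi
  have hc := mainCount hn hS hS' hPhi
  exact Multiset.ext.mpr hc
end
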